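/- arXiv:1012.1130 — 12 statements merged into one kernel-verified Lean document; each statement's English description precedes it below -/
import Mathlib

section
/- Let (a_n) be a sequence of non-negative real numbers and (W_n) an increasing sequence of positive reals satisfying lim_{γ→1⁺} limsup_{n→∞} W_{⌊γn⌋}/W_n = 1. Set A_N = (1/W_N) ∑_{n=1}^N a_n. If there exists L ∈ [0,∞] and a sequence γ_k ∈ (1,∞) with γ_k → 1 such that for every k, lim_{N→∞} A_{⌊γ_k^N⌋} = L, then lim_{N→∞} A_N = L. -/
/-!
If `⌊γ^M⌋ ≤ N ≤ ⌊γ^(M+1)⌋`, monotonicity of the partial sums and of `W` squeezes `A_N` between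
`A_{⌊γ^M⌋}` and `A_{⌊γ^(M+1)⌋}` up to the factor `W_{⌊γ^(M+1)⌋} / W_{⌊γ^M⌋}`. Since
`⌊γ^(M+1)⌋ ≤ ⌊c ⌊γ^M⌋⌋` for any `c > γ` and `M` large, the regularity of `W` makes this factor
eventually smaller than any `ρ > 1` once `γ = γ_k` is close enough to `1`.
-/

open Filter

theorem Filter.Tendsto.eventually_exists_le_le_succ {n : ℕ → ℕ} (hn : Tendsto n atTop atTop)
    {p : ℕ → Prop} (hp : ∀ᶠ M in atTop, p M) :
    ∀ᶠ N in atTop, ∃ M, p M ∧ n M ≤ N ∧ N ≤ n (M + 1) := by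
  classical
  obtain ⟨M₀, hM₀⟩ := eventually_atTop.mp hp
  filter_upwards [eventually_ge_atTop (n M₀)] with N hN
  have hex : ∃ M, M₀ ≤ M ∧ N < n M :=
    ((eventually_ge_atTop M₀).and (hn.eventually_gt_atTop N)).exists
  obtain ⟨hM₀M, hNlt⟩ := Nat.find_spec hex
  have hpos : M₀ < Nat.find hex := hM₀M.lt_of_ne fun h => (h ▸ hN).not_gt hNlt
  refine ⟨Nat.find hex - 1, hM₀ _ (by omega), ?_, ?_⟩
  · have := Nat.find_min hex (show Nat.find hex - 1 < Nat.find hex by omega)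
    exact not_lt.mp fun h => this ⟨by omega, h⟩
  · rw [Nat.sub_add_cancel (by omega)]
    exact hNlt.le

theorem exists_one_lt_mul_lt {x y : ℝ} (h : x < y) : ∃ ρ, 1 < ρ ∧ x * ρ < y := by
  have hcont : Tendsto (fun ρ : ℝ => x * ρ) (nhdsWithin 1 (Set.Ioi 1)) (nhds x) := by
    simpa using ((continuous_const_mul x).tendsto 1).mono_left nhdsWithin_le_nhds
  exact (eventually_mem_nhdsWithin.and (hcont.eventually (gt_mem_nhds h))).exists

theorem eventually_pow_succ_le_mul_floor_pow {g c : ℝ} (hg : 1 < g) (hgc : g < c) :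
    ∀ᶠ M : ℕ in atTop, g ^ (M + 1) ≤ c * ⌊g ^ M⌋₊ := by
  filter_upwards [(tendsto_pow_atTop_atTop_of_one_lt hg).eventually_ge_atTop (c / (c - g))]
    with M hM
  have hcg : 0 < c - g := sub_pos.mpr hgc
  rw [div_le_iff₀ hcg] at hM
  have hfloor : g ^ M - 1 < ⌊g ^ M⌋₊ := Nat.sub_one_lt_floor _
  have hc : 0 < c := by linarith
  calc g ^ (M + 1) = c * g ^ M - (c - g) * g ^ M := by ring
    _ ≤ c * (g ^ M - 1) := by linarith
    _ ≤ c * ⌊g ^ M⌋₊ := by gcongr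

theorem exists_eventually_floor_pow_succ_lt {W : ℕ → ℝ} (hW : Monotone W)
    (hWpos : ∀ n, 0 < W n)
    (hreg : Tendsto (fun c : ℝ => limsup (fun n : ℕ => W ⌊c * n⌋₊ / W n) atTop)
      (nhdsWithin 1 (Set.Ioi 1)) (nhds 1))
    {γ : ℕ → ℝ} (hγ : ∀ k, 1 < γ k) (hγ1 : Tendsto γ atTop (nhds 1)) {ρ : ℝ} (hρ : 1 < ρ) :
    ∃ k, ∀ᶠ M : ℕ in atTop, W ⌊γ k ^ (M + 1)⌋₊ < ρ * W ⌊γ k ^ M⌋₊ := by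
  obtain ⟨c, hc1, hc⟩ : ∃ c : ℝ, 1 < c ∧ ∀ᶠ n : ℕ in atTop, W ⌊c * n⌋₊ / W n < ρ := by
    obtain ⟨c, hc1, hpos, hlt⟩ :=
      (eventually_mem_nhdsWithin.and (hreg.eventually (Ioo_mem_nhds one_pos hρ))).exists
    -- an unbounded sequence would have junk `limsup` equal to `0`
    have hbdd : IsBoundedUnder (· ≤ ·) atTop fun n : ℕ => W ⌊c * n⌋₊ / W n := by
      by_contra h
      exact hpos.ne' (Real.limsup_of_not_isBoundedUnder h)
    exact ⟨c, hc1, eventually_lt_of_limsup_lt hlt hbdd⟩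
  obtain ⟨k, hk⟩ := (hγ1.eventually (gt_mem_nhds hc1)).exists
  have hfloor := tendsto_nat_floor_atTop.comp (tendsto_pow_atTop_atTop_of_one_lt (hγ k))
  refine ⟨k, ?_⟩
  filter_upwards [hfloor.eventually hc, eventually_pow_succ_le_mul_floor_pow (hγ k) hk]
    with M hlt hle
  calc W ⌊γ k ^ (M + 1)⌋₊ ≤ W ⌊c * ⌊γ k ^ M⌋₊⌋₊ := hW (Nat.floor_mono hle)
    _ < ρ * W ⌊γ k ^ M⌋₊ := (div_lt_iff₀ (hWpos _)).mp hlt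

section Lacunary

variable {s W : ℕ → ℝ} (hs : Monotone s) (hW : Monotone W) (hWpos : ∀ n, 0 < W n)
  {n : ℕ → ℕ} (hn : Tendsto n atTop atTop) {ρ : ℝ}
  (hρ : ∀ᶠ M in atTop, W (n (M + 1)) < ρ * W (n M))
include hs hW hWpos hn hρ

theorem eventually_div_lt_of_lacunary {w : ℝ} (hw0 : 0 ≤ w)
    (hw : ∀ᶠ M in atTop, s (n M) / W (n M) < w) :
    ∀ᶠ N in atTop, s N / W N < w * ρ := by
  have hw' := (tendsto_add_atTop_nat 1).eventually hw
  filter_upwards [hn.eventually_exists_le_le_succ (hw'.and hρ)] with N ⟨M, ⟨hsw, hWρ⟩, hQN, hNP⟩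
  have hρ0 : 0 ≤ ρ := (pos_of_mul_pos_left ((hWpos _).trans hWρ) (hWpos _).le).le
  rw [div_lt_iff₀ (hWpos _)] at hsw ⊢
  calc s N ≤ s (n (M + 1)) := hs hNP
    _ < w * W (n (M + 1)) := hsw
    _ ≤ w * (ρ * W (n M)) := by gcongr
    _ ≤ w * (ρ * W N) := by gcongr; exact hW hQN
    _ = w * ρ * W N := by ring

theorem eventually_lt_div_of_lacunary {u : ℝ} (hu0 : 0 ≤ u)
    (hu : ∀ᶠ M in atTop, u * ρ < s (n M) / W (n M)) :
    ∀ᶠ N in atTop, u < s N / W N := by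
  filter_upwards [hn.eventually_exists_le_le_succ (hu.and hρ)] with N ⟨M, ⟨hsu, hWρ⟩, hQN, hNP⟩
  rw [lt_div_iff₀ (hWpos _)] at hsu ⊢
  calc u * W N ≤ u * W (n (M + 1)) := by gcongr; exact hW hNP
    _ ≤ u * (ρ * W (n M)) := by gcongr
    _ = u * ρ * W (n M) := by ring
    _ < s (n M) := hsu
    _ ≤ s N := hs hQN

end Lacunary

theorem tendsto_div_of_lacunary {s W : ℕ → ℝ} (hs : Monotone s) (hs0 : ∀ N, 0 ≤ s N)
    (hW : Monotone W) (hWpos : ∀ n, 0 < W n) {L : EReal} (hL : 0 ≤ L)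
    (hlac : ∀ ρ, 1 < ρ → ∃ n : ℕ → ℕ, Tendsto n atTop atTop ∧
      (∀ᶠ M in atTop, W (n (M + 1)) < ρ * W (n M)) ∧
      Tendsto (fun M => ((s (n M) / W (n M) : ℝ) : EReal)) atTop (nhds L)) :
    Tendsto (fun N => ((s N / W N : ℝ) : EReal)) atTop (nhds L) := by
  refine tendsto_order.mpr ⟨fun u hu => ?_, fun v hv => ?_⟩
  · obtain ⟨w', huw', hw'L⟩ := EReal.lt_iff_exists_real_btwn.mp hu
    obtain ⟨w, hw'w, hwL⟩ := EReal.lt_iff_exists_real_btwn.mp hw'L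
    rcases lt_or_ge w' 0 with hw'0 | hw'0
    · exact Eventually.of_forall fun N => huw'.trans <|
        EReal.coe_lt_coe_iff.mpr (hw'0.trans_le (div_nonneg (hs0 N) (hWpos N).le))
    obtain ⟨ρ, hρ, hwρ⟩ := exists_one_lt_mul_lt (EReal.coe_lt_coe_iff.mp hw'w)
    obtain ⟨n, hn, hWρ, hsn⟩ := hlac ρ hρ
    have hw : ∀ᶠ M in atTop, w' * ρ < s (n M) / W (n M) :=
      ((tendsto_order.mp hsn).1 _ hwL).mono fun M hM => hwρ.trans (EReal.coe_lt_coe_iff.mp hM)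
    exact (eventually_lt_div_of_lacunary hs hW hWpos hn hWρ hw'0 hw).mono
      fun N hN => huw'.trans (EReal.coe_lt_coe_iff.mpr hN)
  · obtain ⟨w, hLw, hwv⟩ := EReal.lt_iff_exists_real_btwn.mp hv
    obtain ⟨w', hww', hw'v⟩ := EReal.lt_iff_exists_real_btwn.mp hwv
    obtain ⟨ρ, hρ, hwρ⟩ := exists_one_lt_mul_lt (EReal.coe_lt_coe_iff.mp hww')
    obtain ⟨n, hn, hWρ, hsn⟩ := hlac ρ hρ
    have hw : ∀ᶠ M in atTop, s (n M) / W (n M) < w :=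
      ((tendsto_order.mp hsn).2 _ hLw).mono fun M hM => EReal.coe_lt_coe_iff.mp hM
    have hw0 : 0 ≤ w := EReal.coe_nonneg.mp (hL.trans hLw.le)
    exact (eventually_div_lt_of_lacunary hs hW hWpos hn hWρ hw0 hw).mono
      fun N hN => (EReal.coe_lt_coe_iff.mpr (hN.trans hwρ)).trans hw'v

/-- Lacunary subsequence trick: if the weighted averages `A_N = W_N⁻¹ ∑_{n=1}^N a_n`
of non-negative terms converge to `L ∈ [0,∞]` along all subsequences `⌊γ_k^N⌋` with
`γ_k → 1`, then they converge to `L`. -/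
theorem lacunary_subsequence_trick
    (a W : ℕ → ℝ) (ha : ∀ n, 0 ≤ a n) (hWpos : ∀ n, 0 < W n) (hWmono : StrictMono W)
    (hreg : Tendsto (fun γ : ℝ => Filter.limsup (fun n : ℕ => W ⌊γ * (n : ℝ)⌋₊ / W n) atTop)
      (nhdsWithin 1 (Set.Ioi 1)) (nhds 1))
    (A : ℕ → ℝ) (hA : ∀ N, A N = (W N)⁻¹ * ∑ n ∈ Finset.Icc 1 N, a n)
    (L : EReal) (hL : 0 ≤ L)
    (γ : ℕ → ℝ) (hγ : ∀ k, 1 < γ k) (hγ1 : Tendsto γ atTop (nhds 1))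
    (hsub : ∀ k, Tendsto (fun N : ℕ => ((A ⌊(γ k) ^ N⌋₊ : ℝ) : EReal)) atTop (nhds L)) :
    Tendsto (fun N : ℕ => ((A N : ℝ) : EReal)) atTop (nhds L) := by
  set s : ℕ → ℝ := fun N => ∑ n ∈ Finset.Icc 1 N, a n
  have hs : Monotone s := fun N P h =>
    Finset.sum_le_sum_of_subset_of_nonneg (Finset.Icc_subset_Icc le_rfl h) fun i _ _ => ha i
  obtain rfl : A = fun N => s N / W N := funext fun N => by rw [hA, inv_mul_eq_div]
  refine tendsto_div_of_lacunary hs (fun N => Finset.sum_nonneg fun i _ => ha i)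
    hWmono.monotone hWpos hL fun ρ hρ => ?_
  obtain ⟨k, hk⟩ := exists_eventually_floor_pow_succ_lt hWmono.monotone hWpos hreg hγ hγ1 hρ
  exact ⟨_, tendsto_nat_floor_atTop.comp (tendsto_pow_atTop_atTop_of_one_lt (hγ k)), hk, hsub k⟩
end

section
/- Let V be an inner product space, N ∈ ℕ, and v_1, …, v_N ∈ V. Then for every integer M with 1 ≤ M ≤ N, ‖∑_{n=1}^N v_n‖² ≤ 2 M⁻¹ N ∑_{n=1}^N ‖v_n‖² + 4 M⁻¹ N ∑_{m=1}^M |∑_{n=1}^{N-m} ⟨v_{n+m}, v_n⟩|. -/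
/-!
Extend `v` by zero to a function `u` on `ℤ` and average its first `M` translates,
`w n = ∑_{h < M} u (n - h)`. Then `∑ w = M • ∑ v` and `w` is supported on `N + M - 1` points,
so Cauchy–Schwarz gives `M² ‖∑ v‖² ≤ (N + M - 1) ∑ ‖w n‖²`. Expanding the squares, `∑ ‖w n‖²`
is the sum of the autocorrelations `ρ (h' - h)` of `u` over `h, h' < M`; every difference `d`
with `|d| < M` occurs at most `M` times and `ρ` is even, so
`∑ ‖w n‖² ≤ M (ρ 0 + 2 ∑_{0 < m < M} |ρ m|)`. Finally `N + M - 1 ≤ 2 N`.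
-/

open Finset Function
open scoped RealInnerProductSpace Pointwise

theorem finsum_sum_sub {G M : Type*} [AddCommGroup G] [AddCommMonoid M] {u : G → M}
    (hu : HasFiniteSupport u) (H : Finset G) : ∑ᶠ n, ∑ h ∈ H, u (n - h) = #H • ∑ᶠ n, u n := by
  rw [finsum_sum_comm H (fun n h => u (n - h)) fun h _ => hu.comp_of_injective sub_left_injective]
  exact (sum_congr rfl fun h _ => finsum_comp_equiv (Equiv.subRight h)).trans (sum_const _)

theorem norm_finsum_sq_le_card_mul {ι E : Type*} [NormedAddCommGroup E] {f : ι → E}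
    {s : Finset ι} (hf : support f ⊆ s) : ‖∑ᶠ n, f n‖ ^ 2 ≤ #s * ∑ᶠ n, ‖f n‖ ^ 2 := by
  have hf' : support (fun n => ‖f n‖ ^ 2) ⊆ s := fun n hn => hf (by simpa using hn)
  rw [finsum_eq_sum_of_support_subset f hf, finsum_eq_sum_of_support_subset _ hf']
  calc ‖∑ n ∈ s, f n‖ ^ 2 ≤ (∑ n ∈ s, ‖f n‖) ^ 2 := by gcongr; exact norm_sum_le _ _
    _ ≤ #s * ∑ n ∈ s, ‖f n‖ ^ 2 := sq_sum_le_card_mul_sum_sq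

theorem sum_Ioo_neg_eq_of_even {f : ℤ → ℝ} (hf : f.Even) {M : ℕ} (hM : 1 ≤ M) :
    ∑ d ∈ Ioo (-(M : ℤ)) M, f d = f 0 + 2 * ∑ m ∈ Ico 1 M, f m := by
  induction M, hM using Nat.le_induction with
  | base => simp [show Ioo (-1 : ℤ) 1 = {0} from rfl]
  | succ M hM ih =>
    have hIoo : Ioo (-((M + 1 : ℕ) : ℤ)) (M + 1 : ℕ) =
        insert (-(M : ℤ)) (insert (M : ℤ) (Ioo (-(M : ℤ)) M)) := by
      ext d
      simp only [mem_insert, mem_Ioo]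
      push_cast
      omega
    rw [hIoo, sum_insert (by simp only [mem_insert, mem_Ioo]; omega), sum_insert (by simp), ih, sum_Ico_succ_top hM, hf]
    ring

theorem finsum_int_eq_sum_Icc {E : Type*} [AddCommMonoid E] {g : ℤ → E} {a b : ℕ}
    (hg : support g ⊆ Set.Icc (a : ℤ) b) : ∑ᶠ k, g k = ∑ n ∈ Icc a b, g n := by
  rw [finsum_eq_sum_of_support_subset g (s := (Icc a b).map Nat.castEmbedding), sum_map]
  · rfl
  · intro k hk
    have := hg hk
    simp only [Set.mem_Icc, coe_map, Set.mem_image, coe_Icc, Nat.castEmbedding_apply] at this ⊢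
    exact ⟨k.toNat, by omega, by omega⟩

noncomputable def extendIcc {E : Type*} [Zero E] (N : ℕ) (v : ℕ → E) (k : ℤ) : E :=
  if k ∈ Set.Icc (1 : ℤ) N then v k.toNat else 0

theorem support_extendIcc_subset {E : Type*} [Zero E] (N : ℕ) (v : ℕ → E) :
    support (extendIcc N v) ⊆ Set.Icc 1 N := fun k hk => by
  by_contra h
  exact hk (if_neg h)

theorem extendIcc_natCast {E : Type*} [Zero E] {N n : ℕ} {v : ℕ → E} (hn : n ∈ Icc 1 N) :
    extendIcc N v n = v n := by
  rw [extendIcc, if_pos (by simpa using hn), Int.toNat_natCast]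

theorem finsum_extendIcc {E : Type*} [AddCommMonoid E] (N : ℕ) (v : ℕ → E) :
    ∑ᶠ k, extendIcc N v k = ∑ n ∈ Icc 1 N, v n := by
  rw [finsum_int_eq_sum_Icc (by exact_mod_cast support_extendIcc_subset N v)]
  exact sum_congr rfl fun n hn => extendIcc_natCast hn

section Autocorrelation

variable {G V : Type*} [AddCommGroup G] [NormedAddCommGroup V] [InnerProductSpace ℝ V]

noncomputable def autocorr (u : G → V) (d : G) : ℝ := ∑ᶠ n, ⟪u (n + d), u n⟫

theorem finsum_inner_sub_sub (u : G → V) (h h' : G) :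
    ∑ᶠ n, ⟪u (n - h), u (n - h')⟫ = autocorr u (h' - h) := by
  rw [← finsum_comp_equiv (Equiv.addRight h')]
  simp only [Equiv.coe_addRight, add_sub_cancel_right, add_sub_assoc, autocorr]

theorem autocorr_even (u : G → V) : (autocorr u).Even := fun d => by
  rw [← zero_sub, ← finsum_inner_sub_sub, ← sub_zero d, ← finsum_inner_sub_sub]
  simp_rw [sub_zero, real_inner_comm]

theorem autocorr_zero_nonneg (u : G → V) : 0 ≤ autocorr u 0 :=
  finsum_nonneg fun n => by simp

theorem finsum_norm_sq_sum_sub {u : G → V} (hu : HasFiniteSupport u) (H : Finset G) :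
    ∑ᶠ n, ‖∑ h ∈ H, u (n - h)‖ ^ 2 = ∑ h ∈ H, ∑ h' ∈ H, autocorr u (h' - h) := by
  simp_rw [← real_inner_self_eq_norm_sq, sum_inner, inner_sum]
  have hfin (h h' : G) : HasFiniteSupport fun n => ⟪u (n - h), u (n - h')⟫ :=
    Set.Finite.subset (hu.comp_of_injective (sub_left_injective (b := h))) fun n hn => by
      contrapose! hn
      simp_all
  rw [finsum_sum_comm _ _ fun h _ => ?_]
  · refine sum_congr rfl fun h _ => ?_
    rw [finsum_sum_comm _ _ fun h' _ => hfin h h']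
    exact sum_congr rfl fun h' _ => finsum_inner_sub_sub u h h'
  · exact HasFiniteSupport.sum (fun h' => hfin h h') H

theorem sum_sum_autocorr_sub_le [DecidableEq G] (u : G → V) (H : Finset G) :
    ∑ h ∈ H, ∑ h' ∈ H, autocorr u (h' - h) ≤ #H * ∑ d ∈ H - H, |autocorr u d| := by
  rw [← nsmul_eq_mul, ← sum_const]
  refine sum_le_sum fun h hh => ?_
  calc ∑ h' ∈ H, autocorr u (h' - h) ≤ ∑ h' ∈ H, |autocorr u (h' - h)| :=
        sum_le_sum fun _ _ => le_abs_self _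
    _ = ∑ d ∈ H.image (· - h), |autocorr u d| :=
        (sum_image (f := fun d => |autocorr u d|) fun _ _ _ _ h => sub_left_injective h).symm
    _ ≤ ∑ d ∈ H - H, |autocorr u d| :=
        sum_le_sum_of_subset_of_nonneg (image_subset_iff.2 fun h' hh' => sub_mem_sub hh' hh)
          fun _ _ _ => abs_nonneg _

theorem sq_mul_norm_finsum_sq_le_autocorr {u : ℤ → V} {N M : ℕ} (hM : 1 ≤ M)
    (hu : support u ⊆ Set.Icc 1 N) :
    (M : ℝ) ^ 2 * ‖∑ᶠ n, u n‖ ^ 2 ≤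
      (N + M - 1 : ℕ) * (M * (autocorr u 0 + 2 * ∑ m ∈ Ico 1 M, |autocorr u m|)) := by
  set H : Finset ℤ := Ico 0 M
  have hH : #H = M := by simp [H]
  have hfin : HasFiniteSupport u := (Set.finite_Icc _ _).subset hu
  have hw : support (fun n => ∑ h ∈ H, u (n - h)) ⊆ Icc 1 (N + M - 1 : ℤ) := by
    intro n hn
    obtain ⟨h, hh, hne⟩ := exists_ne_zero_of_sum_ne_zero hn
    have := hu hne
    simp only [H, mem_Ico, coe_Icc, Set.mem_Icc] at hh this ⊢
    omega
  have hdiff : H - H ⊆ Ioo (-M : ℤ) M := by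
    intro d hd
    obtain ⟨h', hh', h, hh, rfl⟩ := mem_sub.1 hd
    simp only [H, mem_Ico, mem_Ioo] at hh hh' ⊢
    omega
  calc (M : ℝ) ^ 2 * ‖∑ᶠ n, u n‖ ^ 2 = ‖∑ᶠ n, ∑ h ∈ H, u (n - h)‖ ^ 2 := by
        rw [finsum_sum_sub hfin, hH, RCLike.norm_nsmul ℝ, nsmul_eq_mul, mul_pow]
    _ ≤ #(Icc 1 (N + M - 1 : ℤ)) * ∑ᶠ n, ‖∑ h ∈ H, u (n - h)‖ ^ 2 :=
        norm_finsum_sq_le_card_mul hw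
    _ = (N + M - 1 : ℕ) * ∑ h ∈ H, ∑ h' ∈ H, autocorr u (h' - h) := by
        rw [finsum_norm_sq_sum_sub hfin, Int.card_Icc]
        congr
        omega
    _ ≤ (N + M - 1 : ℕ) * (M * ∑ d ∈ Ioo (-M : ℤ) M, |autocorr u d|) := by
        gcongr
        refine (sum_sum_autocorr_sub_le u H).trans ?_
        rw [hH]
        gcongr
    _ = (N + M - 1 : ℕ) * (M * (autocorr u 0 + 2 * ∑ m ∈ Ico 1 M, |autocorr u m|)) := by
        rw [sum_Ioo_neg_eq_of_even (fun d => by rw [autocorr_even u d]) hM,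
          abs_of_nonneg (autocorr_zero_nonneg u)]

theorem autocorr_extendIcc (N : ℕ) (v : ℕ → V) (m : ℕ) :
    autocorr (extendIcc N v) m = ∑ n ∈ Icc 1 (N - m), ⟪v (n + m), v n⟫ := by
  rw [autocorr, finsum_int_eq_sum_Icc]
  · refine sum_congr rfl fun n hn => ?_
    rw [mem_Icc] at hn
    rw [← Nat.cast_add, extendIcc_natCast (by rw [mem_Icc]; omega),
      extendIcc_natCast (by rw [mem_Icc]; omega)]
  · intro k hk
    rw [mem_support] at hk
    have h₁ : k + m ∈ Set.Icc (1 : ℤ) N := support_extendIcc_subset N v fun h => hk (by simp [h])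
    have h₂ : k ∈ Set.Icc (1 : ℤ) N := support_extendIcc_subset N v fun h => hk (by simp [h])
    simp only [Set.mem_Icc] at h₁ h₂ ⊢
    omega

end Autocorrelation

/-- Van der Corput's inequality for vectors in a real inner product space. -/
theorem van_der_corput_inequality
    {V : Type*} [NormedAddCommGroup V] [InnerProductSpace ℝ V]
    (N M : ℕ) (hM1 : 1 ≤ M) (hMN : M ≤ N) (v : ℕ → V) :
    ‖∑ n ∈ Finset.Icc 1 N, v n‖ ^ 2 ≤
      2 * (M : ℝ)⁻¹ * N * ∑ n ∈ Finset.Icc 1 N, ‖v n‖ ^ 2 +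
        4 * (M : ℝ)⁻¹ * N *
          ∑ m ∈ Finset.Icc 1 M, |∑ n ∈ Finset.Icc 1 (N - m), (inner ℝ (v (n + m)) (v n) : ℝ)| := by
  set T := ∑ n ∈ Icc 1 N, ‖v n‖ ^ 2
  set C := ∑ m ∈ Icc 1 M, |∑ n ∈ Icc 1 (N - m), ⟪v (n + m), v n⟫|
  have key := sq_mul_norm_finsum_sq_le_autocorr hM1 (support_extendIcc_subset N v)
  have hT : autocorr (extendIcc N v) 0 = T := by
    simpa [real_inner_self_eq_norm_sq] using autocorr_extendIcc N v 0
  have hC : ∑ m ∈ Ico 1 M, |autocorr (extendIcc N v) m| ≤ C := by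
    simp_rw [autocorr_extendIcc]
    exact sum_le_sum_of_subset_of_nonneg Ico_subset_Icc_self fun _ _ _ => abs_nonneg _
  have hL : ((N + M - 1 : ℕ) : ℝ) ≤ 2 * N := by exact_mod_cast (by omega : N + M - 1 ≤ 2 * N)
  rw [finsum_extendIcc, hT] at key
  calc ‖∑ n ∈ Icc 1 N, v n‖ ^ 2 = (M : ℝ)⁻¹ ^ 2 * (M ^ 2 * ‖∑ n ∈ Icc 1 N, v n‖ ^ 2) := by
        field_simp
    _ ≤ (M : ℝ)⁻¹ ^ 2 * (2 * N * (M * (T + 2 * C))) := by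
        refine mul_le_mul_of_nonneg_left (key.trans ?_) (by positivity)
        gcongr
    _ = 2 * (M : ℝ)⁻¹ * N * T + 4 * (M : ℝ)⁻¹ * N * C := by
        field_simp
        ring
end

section
/- Let (Ω,ℱ,ℙ) be a probability space and E_n, n ∈ ℕ, events satisfying ℙ(E_n) ≤ C (log n)^{-1-ε} for some constants C > 0 and ε > 0 and all n ≥ 2. Then for ℙ-almost every ω, the set {n ∈ ℕ : ω ∈ E_n} has natural density zero, i.e. (1/N) ∑_{n=1}^N 1_{E_n}(ω) → 0 as N → ∞. -/
/-!
At `N = 4 ^ k`, split `[1, N]` at `2 ^ (k + 1) = 2 √N`: the events below the split contribute at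
most `2 ^ (k + 1)` to the expected count, those above have probability at most
`C ((k + 1) log 2) ^ (-1-ε)`. Hence the expected mean at `4 ^ k` is summable in `k`, and the means
along `4 ^ k` tend to `0` almost surely. A counting function is monotone, so its mean at
`N ∈ [4 ^ k, 4 ^ (k + 1)]` is at most four times its mean at `4 ^ (k + 1)`.
-/

open Filter MeasureTheory Topology Finset

theorem sum_Icc_le_add_mul {p : ℕ → ℝ} (hp : ∀ n, p n ≤ 1) {M N : ℕ} {b : ℝ} (hb : 0 ≤ b)
    (hpb : ∀ n, M < n → p n ≤ b) : ∑ n ∈ Icc 1 N, p n ≤ M + N * b := by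
  rw [← sum_filter_add_sum_filter_not _ (· ≤ M)]
  have hlow : ∑ n ∈ (Icc 1 N).filter (· ≤ M), p n ≤ M := by
    have hcard : #((Icc 1 N).filter (· ≤ M)) ≤ M := by
      simpa using card_le_card (s := (Icc 1 N).filter (· ≤ M)) (t := Icc 1 M)
        fun n hn => by simp only [mem_filter, mem_Icc] at hn ⊢; omega
    calc _ ≤ #((Icc 1 N).filter (· ≤ M)) • (1 : ℝ) :=
          sum_le_card_nsmul _ _ _ fun n _ => hp n
      _ ≤ M := by simpa using (Nat.cast_le (α := ℝ)).2 hcard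
  have hhigh : ∑ n ∈ (Icc 1 N).filter (¬ · ≤ M), p n ≤ N * b := by
    have hcard : #((Icc 1 N).filter (¬ · ≤ M)) ≤ N :=
      (card_filter_le _ _).trans (by simp)
    calc _ ≤ #((Icc 1 N).filter (¬ · ≤ M)) • b :=
          sum_le_card_nsmul _ _ _ fun n hn => hpb n (not_le.1 (mem_filter.1 hn).2)
      _ ≤ N * b := by rw [nsmul_eq_mul]; gcongr
  linarith

theorem summable_inv_mul_sum_Icc_four_pow {p g : ℕ → ℝ} (hp0 : ∀ n, 0 ≤ p n)
    (hp1 : ∀ n, p n ≤ 1) (hpg : ∀ k n, 2 ^ (k + 1) < n → p n ≤ g k) (hg : Summable g) :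
    Summable fun k => ((4 ^ k : ℕ) : ℝ)⁻¹ * ∑ n ∈ Icc 1 (4 ^ k), p n := by
  refine Summable.of_nonneg_of_le (fun k => ?_) (fun k => ?_)
    ((summable_geometric_two.mul_left 2).add hg)
  · exact mul_nonneg (by positivity) (sum_nonneg fun n _ => hp0 n)
  · have hg0 : 0 ≤ g k := (hp0 _).trans (hpg k _ (Nat.lt_succ_self _))
    calc ((4 ^ k : ℕ) : ℝ)⁻¹ * ∑ n ∈ Icc 1 (4 ^ k), p n
        ≤ ((4 ^ k : ℕ) : ℝ)⁻¹ * ((2 ^ (k + 1) : ℕ) + (4 ^ k : ℕ) * g k) := by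
          gcongr; exact sum_Icc_le_add_mul hp1 hg0 (hpg k)
      _ = 2 * (1 / 2) ^ k + g k := by
          have h4 : (4 : ℝ) ^ k = 2 ^ k * 2 ^ k := by rw [← mul_pow]; norm_num
          push_cast; rw [h4, one_div, inv_pow]; field_simp; ring

theorem log_rpow_le_of_two_pow_le {s : ℝ} (hs : s ≤ 0) {m n : ℕ} (hm : 0 < m)
    (hn : 2 ^ m ≤ n) : Real.log n ^ s ≤ (m * Real.log 2) ^ s := by
  refine Real.rpow_le_rpow_of_nonpos (by positivity) ?_ hs
  rw [← Real.log_pow]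
  exact Real.log_le_log (by positivity) (by exact_mod_cast hn)

theorem summable_nat_succ_mul_log_two_rpow {ε : ℝ} (hε : 0 < ε) :
    Summable fun k : ℕ => (((k + 1 : ℕ) : ℝ) * Real.log 2) ^ (-(1 + ε)) := by
  have hp : Summable fun k : ℕ => ((k + 1 : ℕ) : ℝ) ^ (-(1 + ε)) :=
    (summable_nat_add_iff 1).2 (Real.summable_nat_rpow.2 (by linarith))
  simpa only [Real.mul_rpow (Nat.cast_nonneg _) (Real.log_nonneg one_le_two)]
    using hp.mul_right _

theorem tendsto_inv_mul_of_tendsto_inv_mul_pow {S : ℕ → ℝ} (hmono : Monotone S)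
    (hnonneg : ∀ N, 0 ≤ S N) {b : ℕ} (hb : 1 < b)
    (h : Tendsto (fun k => ((b ^ k : ℕ) : ℝ)⁻¹ * S (b ^ k)) atTop (𝓝 0)) :
    Tendsto (fun N : ℕ => (N : ℝ)⁻¹ * S N) atTop (𝓝 0) := by
  have hlog : Tendsto (fun N => Nat.log b N + 1) atTop atTop :=
    tendsto_atTop_atTop.2 fun m =>
      ⟨b ^ m, fun _ hN => Nat.le_succ_of_le (Nat.le_log_of_pow_le hb hN)⟩
  have hupper := (h.comp hlog).const_mul (b : ℝ)
  rw [mul_zero] at hupper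
  refine tendsto_of_tendsto_of_tendsto_of_le_of_le' tendsto_const_nhds hupper
    (Eventually.of_forall fun N => mul_nonneg (by positivity) (hnonneg N)) ?_
  filter_upwards [eventually_ne_atTop 0] with N hN
  set k := Nat.log b N
  have hlo : b ^ k ≤ N := Nat.pow_log_le_self b hN
  have hhi : N ≤ b ^ (k + 1) := (Nat.lt_pow_succ_log_self hb N).le
  calc (N : ℝ)⁻¹ * S N ≤ ((b ^ k : ℕ) : ℝ)⁻¹ * S (b ^ (k + 1)) := by
        gcongr
        · exact hnonneg _
        · exact hmono hhi
    _ = b * (((b ^ (k + 1) : ℕ) : ℝ)⁻¹ * S (b ^ (k + 1))) := by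
        have : (b : ℝ) ≠ 0 := by positivity
        push_cast; field_simp; ring

theorem ae_tendsto_zero_of_summable_integral_norm {Ω E : Type*} [MeasurableSpace Ω]
    {μ : Measure Ω} [NormedAddCommGroup E] {f : ℕ → Ω → E}
    (hf : ∀ k, Integrable (f k) μ) (hsum : Summable fun k => ∫ ω, ‖f k ω‖ ∂μ) :
    ∀ᵐ ω ∂μ, Tendsto (fun k => f k ω) atTop (𝓝 0) := by
  have hLp : ∑' k, eLpNorm (f k) 1 μ ≠ ⊤ := by
    simp_rw [eLpNorm_one_eq_lintegral_enorm, ← ofReal_integral_norm_eq_lintegral_enorm (hf _)]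
    rw [← ENNReal.ofReal_tsum_of_nonneg (fun k => integral_nonneg fun _ => norm_nonneg _) hsum]
    exact ENNReal.ofReal_ne_top
  filter_upwards [summable_norm_of_tsum_eLpNorm_ne_top le_rfl
    (fun k => (hf k).aestronglyMeasurable) hLp] with ω hω
  exact tendsto_zero_iff_norm_tendsto_zero.2 hω.tendsto_atTop_zero

section hitCount

variable {Ω : Type*} (E : ℕ → Set Ω)

noncomputable def hitCount (N : ℕ) (ω : Ω) : ℝ :=
  ∑ n ∈ Icc 1 N, (E n).indicator (fun _ => (1 : ℝ)) ω

theorem hitCount_nonneg (N : ℕ) (ω : Ω) : 0 ≤ hitCount E N ω :=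
  sum_nonneg fun _ _ => Set.indicator_nonneg (fun _ _ => zero_le_one) ω

theorem monotone_hitCount (ω : Ω) : Monotone fun N => hitCount E N ω := fun _ _ hNM =>
  sum_le_sum_of_subset_of_nonneg (Icc_subset_Icc_right hNM)
    fun _ _ _ => Set.indicator_nonneg (fun _ _ => zero_le_one) ω

variable {E} [MeasurableSpace Ω] (μ : Measure Ω) [IsFiniteMeasure μ]

theorem integrable_hitCount (hE : ∀ n, MeasurableSet (E n)) (N : ℕ) :
    Integrable (hitCount E N) μ :=
  integrable_finsetSum _ fun n _ => (integrable_const 1).indicator (hE n)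

theorem integral_hitCount (hE : ∀ n, MeasurableSet (E n)) (N : ℕ) :
    ∫ ω, hitCount E N ω ∂μ = ∑ n ∈ Icc 1 N, μ.real (E n) := by
  unfold hitCount
  rw [integral_finsetSum _ fun n _ => (integrable_const 1).indicator (hE n)]
  exact sum_congr rfl fun n _ => integral_indicator_one (hE n)

end hitCount

/-- Borel–Cantelli in density: if `ℙ(E_n) ≤ C (log n)^{-1-ε}` for `n ≥ 2`, then almost surely
the set `{n : ω ∈ E_n}` has natural density zero. -/
theorem borel_cantelli_in_density
    {Ω : Type*} [MeasurableSpace Ω] (μ : Measure Ω) [IsProbabilityMeasure μ]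
    (E : ℕ → Set Ω) (hE : ∀ n, MeasurableSet (E n))
    (C ε : ℝ) (hC : 0 < C) (hε : 0 < ε)
    (hbound : ∀ n : ℕ, 2 ≤ n → μ (E n) ≤ ENNReal.ofReal (C * Real.log n ^ (-(1 + ε)))) :
    ∀ᵐ ω ∂μ, Tendsto
      (fun N : ℕ => (N : ℝ)⁻¹ * ∑ n ∈ Finset.Icc 1 N, (E n).indicator (fun _ => (1 : ℝ)) ω)
      atTop (nhds 0) := by
  have htail : ∀ k n, 2 ^ (k + 1) < n →
      μ.real (E n) ≤ C * (((k + 1 : ℕ) : ℝ) * Real.log 2) ^ (-(1 + ε)) := fun k n hn => by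
    have hn2 : 2 ≤ n := (Nat.le_self_pow k.succ_ne_zero 2).trans hn.le
    refine (ENNReal.toReal_le_of_le_ofReal (by positivity) (hbound n hn2)).trans ?_
    exact mul_le_mul_of_nonneg_left
      (log_rpow_le_of_two_pow_le (by linarith) k.succ_pos hn.le) hC.le
  have hnorm : ∀ k ω, ‖((4 ^ k : ℕ) : ℝ)⁻¹ * hitCount E (4 ^ k) ω‖
      = ((4 ^ k : ℕ) : ℝ)⁻¹ * hitCount E (4 ^ k) ω := fun k ω =>
    Real.norm_of_nonneg (mul_nonneg (by positivity) (hitCount_nonneg E _ ω))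
  have hmeans : Summable fun k => ∫ ω, ‖((4 ^ k : ℕ) : ℝ)⁻¹ * hitCount E (4 ^ k) ω‖ ∂μ := by
    simp_rw [hnorm, integral_const_mul, integral_hitCount μ hE]
    exact summable_inv_mul_sum_Icc_four_pow (fun _ => measureReal_nonneg)
      (fun _ => measureReal_le_one) htail ((summable_nat_succ_mul_log_two_rpow hε).mul_left C)
  filter_upwards [ae_tendsto_zero_of_summable_integral_norm
    (fun k => (integrable_hitCount μ hE _).const_mul _) hmeans] with ω hω
  exact tendsto_inv_mul_of_tendsto_inv_mul_pow (S := (hitCount E · ω)) (monotone_hitCount E ω)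
    (hitCount_nonneg E · ω) (by norm_num : 1 < 4) hω
end

section
/- There exists a probability space (Ω,ℱ,ℙ) and events E_n, n ∈ ℕ, with ℙ(E_n) ≤ (log n)^{-1} for all n ≥ 2, such that almost surely the set {n ∈ ℕ : ω ∈ E_n} has positive upper density. -/
open Filter MeasureTheory

/-!
Lay closed arcs of lengths `1, 1/2, 1/3, …` end to end around the circle `ℝ/ℤ`. Since the
harmonic series diverges they wind around infinitely often, so every point lies in infinitely
many of them. Let `E n` be arc number `j = ⌊log₂ n⌋` for all `n` in the dyadic block
`[2^j, 2^(j+1))`; then `ℙ(E n) ≤ 1/(j+1) ≤ 1/log n`, and whenever `ω` lies in arc `j` it lies in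
`E n` for the whole block, so the average up to `N = 2^(j+1)` is at least `1/2`.
-/

section Sweep

open Finset Metric

variable {T : ℝ}

/-- The arc from `∑ i < j, ℓ i` to `∑ i ≤ j, ℓ i`, as the closed ball about its midpoint. -/
noncomputable def sweepArc (ℓ : ℕ → ℝ) (j : ℕ) : Set (AddCircle T) :=
  closedBall ((∑ i ∈ range j, ℓ i + ℓ j / 2 : ℝ) : AddCircle T) (ℓ j / 2)

theorem coe_mem_sweepArc {ℓ : ℕ → ℝ} {j : ℕ} {z : ℝ}
    (hz : z ∈ Set.Ico (∑ i ∈ range j, ℓ i) (∑ i ∈ range (j + 1), ℓ i)) :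
    (z : AddCircle T) ∈ sweepArc ℓ j := by
  rw [sum_range_succ, Set.mem_Ico] at hz
  rw [sweepArc, mem_closedBall, dist_eq_norm, ← AddCircle.coe_sub]
  refine QuotientAddGroup.norm_mk_le_norm.trans ?_
  rw [Real.norm_eq_abs, abs_le]
  constructor <;> linarith

theorem volume_sweepArc_le [Fact (0 < T)] (ℓ : ℕ → ℝ) (j : ℕ) :
    volume (sweepArc (T := T) ℓ j) ≤ ENNReal.ofReal (ℓ j) := by
  rw [sweepArc, AddCircle.volume_closedBall, mul_div_cancel₀ _ two_ne_zero]
  exact ENNReal.ofReal_le_ofReal (min_le_right _ _)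

theorem exists_ge_mem_Ico_of_tendsto_atTop {X : Type*} [LinearOrder X] [NoMaxOrder X]
    {S : ℕ → X} (hS : Tendsto S atTop atTop) {J : ℕ} {z : X} (hz : S J ≤ z) :
    ∃ j ≥ J, z ∈ Set.Ico (S j) (S (j + 1)) := by
  obtain ⟨N, hN⟩ := (hS.eventually_gt_atTop z).exists_forall_of_atTop
  have hzN : z ∈ Set.Ico (S (J + 0)) (S (J + N)) := ⟨hz, hN _ (Nat.le_add_left N J)⟩
  obtain ⟨i, -, hi⟩ := Set.mem_iUnion₂.1 (Ico_subset_biUnion_Ico N (fun i => S (J + i)) hzN)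
  exact ⟨J + i, Nat.le_add_right J i, hi⟩

theorem frequently_mem_sweepArc [Fact (0 < T)] {ℓ : ℕ → ℝ}
    (hℓ : Tendsto (fun j => ∑ i ∈ range j, ℓ i) atTop atTop) (x : AddCircle T) :
    ∃ᶠ j in atTop, x ∈ sweepArc ℓ j := by
  refine frequently_atTop.2 fun J => ?_
  obtain ⟨j, hjJ, hj⟩ := exists_ge_mem_Ico_of_tendsto_atTop hℓ (AddCircle.equivIco T _ x).2.1
  refine ⟨j, hjJ, ?_⟩
  simpa using coe_mem_sweepArc (T := T) hj

end Sweep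

section Density

open Finset

variable {a : ℕ → ℝ}

theorem isBoundedUnder_le_average (ha : ∀ n, a n ≤ 1) :
    IsBoundedUnder (· ≤ ·) atTop (fun N : ℕ => (N : ℝ)⁻¹ * ∑ n ∈ Icc 1 N, a n) := by
  refine isBoundedUnder_of ⟨1, fun N => ?_⟩
  have hsum : ∑ n ∈ Icc 1 N, a n ≤ N := by
    simpa using sum_le_card_nsmul (Icc 1 N) a 1 fun n _ => ha n
  rcases N.eq_zero_or_pos with rfl | hN
  · simp
  · rw [inv_mul_le_iff₀ (by exact_mod_cast hN), mul_one]
    exact hsum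

theorem half_le_average_two_pow_succ (ha : ∀ n, 0 ≤ a n) {j : ℕ}
    (hj : ∀ n ∈ Ico (2 ^ j) (2 ^ (j + 1)), a n = 1) :
    1 / 2 ≤ ((2 ^ (j + 1) : ℕ) : ℝ)⁻¹ * ∑ n ∈ Icc 1 (2 ^ (j + 1)), a n := by
  have hblock : Ico (2 ^ j) (2 ^ (j + 1)) ⊆ Icc 1 (2 ^ (j + 1)) := fun n hn => by
    simp only [mem_Ico, mem_Icc] at hn ⊢
    exact ⟨(Nat.one_le_two_pow).trans hn.1, hn.2.le⟩
  have hsum : (2 ^ j : ℝ) ≤ ∑ n ∈ Icc 1 (2 ^ (j + 1)), a n := calc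
    (2 ^ j : ℝ) = ∑ n ∈ Ico (2 ^ j) (2 ^ (j + 1)), a n := by
      rw [sum_congr rfl hj, sum_const, Nat.card_Ico, pow_succ, mul_two, Nat.add_sub_cancel]
      simp
    _ ≤ _ := sum_le_sum_of_subset_of_nonneg hblock fun n _ _ => ha n
  rw [le_inv_mul_iff₀ (by positivity)]
  push_cast
  linarith [pow_succ (2 : ℝ) j]

theorem half_le_limsup_average_of_frequently (ha₀ : ∀ n, 0 ≤ a n) (ha₁ : ∀ n, a n ≤ 1)
    (h : ∃ᶠ j in atTop, ∀ n ∈ Ico (2 ^ j) (2 ^ (j + 1)), a n = 1) :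
    1 / 2 ≤ limsup (fun N : ℕ => (N : ℝ)⁻¹ * ∑ n ∈ Icc 1 N, a n) atTop := by
  have hpow : Tendsto (fun j : ℕ => 2 ^ (j + 1)) atTop atTop :=
    (tendsto_pow_atTop_atTop_of_one_lt one_lt_two).comp (tendsto_add_atTop_nat 1)
  refine le_limsup_of_frequently_le (hpow.frequently ?_) (isBoundedUnder_le_average ha₁)
  exact h.mono fun j hj => half_le_average_two_pow_succ ha₀ hj

end Density

theorem Real.log_natCast_le_natLog_two_add_one (n : ℕ) : Real.log n ≤ Nat.log 2 n + 1 := by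
  rcases n.eq_zero_or_pos with rfl | hn
  · simp
  have hlt : (n : ℝ) < 2 ^ (Nat.log 2 n + 1) := by
    exact_mod_cast Nat.lt_pow_succ_log_self one_lt_two n
  calc Real.log n ≤ Real.log (2 ^ (Nat.log 2 n + 1)) :=
        Real.log_le_log (by exact_mod_cast hn) hlt.le
    _ = (Nat.log 2 n + 1) * Real.log 2 := by rw [Real.log_pow]; push_cast; ring
    _ ≤ Nat.log 2 n + 1 := mul_le_of_le_one_right (by positivity)
        (by linarith [Real.log_le_sub_one_of_pos two_pos])

instance : IsProbabilityMeasure (volume : Measure UnitAddCircle) :=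
  ⟨UnitAddCircle.measure_univ⟩

/-- Sharpness of Borel–Cantelli in density: there are events with `ℙ(E_n) ≤ (log n)⁻¹` such
that almost surely the set `{n : ω ∈ E_n}` has positive upper density. -/
theorem borel_cantelli_in_density_sharp :
    ∃ (Ω : Type) (_ : MeasurableSpace Ω) (μ : Measure Ω) (_ : IsProbabilityMeasure μ)
      (E : ℕ → Set Ω),
      (∀ n, MeasurableSet (E n)) ∧
      (∀ n : ℕ, 2 ≤ n → μ (E n) ≤ ENNReal.ofReal ((Real.log n)⁻¹)) ∧
      ∀ᵐ ω ∂μ, 0 < Filter.limsup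
        (fun N : ℕ => (N : ℝ)⁻¹ * ∑ n ∈ Finset.Icc 1 N, (E n).indicator (fun _ => (1 : ℝ)) ω)
        atTop := by
  refine ⟨UnitAddCircle, inferInstance, volume, inferInstance,
    fun n => sweepArc (fun j : ℕ => 1 / ((j : ℝ) + 1)) (Nat.log 2 n),
    fun n => Metric.isClosed_closedBall.measurableSet, fun n hn => ?_, ae_of_all _ fun x => ?_⟩
  · have hlog : 0 < Real.log n := Real.log_pos (by exact_mod_cast hn)
    refine (volume_sweepArc_le _ _).trans (ENNReal.ofReal_le_ofReal ?_)
    rw [one_div, inv_le_inv₀ (by positivity) hlog]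
    exact Real.log_natCast_le_natLog_two_add_one n
  · have hx := frequently_mem_sweepArc Real.tendsto_sum_range_one_div_nat_succ_atTop x
    refine one_half_pos.trans_le (half_le_limsup_average_of_frequently
      (fun n => Set.indicator_nonneg (fun _ _ => zero_le_one) _)
      (fun n => Set.indicator_le_self' (fun _ _ => zero_le_one) _) (hx.mono fun j hj n hn => ?_))
    rw [Finset.mem_Ico] at hn
    refine Set.indicator_of_mem ?_ _
    show x ∈ sweepArc _ (Nat.log 2 n)
    rwa [Nat.log_eq_of_pow_le_of_lt_pow hn.1 hn.2]
end

section
/- Let (X_n) be a sequence of non-negative random variables, uniformly bounded by 1, such that the sequence E(X_n)·n^a converges to a nonzero constant for some a ∈ (0,1), and such that the centered variables X_n − E(X_n) are pairwise orthogonal in L². Set W_N = ∑_{n=1}^N E(X_n). Then almost surely (1/W_N) ∑_{n=1}^N X_n → 1 as N → ∞. -/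
open Filter MeasureTheory ProbabilityTheory Finset Topology

/-!
Write `S_N = ∑_{n ≤ N} X_n`. Orthogonality makes the variance of `S_N` the sum of the variances,
and `Var X_n ≤ E X_n² ≤ E X_n` because `0 ≤ X_n ≤ 1`; hence `Var (S_N / W_N) ≤ 1 / W_N`.
As `E X_n ≍ n^{-a}`, we have `W_N ≍ N^{1-a}`, so along the polynomial times `N_k = k^m` with
`m (1 - a) > 1` these variances are summable and `S_{N_k} / W_{N_k} → 1` almost surely.
Since `W_{N_{k+1}} / W_{N_k} → 1` and both `S` and `W` are non-decreasing, squeezing `S_N / W_N`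
between consecutive `N_k` gives the full limit.
-/

lemma StrictMono.exists_le_lt_succ {φ : ℕ → ℕ} (hφ : StrictMono φ) {N : ℕ} (hN : φ 0 ≤ N) :
    ∃ k, φ k ≤ N ∧ N < φ (k + 1) := by
  classical
  have hex : ∃ k, N < φ (k + 1) := ⟨N, hφ.le_apply.trans_lt (hφ N.lt_succ_self)⟩
  refine ⟨Nat.find hex, ?_, Nat.find_spec hex⟩
  rcases h : Nat.find hex with _ | j
  · exact hN
  · exact not_lt.1 (Nat.find_min hex (h ▸ j.lt_succ_self))

theorem tendsto_inv_mul_of_monotone_of_tendsto_subseq {S W : ℕ → ℝ} {φ : ℕ → ℕ} {l : ℝ}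
    (hφ : StrictMono φ) (hS : Monotone S) (hS₀ : ∀ N, 0 ≤ S N) (hW : Monotone W)
    (hWpos : ∀ᶠ k in atTop, 0 < W (φ k))
    (hlim : Tendsto (fun k ↦ (W (φ k))⁻¹ * S (φ k)) atTop (𝓝 l))
    (hratio : Tendsto (fun k ↦ W (φ (k + 1)) / W (φ k)) atTop (𝓝 1)) :
    Tendsto (fun N ↦ (W N)⁻¹ * S N) atTop (𝓝 l) := by
  choose! k hk_le hk_lt using fun N (hN : φ 0 ≤ N) ↦ hφ.exists_le_lt_succ hN
  have hk : Tendsto k atTop atTop := tendsto_atTop_atTop.2 fun b ↦ ⟨φ b, fun N hN ↦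
    Nat.lt_succ_iff.1 (hφ.lt_iff_lt.1 (hN.trans_lt (hk_lt N ((hφ.monotone b.zero_le).trans hN))))⟩
  have hlower : Tendsto (fun i ↦ (W (φ i))⁻¹ * S (φ i) * (W (φ (i + 1)) / W (φ i))⁻¹)
      atTop (𝓝 l) := by
    simpa using hlim.mul (hratio.inv₀ one_ne_zero)
  have hupper : Tendsto (fun i ↦ (W (φ (i + 1)))⁻¹ * S (φ (i + 1)) * (W (φ (i + 1)) / W (φ i)))
      atTop (𝓝 l) := by
    simpa using (hlim.comp (tendsto_add_atTop_nat 1)).mul hratio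
  refine tendsto_of_tendsto_of_tendsto_of_le_of_le' (hlower.comp hk) (hupper.comp hk) ?_ ?_ <;>
    filter_upwards [eventually_ge_atTop (φ 0), hk.eventually hWpos] with N hN hpos <;>
    have hWN : 0 < W N := hpos.trans_le (hW (hk_le N hN))
  · calc (W (φ (k N)))⁻¹ * S (φ (k N)) * (W (φ (k N + 1)) / W (φ (k N)))⁻¹
        = S (φ (k N)) / W (φ (k N + 1)) := by field_simp
      _ ≤ S N / W N := div_le_div₀ (hS₀ N) (hS (hk_le N hN)) hWN (hW (hk_lt N hN).le)
      _ = (W N)⁻¹ * S N := by rw [div_eq_inv_mul]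
  · have hpos' : 0 < W (φ (k N + 1)) := hWN.trans_le (hW (hk_lt N hN).le)
    calc (W N)⁻¹ * S N = S N / W N := by rw [div_eq_inv_mul]
      _ ≤ S (φ (k N + 1)) / W (φ (k N)) :=
        div_le_div₀ (hS₀ _) (hS (hk_lt N hN).le) hpos (hW (hk_le N hN))
      _ = (W (φ (k N + 1)))⁻¹ * S (φ (k N + 1)) * (W (φ (k N + 1)) / W (φ (k N))) := by
        field_simp

section MeanAsymptotics

variable {e : ℕ → ℝ} {a c : ℝ}

lemma monotone_sum_Icc (he : ∀ n, 0 ≤ e n) : Monotone fun N ↦ ∑ n ∈ Icc 1 N, e n :=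
  fun _ _ h ↦ sum_le_sum_of_subset_of_nonneg (Icc_subset_Icc le_rfl h) fun n _ _ ↦ he n

lemma eventually_bounds_of_tendsto_mul_rpow (hc : 0 < c)
    (hlim : Tendsto (fun n : ℕ ↦ e n * (n : ℝ) ^ a) atTop (𝓝 c)) :
    ∀ᶠ n : ℕ in atTop, c / 2 * (n : ℝ) ^ (-a) ≤ e n ∧ e n ≤ 2 * c * (n : ℝ) ^ (-a) := by
  have hmem : Set.Ioo (c / 2) (2 * c) ∈ 𝓝 c := Ioo_mem_nhds (by linarith) (by linarith)
  filter_upwards [hlim.eventually hmem, eventually_gt_atTop 0] with n ⟨hlo, hhi⟩ hn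
  have hn' : (0 : ℝ) < n := by exact_mod_cast hn
  have he : e n = e n * (n : ℝ) ^ a * (n : ℝ) ^ (-a) := by
    rw [mul_assoc, ← Real.rpow_add hn', add_neg_cancel, Real.rpow_zero, mul_one]
  exact ⟨by rw [he]; gcongr, by rw [he]; gcongr⟩

lemma eventually_mul_rpow_le_sum_Icc (he : ∀ n, 0 ≤ e n) (ha : 0 ≤ a) (hc : 0 < c)
    (hlim : Tendsto (fun n : ℕ ↦ e n * (n : ℝ) ^ a) atTop (𝓝 c)) :
    ∀ᶠ N : ℕ in atTop, c / 4 * (N : ℝ) ^ (1 - a) ≤ ∑ n ∈ Icc 1 N, e n := by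
  obtain ⟨n₀, hn₀⟩ := eventually_atTop.1 (eventually_bounds_of_tendsto_mul_rpow hc hlim)
  filter_upwards [eventually_ge_atTop (2 * n₀ + 1)] with N hN
  have hN₀ : (0 : ℝ) < N := by exact_mod_cast (by omega : 0 < N)
  have hcard : (N : ℝ) / 2 ≤ #(Icc (n₀ + 1) N) := by
    rw [Nat.card_Icc, div_le_iff₀ two_pos]
    exact_mod_cast (by omega : N ≤ (N + 1 - (n₀ + 1)) * 2)
  calc c / 4 * (N : ℝ) ^ (1 - a) = (N : ℝ) / 2 * (c / 2 * (N : ℝ) ^ (-a)) := by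
        rw [sub_eq_add_neg, Real.rpow_add hN₀, Real.rpow_one]; ring
    _ ≤ #(Icc (n₀ + 1) N) * (c / 2 * (N : ℝ) ^ (-a)) := by gcongr
    _ ≤ ∑ n ∈ Icc (n₀ + 1) N, e n := by
        rw [← nsmul_eq_mul]
        refine card_nsmul_le_sum _ _ _ fun n hn ↦ ?_
        obtain ⟨hn₁, hn₂⟩ := mem_Icc.1 hn
        refine le_trans ?_ (hn₀ n (by omega)).1
        exact mul_le_mul_of_nonneg_left (Real.rpow_le_rpow_of_nonpos (Nat.cast_pos.2 (by omega))
          (Nat.cast_le.2 hn₂) (neg_nonpos.2 ha)) (by positivity)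
    _ ≤ ∑ n ∈ Icc 1 N, e n :=
        sum_le_sum_of_subset_of_nonneg (Icc_subset_Icc (by omega) le_rfl) fun n _ _ ↦ he n

lemma eventually_sum_Ioc_le (ha : 0 ≤ a) (hc : 0 < c)
    (hlim : Tendsto (fun n : ℕ ↦ e n * (n : ℝ) ^ a) atTop (𝓝 c)) :
    ∀ᶠ N : ℕ in atTop, ∀ M ≥ N,
      ∑ n ∈ Ioc N M, e n ≤ ((M : ℝ) - N) * (2 * c * (N : ℝ) ^ (-a)) := by
  obtain ⟨n₀, hn₀⟩ := eventually_atTop.1 (eventually_bounds_of_tendsto_mul_rpow hc hlim)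
  filter_upwards [eventually_ge_atTop (n₀ + 1)] with N hN M hM
  calc ∑ n ∈ Ioc N M, e n ≤ #(Ioc N M) • (2 * c * (N : ℝ) ^ (-a)) := by
        refine sum_le_card_nsmul _ _ _ fun n hn ↦ ?_
        obtain ⟨hn₁, -⟩ := mem_Ioc.1 hn
        exact (hn₀ n (by omega)).2.trans (mul_le_mul_of_nonneg_left
          (Real.rpow_le_rpow_of_nonpos (Nat.cast_pos.2 (by omega)) (Nat.cast_le.2 hn₁.le)
            (neg_nonpos.2 ha)) (by positivity))
    _ = ((M : ℝ) - N) * (2 * c * (N : ℝ) ^ (-a)) := by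
        rw [nsmul_eq_mul, Nat.card_Ioc, Nat.cast_sub hM]

lemma eventually_sum_Icc_le_mul (he : ∀ n, 0 ≤ e n) (ha : 0 ≤ a) (hc : 0 < c)
    (hlim : Tendsto (fun n : ℕ ↦ e n * (n : ℝ) ^ a) atTop (𝓝 c)) :
    ∀ᶠ N : ℕ in atTop, ∀ M ≥ N,
      ∑ n ∈ Icc 1 M, e n ≤ (1 + 8 * ((M : ℝ) / N - 1)) * ∑ n ∈ Icc 1 N, e n := by
  filter_upwards [eventually_gt_atTop 0, eventually_mul_rpow_le_sum_Icc he ha hc hlim,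
    eventually_sum_Ioc_le ha hc hlim] with N hN hlower hincr M hM
  have hN₀ : (0 : ℝ) < N := by exact_mod_cast hN
  have hIcc : ∀ K, Icc 1 K = Ioc 0 K := Icc_add_one_left_eq_Ioc 0
  have hMN : 0 ≤ (M : ℝ) / N - 1 := by
    rw [sub_nonneg, one_le_div hN₀]; exact_mod_cast hM
  calc ∑ n ∈ Icc 1 M, e n = ∑ n ∈ Icc 1 N, e n + ∑ n ∈ Ioc N M, e n := by
        rw [hIcc, hIcc, sum_Ioc_consecutive _ (Nat.zero_le N) hM]
    _ ≤ ∑ n ∈ Icc 1 N, e n + ((M : ℝ) - N) * (2 * c * (N : ℝ) ^ (-a)) := by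
        gcongr; exact hincr M hM
    _ = ∑ n ∈ Icc 1 N, e n + 8 * ((M : ℝ) / N - 1) * (c / 4 * (N : ℝ) ^ (1 - a)) := by
        rw [sub_eq_add_neg 1 a, Real.rpow_add hN₀, Real.rpow_one]; field_simp; ring
    _ ≤ (1 + 8 * ((M : ℝ) / N - 1)) * ∑ n ∈ Icc 1 N, e n := by
        rw [add_mul, one_mul]; gcongr

lemma eventually_sum_Icc_pos (he : ∀ n, 0 ≤ e n) (ha : 0 ≤ a) (hc : 0 < c)
    (hlim : Tendsto (fun n : ℕ ↦ e n * (n : ℝ) ^ a) atTop (𝓝 c)) :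
    ∀ᶠ N : ℕ in atTop, 0 < ∑ n ∈ Icc 1 N, e n := by
  filter_upwards [eventually_gt_atTop 0, eventually_mul_rpow_le_sum_Icc he ha hc hlim] with N hN hle
  exact lt_of_lt_of_le (by positivity) hle

lemma tendsto_sum_Icc_pow_succ_div (he : ∀ n, 0 ≤ e n) (ha : 0 ≤ a) (hc : 0 < c)
    (hlim : Tendsto (fun n : ℕ ↦ e n * (n : ℝ) ^ a) atTop (𝓝 c)) {m : ℕ} (hm : m ≠ 0) :
    Tendsto (fun k : ℕ ↦ (∑ n ∈ Icc 1 ((k + 1) ^ m), e n) / ∑ n ∈ Icc 1 (k ^ m), e n)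
      atTop (𝓝 1) := by
  have hpow : Tendsto (fun k : ℕ ↦ k ^ m) atTop atTop := tendsto_pow_atTop hm
  have hq : Tendsto (fun k : ℕ ↦ 1 + 8 * ((((k + 1) ^ m : ℕ) : ℝ) / ((k ^ m : ℕ) : ℝ) - 1))
      atTop (𝓝 1) := by
    have h : Tendsto (fun k : ℕ ↦ (1 + 1 / (k : ℝ)) ^ m) atTop (𝓝 1) := by
      simpa using (tendsto_one_div_atTop_nhds_zero_nat.const_add (1 : ℝ)).pow m
    have h' : Tendsto (fun k : ℕ ↦ (((k + 1) ^ m : ℕ) : ℝ) / ((k ^ m : ℕ) : ℝ)) atTop (𝓝 1) := by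
      refine h.congr' ?_
      filter_upwards [eventually_gt_atTop 0] with k hk
      have hk' : (k : ℝ) ≠ 0 := by positivity
      push_cast
      rw [← div_pow, add_div, div_self hk', add_comm]
    simpa using ((h'.sub_const 1).const_mul 8).const_add 1
  refine tendsto_of_tendsto_of_tendsto_of_le_of_le' tendsto_const_nhds hq ?_ ?_ <;>
    filter_upwards [hpow.eventually (eventually_sum_Icc_pos he ha hc hlim),
      hpow.eventually (eventually_sum_Icc_le_mul he ha hc hlim)] with k hpos hle
  · rw [le_div_iff₀ hpos, one_mul]
    exact monotone_sum_Icc he (Nat.pow_le_pow_left k.le_succ m)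
  · rw [div_le_iff₀ hpos]
    exact hle _ (Nat.pow_le_pow_left k.le_succ m)

lemma summable_inv_sum_Icc_pow (he : ∀ n, 0 ≤ e n) (ha : 0 ≤ a) (hc : 0 < c)
    (hlim : Tendsto (fun n : ℕ ↦ e n * (n : ℝ) ^ a) atTop (𝓝 c)) {m : ℕ} (hm : 1 < m * (1 - a)) :
    Summable fun k : ℕ ↦ (∑ n ∈ Icc 1 (k ^ m), e n)⁻¹ := by
  have hpow : Tendsto (fun k : ℕ ↦ k ^ m) atTop atTop := by
    refine tendsto_pow_atTop ?_
    rintro rfl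
    norm_num at hm
  refine ((Real.summable_nat_rpow_inv.2 hm).mul_left (c / 4)⁻¹).of_norm_bounded_eventually_nat ?_
  filter_upwards [eventually_gt_atTop 0, hpow.eventually (eventually_mul_rpow_le_sum_Icc he ha hc hlim)]
    with k hk hle
  have hk' : (0 : ℝ) < k := by exact_mod_cast hk
  rw [Real.rpow_natCast_mul hk'.le, ← mul_inv, Real.norm_of_nonneg (inv_nonneg.2 ?_)]
  · push_cast at hle
    exact inv_anti₀ (by positivity) hle
  · exact le_trans (by positivity) hle

end MeanAsymptotics

section Probability

variable {Ω : Type*} [MeasurableSpace Ω] {μ : Measure Ω}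

lemma variance_fun_sum_of_pairwise_covariance_eq_zero [IsFiniteMeasure μ] {ι : Type*}
    {X : ι → Ω → ℝ} {s : Finset ι} (hX : ∀ i ∈ s, MemLp (X i) 2 μ)
    (hcov : Set.Pairwise s fun i j ↦ cov[X i, X j; μ] = 0) :
    Var[fun ω ↦ ∑ i ∈ s, X i ω; μ] = ∑ i ∈ s, Var[X i; μ] := by
  rw [variance_fun_sum' hX]
  refine sum_congr rfl fun i hi ↦ ?_
  rw [← covariance_self (hX i hi).aemeasurable]
  exact sum_eq_single_of_mem i hi fun j hj hji ↦ hcov hi hj hji.symm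

lemma variance_le_integral_of_mem_Icc [IsProbabilityMeasure μ] {X : Ω → ℝ}
    (hX : AEStronglyMeasurable X μ) (hX01 : ∀ᵐ ω ∂μ, X ω ∈ Set.Icc 0 1) :
    Var[X; μ] ≤ μ[X] := by
  have hbound : ∀ᵐ ω ∂μ, ‖X ω‖ ≤ 1 := by
    filter_upwards [hX01] with ω ⟨h0, h1⟩
    rwa [Real.norm_of_nonneg h0]
  have hint : Integrable X μ := .of_bound hX 1 hbound
  refine (variance_le_expectation_sq hX).trans (integral_mono_ae ?_ hint ?_)
  · exact .of_bound (hX.pow 2) 1 (by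
      filter_upwards [hbound] with ω hω
      simpa using hω)
  · filter_upwards [hX01] with ω ⟨h0, h1⟩
    simpa [sq] using mul_le_of_le_one_left h0 h1

lemma ae_tendsto_sub_integral_of_summable_variance [IsFiniteMeasure μ] {Y : ℕ → Ω → ℝ}
    (hY : ∀ k, MemLp (Y k) 2 μ) (hsum : Summable fun k ↦ Var[Y k; μ]) :
    ∀ᵐ ω ∂μ, Tendsto (fun k ↦ Y k ω - μ[Y k]) atTop (𝓝 0) := by
  have hmeas : ∀ k, AEMeasurable (fun ω ↦ ENNReal.ofReal ((Y k ω - μ[Y k]) ^ 2)) μ := fun k ↦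
    (((hY k).aemeasurable.sub_const _).pow_const 2).ennreal_ofReal
  have hfin : ∫⁻ ω, ∑' k, ENNReal.ofReal ((Y k ω - μ[Y k]) ^ 2) ∂μ ≠ ⊤ := by
    rw [lintegral_tsum hmeas]
    simp_rw [← evariance_eq_lintegral_ofReal, ← ofReal_variance (hY _),
      ← ENNReal.ofReal_tsum_of_nonneg (fun k ↦ variance_nonneg _ _) hsum]
    exact ENNReal.ofReal_ne_top
  filter_upwards [ae_lt_top' (AEMeasurable.tsum hmeas) hfin] with ω hω
  have hsq : Tendsto (fun k ↦ (Y k ω - μ[Y k]) ^ 2) atTop (𝓝 0) := by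
    have := (ENNReal.tendsto_toReal ENNReal.zero_ne_top).comp
      (ENNReal.tendsto_atTop_zero_of_tsum_ne_top hω.ne)
    simpa [Function.comp_def, ENNReal.toReal_ofReal (sq_nonneg _)] using this
  rw [tendsto_zero_iff_norm_tendsto_zero]
  simpa [Real.sqrt_sq_eq_abs] using hsq.sqrt

lemma ae_tendsto_inv_mul_sum_of_summable_inv [IsFiniteMeasure μ] {ι : Type*} {X : ι → Ω → ℝ}
    (hX : ∀ i, MemLp (X i) 2 μ) (hcov : Pairwise fun i j ↦ cov[X i, X j; μ] = 0)
    (hvar : ∀ i, Var[X i; μ] ≤ μ[X i]) {s : ℕ → Finset ι}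
    (hpos : ∀ᶠ k in atTop, 0 < ∑ i ∈ s k, μ[X i])
    (hsum : Summable fun k ↦ (∑ i ∈ s k, μ[X i])⁻¹) :
    ∀ᵐ ω ∂μ, Tendsto (fun k ↦ (∑ i ∈ s k, μ[X i])⁻¹ * ∑ i ∈ s k, X i ω) atTop (𝓝 1) := by
  set W : ℕ → ℝ := fun k ↦ ∑ i ∈ s k, μ[X i]
  set Y : ℕ → Ω → ℝ := fun k ω ↦ (W k)⁻¹ * ∑ i ∈ s k, X i ω
  have hY : ∀ k, MemLp (Y k) 2 μ := fun k ↦ (memLp_finsetSum _ fun i _ ↦ hX i).const_mul _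
  have hYvar : ∀ k, Var[Y k; μ] ≤ (W k)⁻¹ := fun k ↦
    calc Var[Y k; μ] = (W k)⁻¹ ^ 2 * ∑ i ∈ s k, Var[X i; μ] := by
          rw [variance_const_mul, variance_fun_sum_of_pairwise_covariance_eq_zero
            (fun i _ ↦ hX i) (hcov.set_pairwise _)]
      _ ≤ (W k)⁻¹ ^ 2 * W k := by gcongr; exact sum_le_sum fun i _ ↦ hvar i
      _ = (W k)⁻¹ := by rcases eq_or_ne (W k) 0 with h | h <;> field_simp [h]
  have hYmean : ∀ᶠ k in atTop, μ[Y k] = 1 := by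
    filter_upwards [hpos] with k hk
    rw [integral_const_mul, integral_finsetSum _ fun i _ ↦ (hX i).integrable one_le_two,
      inv_mul_cancel₀ hk.ne']
  filter_upwards [ae_tendsto_sub_integral_of_summable_variance hY
    (hsum.of_nonneg_of_le (fun k ↦ variance_nonneg _ _) hYvar)] with ω hω
  simpa using (hω.add_const 1).congr' (hYmean.mono fun k hk ↦ by rw [hk, sub_add_cancel])

end Probability

/-- Strong law for orthogonal bounded non-negative random variables with means `∼ c n^{-a}`:
almost surely `W_N⁻¹ ∑_{n=1}^N X_n → 1`, where `W_N = ∑_{n=1}^N E(X_n)`. -/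
theorem strong_law_orthogonal
    {Ω : Type*} [MeasurableSpace Ω] (μ : Measure Ω) [IsProbabilityMeasure μ]
    (X : ℕ → Ω → ℝ) (hmeas : ∀ n, Measurable (X n))
    (hpos : ∀ n ω, 0 ≤ X n ω) (hbdd : ∀ n ω, X n ω ≤ 1)
    (a c : ℝ) (ha : a ∈ Set.Ioo (0 : ℝ) 1) (hc : c ≠ 0)
    (hmean : Tendsto (fun n : ℕ => (∫ ω, X n ω ∂μ) * (n : ℝ) ^ a) atTop (nhds c))
    (horth : ∀ n m : ℕ, n ≠ m →
      ∫ ω, (X n ω - ∫ ω', X n ω' ∂μ) * (X m ω - ∫ ω', X m ω' ∂μ) ∂μ = 0)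
    (W : ℕ → ℝ) (hW : ∀ N, W N = ∑ n ∈ Finset.Icc 1 N, ∫ ω, X n ω ∂μ) :
    ∀ᵐ ω ∂μ, Tendsto (fun N : ℕ => (W N)⁻¹ * ∑ n ∈ Finset.Icc 1 N, X n ω)
      atTop (nhds 1) := by
  obtain rfl : W = fun N ↦ ∑ n ∈ Icc 1 N, ∫ ω, X n ω ∂μ := funext hW
  obtain ⟨ha₀, ha₁⟩ := ha
  have he : ∀ n, 0 ≤ ∫ ω, X n ω ∂μ := fun n ↦ integral_nonneg (hpos n)
  have hc₀ : 0 < c :=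
    (ge_of_tendsto' hmean fun n ↦ mul_nonneg (he n) (by positivity)).lt_of_ne' hc
  have hL2 : ∀ n, MemLp (X n) 2 μ := fun n ↦ .of_bound (hmeas n).aestronglyMeasurable 1 <|
    ae_of_all _ fun ω ↦ by rw [Real.norm_of_nonneg (hpos n ω)]; exact hbdd n ω
  obtain ⟨m, hm⟩ : ∃ m : ℕ, 1 < m * (1 - a) := by
    obtain ⟨m, hm⟩ := exists_nat_gt (1 / (1 - a))
    exact ⟨m, by rwa [div_lt_iff₀ (by linarith)] at hm⟩
  have hm₀ : m ≠ 0 := by rintro rfl; norm_num at hm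
  have hWpos := (tendsto_pow_atTop hm₀).eventually (eventually_sum_Icc_pos he ha₀.le hc₀ hmean)
  filter_upwards [ae_tendsto_inv_mul_sum_of_summable_inv hL2 (fun n m h ↦ horth n m h)
    (fun n ↦ variance_le_integral_of_mem_Icc (hmeas n).aestronglyMeasurable
      (ae_of_all _ fun ω ↦ ⟨hpos n ω, hbdd n ω⟩)) hWpos
    (summable_inv_sum_Icc_pow he ha₀.le hc₀ hmean hm)] with ω hω
  exact tendsto_inv_mul_of_monotone_of_tendsto_subseq (Nat.pow_left_strictMono hm₀)
    (monotone_sum_Icc (hpos · ω)) (fun N ↦ sum_nonneg fun n _ ↦ hpos n ω) (monotone_sum_Icc he)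
    hWpos hω (tendsto_sum_Icc_pow_succ_div he ha₀.le hc₀ hmean hm₀)
end

section
/- Let Y be a real random variable with |Y| ≤ 1 almost surely and E(Y) = 0. Then for every λ ∈ [−1,1], E(e^{λY}) ≤ e^{λ² Var(Y)}. -/
/-!
For `|x| ≤ 1` the exponential is dominated by its second-order Taylor polynomial with the
coefficient `1/2` enlarged to `1`: `eˣ ≤ 1 + x + x²`. Integrating this at `x = λY` and using
`E Y = 0` gives `E e^{λY} ≤ 1 + λ² E Y² = 1 + λ² Var Y ≤ e^{λ² Var Y}`.
-/

open MeasureTheory ProbabilityTheory Real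

lemma Real.exp_le_one_add_add_sq {x : ℝ} (hx : |x| ≤ 1) : exp x ≤ 1 + x + x ^ 2 := by
  linarith [(abs_le.1 (abs_exp_sub_one_sub_id_le hx)).2]

lemma integral_exp_le_one_add_integral_add_integral_sq {Ω : Type*} [MeasurableSpace Ω]
    {μ : Measure Ω} [IsProbabilityMeasure μ] {X : Ω → ℝ} (hX : AEMeasurable X μ)
    (hbdd : ∀ᵐ ω ∂μ, |X ω| ≤ 1) :
    ∫ ω, exp (X ω) ∂μ ≤ 1 + ∫ ω, X ω ∂μ + ∫ ω, X ω ^ 2 ∂μ := by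
  have hX_int : Integrable X μ := .of_bound hX.aestronglyMeasurable 1 hbdd
  have hX2_int : Integrable (fun ω ↦ X ω ^ 2) μ := by
    refine .of_bound (hX.pow_const 2).aestronglyMeasurable 1 ?_
    filter_upwards [hbdd] with ω hω
    rw [norm_pow, norm_eq_abs]
    exact pow_le_one₀ (abs_nonneg _) hω
  have hexp_int : Integrable (fun ω ↦ exp (X ω)) μ := by
    refine .of_bound (measurable_exp.comp_aemeasurable hX).aestronglyMeasurable (exp 1) ?_
    filter_upwards [hbdd] with ω hω
    rw [norm_of_nonneg (exp_pos _).le, exp_le_exp]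
    exact (le_abs_self _).trans hω
  have h1X_int : Integrable (fun ω ↦ 1 + X ω) μ := (integrable_const 1).add hX_int
  calc ∫ ω, exp (X ω) ∂μ ≤ ∫ ω, 1 + X ω + X ω ^ 2 ∂μ :=
        integral_mono_ae hexp_int (h1X_int.add hX2_int)
          (hbdd.mono fun ω hω ↦ exp_le_one_add_add_sq hω)
    _ = 1 + ∫ ω, X ω ∂μ + ∫ ω, X ω ^ 2 ∂μ := by
        rw [integral_add h1X_int hX2_int, integral_add (integrable_const 1) hX_int,
          integral_const]
        simp

/-- Sub-exponential moment bound: if `|Y| ≤ 1` a.s. and `E(Y) = 0`, then for `λ ∈ [-1,1]`,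
`E(e^{λY}) ≤ e^{λ² Var(Y)}`. -/
theorem subexponential_moment_bound
    {Ω : Type*} [MeasurableSpace Ω] (μ : Measure Ω) [IsProbabilityMeasure μ]
    (Y : Ω → ℝ) (hmeas : Measurable Y)
    (hbdd : ∀ᵐ ω ∂μ, |Y ω| ≤ 1) (hmean : ∫ ω, Y ω ∂μ = 0)
    (lam : ℝ) (hlam : lam ∈ Set.Icc (-1 : ℝ) 1) :
    ∫ ω, Real.exp (lam * Y ω) ∂μ ≤ Real.exp (lam ^ 2 * variance Y μ) := by
  have hbdd_lam : ∀ᵐ ω ∂μ, |lam * Y ω| ≤ 1 := by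
    filter_upwards [hbdd] with ω hω
    rw [abs_mul]
    exact mul_le_one₀ (abs_le.2 hlam) (abs_nonneg _) hω
  have hvar : ∫ ω, (lam * Y ω) ^ 2 ∂μ = lam ^ 2 * variance Y μ := by
    simp_rw [mul_pow, integral_const_mul, variance_of_integral_eq_zero hmeas.aemeasurable hmean]
  calc ∫ ω, exp (lam * Y ω) ∂μ
      ≤ 1 + ∫ ω, lam * Y ω ∂μ + ∫ ω, (lam * Y ω) ^ 2 ∂μ :=
        integral_exp_le_one_add_integral_add_integral_sq (hmeas.const_mul lam).aemeasurable
          hbdd_lam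
    _ = 1 + lam ^ 2 * variance Y μ := by rw [integral_const_mul, hmean, hvar]; ring
    _ ≤ exp (lam ^ 2 * variance Y μ) := by linarith [add_one_le_exp (lam ^ 2 * variance Y μ)]
end

section
/- Let (Z_{m,n})_{m,n∈ℕ} be random variables uniformly bounded by 1 with mean zero, such that for each fixed m the variables (Z_{m,n})_{n≥1} are independent. Let (ρ_n) be positive reals with sup_m Var(Z_{m,n}) ≤ ρ_n and (1/log N) ∑_{n=1}^N ρ_n → ∞. Then almost surely there is a finite constant C(ω) such that for all N ≥ 2, max_{1≤m≤N} max_{t∈[0,1]} |∑_{n=1}^N Z_{m,n} e(nt)| ≤ C(ω) √(log N · ∑_{n=1}^N ρ_n), where e(t) = e^{2πit}. -/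
/-!
Write `R_N = ∑_{n ≤ N} ρ_n`. On `[-1, 1]` we have `eˣ ≤ 1 + x + x²`, so a centred variable
bounded by `1` has `E e^{tX} ≤ e^{t² Var X}` for `|t| ≤ 1`; by independence the same holds for
`∑ a_n Z_{m,n}` with variance proxy `R_N` whenever `|a_n| ≤ 1`, and Chernoff's bound at the optimal
`t = ε / 2R_N` gives the tail `e^{-ε²/4R_N}` for `ε ≤ 2R_N`. With `ε = 6 √(log N · R_N)`, admissible
for large `N` because `R_N / log N → ∞`, the tail is `N⁻⁹`; applied to the real and imaginary parts
at the `N² + 1` points `j / N²` and summed over `m ≤ N`, it leaves a bad event of probability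
`O(N⁻⁶)`, so by Borel–Cantelli almost surely the polynomials are below `2ε` on that grid for all
large `N`. Being `2πN²`-Lipschitz, they are then below `2ε + 2π` on `[0, 1]`; the finitely many
remaining `N` are absorbed into the constant through the trivial bound `N`.
-/

open Filter MeasureTheory ProbabilityTheory Real

section Bernstein

variable {Ω : Type*} [MeasurableSpace Ω] {μ : Measure Ω} [IsProbabilityMeasure μ]

lemma mgf_le_exp_sq_mul_variance {X : Ω → ℝ} (hX : Measurable X) (hbdd : ∀ ω, |X ω| ≤ 1)
    (hmean : μ[X] = 0) {t : ℝ} (ht : |t| ≤ 1) :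
    mgf X μ t ≤ exp (t ^ 2 * variance X μ) := by
  have hX_mem : ∀ ω, X ω ∈ Set.Icc (-1) 1 := fun ω => abs_le.mp (hbdd ω)
  have hint : Integrable X μ := .of_mem_Icc (-1) 1 hX.aemeasurable (ae_of_all _ hX_mem)
  have hint_sq : Integrable (fun ω => X ω ^ 2) μ :=
    .of_mem_Icc 0 1 (hX.pow_const 2).aemeasurable (ae_of_all _ fun ω =>
      ⟨sq_nonneg _, (sq_le_one_iff_abs_le_one _).mpr (hbdd ω)⟩)
  have h_exp_le : ∀ ω, exp (t * X ω) ≤ 1 + t * X ω + t ^ 2 * X ω ^ 2 := fun ω => by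
    have htX : |t * X ω| ≤ 1 := by rw [abs_mul]; exact mul_le_one₀ ht (abs_nonneg _) (hbdd ω)
    linarith [(abs_le.mp (abs_exp_sub_one_sub_id_le htX)).2, mul_pow t (X ω) 2]
  calc mgf X μ t ≤ ∫ ω, (1 + t * X ω + t ^ 2 * X ω ^ 2) ∂μ :=
        integral_mono (integrable_exp_mul_of_mem_Icc hX.aemeasurable (ae_of_all _ hX_mem))
          (((integrable_const 1).add (hint.const_mul t)).add (hint_sq.const_mul _)) h_exp_le
    _ = 1 + t ^ 2 * variance X μ := by
        rw [integral_add (f := fun ω => 1 + t * X ω) ((integrable_const 1).add (hint.const_mul t))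
          (hint_sq.const_mul _), integral_add (integrable_const 1) (hint.const_mul t),
          integral_const_mul, integral_const_mul, hmean,
          variance_of_integral_eq_zero hX.aemeasurable hmean]
        simp
    _ ≤ exp (t ^ 2 * variance X μ) := by linarith [add_one_le_exp (t ^ 2 * variance X μ)]

theorem measureReal_sum_ge_le_of_iIndepFun_of_abs_le_one {ι : Type*} {X : ι → Ω → ℝ}
    (h_indep : iIndepFun X μ) (h_meas : ∀ i, Measurable (X i)) (h_bdd : ∀ i ω, |X i ω| ≤ 1)
    (h_mean : ∀ i, μ[X i] = 0) {s : Finset ι} {R ε : ℝ}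
    (hR : ∑ i ∈ s, variance (X i) μ ≤ R) (hε : 0 < ε) (hεR : ε ≤ 2 * R) :
    μ.real {ω | ε ≤ ∑ i ∈ s, X i ω} ≤ exp (-ε ^ 2 / (4 * R)) := by
  have hR0 : 0 < R := by linarith
  -- minimizes `-t ε + t² R`
  set t := ε / (2 * R) with ht_def
  have ht0 : 0 ≤ t := by positivity
  have ht1 : |t| ≤ 1 := by rw [abs_of_nonneg ht0]; exact div_le_one_of_le₀ hεR (by positivity)
  have h_int : Integrable (fun ω => exp (t * (∑ i ∈ s, X i) ω)) μ :=
    h_indep.integrable_exp_mul_sum h_meas fun i _ => integrable_exp_mul_of_le t 1 ht0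
      (h_meas i).aemeasurable (ae_of_all _ fun ω => (abs_le.mp (h_bdd i ω)).2)
  have h_mgf : mgf (∑ i ∈ s, X i) μ t ≤ exp (t ^ 2 * R) := by
    rw [h_indep.mgf_sum h_meas]
    calc ∏ i ∈ s, mgf (X i) μ t ≤ ∏ i ∈ s, exp (t ^ 2 * variance (X i) μ) :=
          Finset.prod_le_prod (fun _ _ => mgf_nonneg) fun i _ =>
            mgf_le_exp_sq_mul_variance (h_meas i) (h_bdd i) (h_mean i) ht1
      _ = exp (t ^ 2 * ∑ i ∈ s, variance (X i) μ) := by rw [← exp_sum, Finset.mul_sum]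
      _ ≤ exp (t ^ 2 * R) := by gcongr
  calc μ.real {ω | ε ≤ ∑ i ∈ s, X i ω} = μ.real {ω | ε ≤ (∑ i ∈ s, X i) ω} := by
        simp only [Finset.sum_apply]
    _ ≤ exp (-t * ε) * mgf (∑ i ∈ s, X i) μ t := measure_ge_le_exp_mul_mgf ε ht0 h_int
    _ ≤ exp (-t * ε) * exp (t ^ 2 * R) := by gcongr
    _ = exp (-ε ^ 2 / (4 * R)) := by
        rw [← exp_add, ht_def]
        congr 1
        field_simp
        ring

lemma measureReal_sum_mul_ge_le {ι : Type*} {X : ι → Ω → ℝ}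
    (h_indep : iIndepFun X μ) (h_meas : ∀ i, Measurable (X i)) (h_bdd : ∀ i ω, |X i ω| ≤ 1)
    (h_mean : ∀ i, μ[X i] = 0) {a : ι → ℝ} (ha : ∀ i, |a i| ≤ 1) {s : Finset ι} {R ε : ℝ}
    (hR : ∑ i ∈ s, variance (X i) μ ≤ R) (hε : 0 < ε) (hεR : ε ≤ 2 * R) :
    μ.real {ω | ε ≤ ∑ i ∈ s, a i * X i ω} ≤ exp (-ε ^ 2 / (4 * R)) := by
  refine measureReal_sum_ge_le_of_iIndepFun_of_abs_le_one (X := fun i ω => a i * X i ω)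
    (h_indep.comp (fun i y => a i * y) fun i => measurable_const.mul measurable_id)
    (fun i => (h_meas i).const_mul (a i)) (fun i ω => ?_) (fun i => ?_) ?_ hε hεR
  · rw [abs_mul]; exact mul_le_one₀ (ha i) (abs_nonneg _) (h_bdd i ω)
  · rw [integral_const_mul, h_mean i, mul_zero]
  · refine le_trans (Finset.sum_le_sum fun i _ => ?_) hR
    rw [variance_const_mul]
    exact mul_le_of_le_one_left (variance_nonneg _ _)
      ((sq_le_one_iff_abs_le_one _).mpr (ha i))

lemma measureReal_abs_sum_mul_ge_le {ι : Type*} {X : ι → Ω → ℝ}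
    (h_indep : iIndepFun X μ) (h_meas : ∀ i, Measurable (X i)) (h_bdd : ∀ i ω, |X i ω| ≤ 1)
    (h_mean : ∀ i, μ[X i] = 0) {a : ι → ℝ} (ha : ∀ i, |a i| ≤ 1) {s : Finset ι} {R ε : ℝ}
    (hR : ∑ i ∈ s, variance (X i) μ ≤ R) (hε : 0 < ε) (hεR : ε ≤ 2 * R) :
    μ.real {ω | ε ≤ |∑ i ∈ s, a i * X i ω|} ≤ 2 * exp (-ε ^ 2 / (4 * R)) := by
  have h_neg : ∀ ω, -∑ i ∈ s, a i * X i ω = ∑ i ∈ s, -a i * X i ω := fun ω => by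
    simp only [neg_mul, Finset.sum_neg_distrib]
  calc μ.real {ω | ε ≤ |∑ i ∈ s, a i * X i ω|}
      ≤ μ.real ({ω | ε ≤ ∑ i ∈ s, a i * X i ω} ∪ {ω | ε ≤ ∑ i ∈ s, -a i * X i ω}) :=
        measureReal_mono fun ω (hω : ε ≤ |_|) => by
          rcases le_abs.mp hω with h | h
          · exact Or.inl h
          · exact Or.inr (show ε ≤ _ from h_neg ω ▸ h)
    _ ≤ exp (-ε ^ 2 / (4 * R)) + exp (-ε ^ 2 / (4 * R)) :=
        (measureReal_union_le _ _).trans (add_le_add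
          (measureReal_sum_mul_ge_le h_indep h_meas h_bdd h_mean ha hR hε hεR)
          (measureReal_sum_mul_ge_le h_indep h_meas h_bdd h_mean
            (fun i => (abs_neg (a i)).trans_le (ha i)) hR hε hεR))
    _ = 2 * exp (-ε ^ 2 / (4 * R)) := (two_mul _).symm

theorem measureReal_norm_sum_mul_ge_le {ι : Type*} {X : ι → Ω → ℝ}
    (h_indep : iIndepFun X μ) (h_meas : ∀ i, Measurable (X i)) (h_bdd : ∀ i ω, |X i ω| ≤ 1)
    (h_mean : ∀ i, μ[X i] = 0) {c : ι → ℂ} (hc : ∀ i, ‖c i‖ ≤ 1) {s : Finset ι} {R ε : ℝ}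
    (hR : ∑ i ∈ s, variance (X i) μ ≤ R) (hε : 0 < ε) (hεR : ε ≤ 2 * R) :
    μ.real {ω | 2 * ε ≤ ‖∑ i ∈ s, (X i ω : ℂ) * c i‖} ≤ 4 * exp (-ε ^ 2 / (4 * R)) := by
  have h_re : ∀ ω, (∑ i ∈ s, (X i ω : ℂ) * c i).re = ∑ i ∈ s, (c i).re * X i ω := fun ω => by
    rw [Complex.re_sum]
    exact Finset.sum_congr rfl fun i _ => by rw [Complex.re_ofReal_mul, mul_comm]
  have h_im : ∀ ω, (∑ i ∈ s, (X i ω : ℂ) * c i).im = ∑ i ∈ s, (c i).im * X i ω := fun ω => by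
    rw [Complex.im_sum]
    exact Finset.sum_congr rfl fun i _ => by rw [Complex.im_ofReal_mul, mul_comm]
  have h_sub : {ω | 2 * ε ≤ ‖∑ i ∈ s, (X i ω : ℂ) * c i‖} ⊆
      {ω | ε ≤ |∑ i ∈ s, (c i).re * X i ω|} ∪ {ω | ε ≤ |∑ i ∈ s, (c i).im * X i ω|} := by
    intro ω (hω : 2 * ε ≤ _)
    have h_split := hω.trans (Complex.norm_le_abs_re_add_abs_im _)
    rw [h_re, h_im] at h_split
    rcases le_or_gt ε |∑ i ∈ s, (c i).re * X i ω| with h | h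
    · exact Or.inl h
    · exact Or.inr (show ε ≤ _ by linarith)
  calc μ.real {ω | 2 * ε ≤ ‖∑ i ∈ s, (X i ω : ℂ) * c i‖}
      ≤ 2 * exp (-ε ^ 2 / (4 * R)) + 2 * exp (-ε ^ 2 / (4 * R)) :=
        (measureReal_mono h_sub).trans <| (measureReal_union_le _ _).trans <| add_le_add
          (measureReal_abs_sum_mul_ge_le h_indep h_meas h_bdd h_mean
            (fun i => (Complex.abs_re_le_norm _).trans (hc i)) hR hε hεR)
          (measureReal_abs_sum_mul_ge_le h_indep h_meas h_bdd h_mean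
            (fun i => (Complex.abs_im_le_norm _).trans (hc i)) hR hε hεR)
    _ = 4 * exp (-ε ^ 2 / (4 * R)) := by ring

end Bernstein

section TrigPoly

noncomputable def trigPoly (a : ℕ → ℝ) (N : ℕ) (t : ℝ) : ℂ :=
  ∑ n ∈ Finset.Icc 1 N, (a n : ℂ) * Complex.exp (2 * π * n * t * Complex.I)

lemma cexp_two_pi_mul_I_eq_ofReal (n : ℕ) (t : ℝ) :
    Complex.exp (2 * π * n * t * Complex.I) = Complex.exp ((2 * π * n * t : ℝ) * Complex.I) := by
  push_cast; rfl

lemma norm_cexp_two_pi_mul_I (n : ℕ) (t : ℝ) : ‖Complex.exp (2 * π * n * t * Complex.I)‖ = 1 := by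
  rw [cexp_two_pi_mul_I_eq_ofReal, Complex.norm_exp_ofReal_mul_I]

lemma norm_cexp_mul_I_sub_cexp_mul_I_le (x y : ℝ) :
    ‖Complex.exp (x * Complex.I) - Complex.exp (y * Complex.I)‖ ≤ |x - y| := by
  have h : Complex.exp (x * Complex.I) - Complex.exp (y * Complex.I) =
      Complex.exp (y * Complex.I) * (Complex.exp (Complex.I * (x - y : ℝ)) - 1) := by
    rw [mul_sub, ← Complex.exp_add]; push_cast; ring_nf
  rw [h, norm_mul, Complex.norm_exp_ofReal_mul_I, one_mul]
  exact Real.norm_exp_I_mul_ofReal_sub_one_le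

variable {a : ℕ → ℝ} {N : ℕ}

lemma norm_trigPoly_le (ha : ∀ n, |a n| ≤ 1) (t : ℝ) : ‖trigPoly a N t‖ ≤ N := by
  calc ‖trigPoly a N t‖
      ≤ ∑ n ∈ Finset.Icc 1 N, ‖(a n : ℂ) * Complex.exp (2 * π * n * t * Complex.I)‖ :=
        norm_sum_le _ _
    _ ≤ ∑ n ∈ Finset.Icc 1 N, (1 : ℝ) := Finset.sum_le_sum fun n _ => by
        rw [norm_mul, norm_cexp_two_pi_mul_I, mul_one, Complex.norm_real]; exact ha n
    _ = N := by simp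

lemma norm_trigPoly_sub_le (ha : ∀ n, |a n| ≤ 1) (t s : ℝ) :
    ‖trigPoly a N t - trigPoly a N s‖ ≤ 2 * π * N ^ 2 * |t - s| := by
  calc ‖trigPoly a N t - trigPoly a N s‖
      = ‖∑ n ∈ Finset.Icc 1 N, (a n : ℂ) * (Complex.exp (2 * π * n * t * Complex.I) -
          Complex.exp (2 * π * n * s * Complex.I))‖ := by
        simp only [trigPoly, ← Finset.sum_sub_distrib, mul_sub]
    _ ≤ ∑ n ∈ Finset.Icc 1 N, 2 * π * N * |t - s| := norm_sum_le_of_le _ fun n hn => by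
        have hnN : (n : ℝ) ≤ N := by exact_mod_cast (Finset.mem_Icc.mp hn).2
        rw [norm_mul, Complex.norm_real, cexp_two_pi_mul_I_eq_ofReal, cexp_two_pi_mul_I_eq_ofReal]
        calc ‖a n‖ * ‖Complex.exp ((2 * π * n * t : ℝ) * Complex.I) -
              Complex.exp ((2 * π * n * s : ℝ) * Complex.I)‖
            ≤ 1 * |2 * π * n * t - 2 * π * n * s| :=
              mul_le_mul (ha n) (norm_cexp_mul_I_sub_cexp_mul_I_le _ _) (norm_nonneg _) zero_le_one
          _ = 2 * π * n * |t - s| := by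
              rw [one_mul, ← mul_sub, abs_mul, abs_of_nonneg (by positivity)]
          _ ≤ 2 * π * N * |t - s| := by gcongr
    _ = 2 * π * N ^ 2 * |t - s| := by
        rw [Finset.sum_const, Nat.card_Icc, Nat.add_sub_cancel, nsmul_eq_mul]; ring

lemma exists_mem_range_abs_sub_div_le {t : ℝ} (ht : t ∈ Set.Icc (0 : ℝ) 1) {K : ℕ} (hK : 0 < K) :
    ∃ j ∈ Finset.range (K + 1), |t - j / K| ≤ 1 / K := by
  have hK' : (0 : ℝ) < K := by exact_mod_cast hK
  have htK : 0 ≤ t * K := mul_nonneg ht.1 hK'.le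
  refine ⟨⌊t * K⌋₊, Finset.mem_range_succ_iff.mpr (Nat.floor_le_of_le ?_), ?_⟩
  · nlinarith [ht.2]
  · rw [abs_of_nonneg (sub_nonneg.mpr ((div_le_iff₀ hK').mpr (Nat.floor_le htK))),
      sub_le_iff_le_add, ← add_div, le_div_iff₀ hK']
    linarith [Nat.lt_floor_add_one (t * K)]

lemma norm_trigPoly_le_of_grid (ha : ∀ n, |a n| ≤ 1) (hN : 0 < N) {B : ℝ}
    (hB : ∀ j ∈ Finset.range (N ^ 2 + 1), ‖trigPoly a N (j / N ^ 2)‖ ≤ B)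
    {t : ℝ} (ht : t ∈ Set.Icc (0 : ℝ) 1) : ‖trigPoly a N t‖ ≤ B + 2 * π := by
  obtain ⟨j, hj, htj⟩ := exists_mem_range_abs_sub_div_le ht (pow_pos hN 2)
  push_cast at htj
  have hN2 : (0 : ℝ) < N ^ 2 := by positivity
  calc ‖trigPoly a N t‖
      ≤ ‖trigPoly a N (j / N ^ 2)‖ + ‖trigPoly a N t - trigPoly a N (j / N ^ 2)‖ :=
        norm_le_norm_add_norm_sub' _ _
    _ ≤ B + 2 * π * N ^ 2 * (1 / N ^ 2) :=
        add_le_add (hB j hj) ((norm_trigPoly_sub_le ha _ _).trans (by gcongr))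
    _ = B + 2 * π := by field_simp

end TrigPoly

lemma ae_eventually_notMem_of_summable_measureReal {α : Type*} [MeasurableSpace α]
    {μ : Measure α} [IsFiniteMeasure μ] {s : ℕ → Set α} {f : ℕ → ℝ} (hf : Summable f)
    (hs : ∀ᶠ n in atTop, μ.real (s n) ≤ f n) : ∀ᵐ x ∂μ, ∀ᶠ n in atTop, x ∉ s n := by
  have h_sum : Summable fun n => μ.real (s n) := hf.of_norm_bounded_eventually_nat <|
    hs.mono fun n h => by rwa [Real.norm_of_nonneg measureReal_nonneg]
  refine ae_eventually_notMem ?_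
  rw [tsum_congr fun n => (ofReal_measureReal : ENNReal.ofReal (μ.real (s n)) = μ (s n)).symm,
    ← ENNReal.ofReal_tsum_of_nonneg (fun _ => measureReal_nonneg) h_sum]
  exact ENNReal.ofReal_ne_top

section RandomTrigPoly

variable {Ω : Type*} [MeasurableSpace Ω] {μ : Measure Ω} [IsProbabilityMeasure μ]

lemma measureReal_norm_trigPoly_ge_le {Y : ℕ → Ω → ℝ} (h_indep : iIndepFun Y μ)
    (h_meas : ∀ n, Measurable (Y n)) (h_bdd : ∀ n ω, |Y n ω| ≤ 1) (h_mean : ∀ n, μ[Y n] = 0)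
    {ρ : ℕ → ℝ} (h_var : ∀ n, variance (Y n) μ ≤ ρ n) {N : ℕ} (hN : 2 ≤ N)
    (hR : 9 * log N ≤ ∑ n ∈ Finset.Icc 1 N, ρ n) (t : ℝ) :
    μ.real {ω | 12 * √(log N * ∑ n ∈ Finset.Icc 1 N, ρ n) ≤ ‖trigPoly (fun n => Y n ω) N t‖}
      ≤ 4 * ((N : ℝ) ^ 9)⁻¹ := by
  set R := ∑ n ∈ Finset.Icc 1 N, ρ n
  have h_log : 0 < log N := log_pos (by exact_mod_cast hN)
  have hR0 : 0 < R := by linarith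
  set ε := 6 * √(log N * R)
  have hε : 0 < ε := by positivity
  have hε_sq : ε ^ 2 = 36 * (log N * R) := by rw [mul_pow, sq_sqrt (by positivity)]; norm_num
  have hεR : ε ≤ 2 * R :=
    (pow_le_pow_iff_left₀ hε.le (by positivity) two_ne_zero).mp (by rw [hε_sq]; nlinarith)
  calc μ.real {ω | 12 * √(log N * R) ≤ ‖trigPoly (fun n => Y n ω) N t‖}
      = μ.real {ω | 2 * ε ≤ ‖∑ n ∈ Finset.Icc 1 N,
          (Y n ω : ℂ) * Complex.exp (2 * π * n * t * Complex.I)‖} := by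
        rw [show 2 * ε = 12 * √(log N * R) by ring]; rfl
    _ ≤ 4 * exp (-ε ^ 2 / (4 * R)) :=
        measureReal_norm_sum_mul_ge_le h_indep h_meas h_bdd h_mean
          (fun n => (norm_cexp_two_pi_mul_I n t).le) (Finset.sum_le_sum fun n _ => h_var n) hε hεR
    _ = 4 * ((N : ℝ) ^ 9)⁻¹ := by
        rw [hε_sq, show -(36 * (log N * R)) / (4 * R) = -log ((N : ℝ) ^ 9) by
          rw [log_pow]; field_simp; norm_num, exp_neg, exp_log (by positivity)]

variable {Z : ℕ → ℕ → Ω → ℝ} {ρ : ℕ → ℝ}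

lemma measureReal_biUnion_grid_norm_trigPoly_ge_le (hmeas : ∀ m n, Measurable (Z m n))
    (hbdd : ∀ m n ω, |Z m n ω| ≤ 1) (hmean : ∀ m n, μ[Z m n] = 0)
    (hind : ∀ m, iIndepFun (Z m) μ) (hρvar : ∀ m n, variance (Z m n) μ ≤ ρ n) {N : ℕ}
    (hN : 2 ≤ N) (hR : 9 * log N ≤ ∑ n ∈ Finset.Icc 1 N, ρ n) :
    μ.real (⋃ m ∈ Finset.Icc 1 N, ⋃ j ∈ Finset.range (N ^ 2 + 1),
      {ω | 12 * √(log N * ∑ n ∈ Finset.Icc 1 N, ρ n) ≤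
        ‖trigPoly (fun n => Z m n ω) N (j / N ^ 2)‖}) ≤ 8 * ((N : ℝ) ^ 6)⁻¹ := by
  have hN1 : (1 : ℝ) ≤ N := by exact_mod_cast one_le_two.trans hN
  calc _ ≤ ∑ m ∈ Finset.Icc 1 N, ∑ j ∈ Finset.range (N ^ 2 + 1), 4 * ((N : ℝ) ^ 9)⁻¹ :=
        (measureReal_biUnion_finset_le _ _).trans <| Finset.sum_le_sum fun m _ =>
          (measureReal_biUnion_finset_le _ _).trans <| Finset.sum_le_sum fun j _ =>
            measureReal_norm_trigPoly_ge_le (hind m) (hmeas m) (hbdd m) (hmean m) (hρvar m) hN hR _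
    _ = N * (N ^ 2 + 1) * 4 * ((N : ℝ) ^ 9)⁻¹ := by
        rw [Finset.sum_const, Finset.sum_const, Finset.card_range, Nat.card_Icc,
          Nat.add_sub_cancel, nsmul_eq_mul, nsmul_eq_mul]
        push_cast; ring
    _ ≤ N * (2 * N ^ 2) * 4 * ((N : ℝ) ^ 9)⁻¹ := by gcongr; nlinarith
    _ = 8 * ((N : ℝ) ^ 6)⁻¹ := by field_simp; ring

theorem ae_eventually_norm_trigPoly_le (hmeas : ∀ m n, Measurable (Z m n))
    (hbdd : ∀ m n ω, |Z m n ω| ≤ 1) (hmean : ∀ m n, μ[Z m n] = 0)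
    (hind : ∀ m, iIndepFun (Z m) μ) (hρvar : ∀ m n, variance (Z m n) μ ≤ ρ n)
    (hρdiv : Tendsto (fun N : ℕ => (log N)⁻¹ * ∑ n ∈ Finset.Icc 1 N, ρ n) atTop atTop) :
    ∀ᵐ ω ∂μ, ∀ᶠ N in atTop, ∀ m ∈ Finset.Icc 1 N, ∀ t ∈ Set.Icc (0 : ℝ) 1,
      ‖trigPoly (fun n => Z m n ω) N t‖ ≤
        12 * √(log N * ∑ n ∈ Finset.Icc 1 N, ρ n) + 2 * π := by
  have h_large : ∀ᶠ N : ℕ in atTop, 2 ≤ N ∧ 9 * log N ≤ ∑ n ∈ Finset.Icc 1 N, ρ n := by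
    filter_upwards [eventually_ge_atTop 2, hρdiv.eventually_ge_atTop 9] with N hN h9
    have h_log : 0 < log N := log_pos (by exact_mod_cast hN)
    exact ⟨hN, mul_comm (log N) 9 ▸ (le_inv_mul_iff₀ h_log).mp h9⟩
  have h_bc := ae_eventually_notMem_of_summable_measureReal
    ((summable_nat_pow_inv.mpr (by norm_num : 1 < 6)).mul_left 8)
    (h_large.mono fun N hN => measureReal_biUnion_grid_norm_trigPoly_ge_le
      (μ := μ) hmeas hbdd hmean hind hρvar hN.1 hN.2)
  filter_upwards [h_bc] with ω hω
  filter_upwards [hω, eventually_ge_atTop 1] with N hN hN1 m hm t ht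
  simp only [Set.mem_iUnion, not_exists] at hN
  exact norm_trigPoly_le_of_grid (fun n => hbdd m n ω) hN1
    (fun j hj => (not_le.mp (hN m hm j hj)).le) ht

end RandomTrigPoly

/-- Chernoff-type sup-norm bound for random trigonometric polynomials: almost surely
`max_{1≤m≤N} max_{t∈[0,1]} |∑_{n=1}^N Z_{m,n} e(nt)| ≤ C(ω) √(log N · ∑_{n≤N} ρ_n)`. -/
theorem sup_norm_random_trig_poly
    {Ω : Type*} [MeasurableSpace Ω] (μ : Measure Ω) [IsProbabilityMeasure μ]
    (Z : ℕ → ℕ → Ω → ℝ) (hmeas : ∀ m n, Measurable (Z m n))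
    (hbdd : ∀ m n ω, |Z m n ω| ≤ 1) (hmean : ∀ m n, ∫ ω, Z m n ω ∂μ = 0)
    (hind : ∀ m, iIndepFun (Z m) μ)
    (ρ : ℕ → ℝ) (hρpos : ∀ n, 0 < ρ n)
    (hρvar : ∀ m n, variance (Z m n) μ ≤ ρ n)
    (hρdiv : Tendsto (fun N : ℕ => (Real.log N)⁻¹ * ∑ n ∈ Finset.Icc 1 N, ρ n) atTop atTop) :
    ∀ᵐ ω ∂μ, ∃ C : ℝ, ∀ N : ℕ, 2 ≤ N → ∀ m ∈ Finset.Icc 1 N, ∀ t ∈ Set.Icc (0 : ℝ) 1,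
      ‖∑ n ∈ Finset.Icc 1 N, (Z m n ω : ℂ) * Complex.exp (2 * π * n * t * Complex.I)‖ ≤
        C * Real.sqrt (Real.log N * ∑ n ∈ Finset.Icc 1 N, ρ n) := by
  set c := √(log 2 * ρ 1)
  have hc : 0 < c := sqrt_pos.mpr (mul_pos (log_pos one_lt_two) (hρpos 1))
  have hc_le : ∀ N : ℕ, 2 ≤ N → c ≤ √(log N * ∑ n ∈ Finset.Icc 1 N, ρ n) := fun N hN =>
    sqrt_le_sqrt <| mul_le_mul (log_le_log two_pos (by exact_mod_cast hN))
      (Finset.single_le_sum (fun n _ => (hρpos n).le)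
        (Finset.mem_Icc.mpr ⟨le_rfl, one_le_two.trans hN⟩)) (hρpos 1).le
      (log_nonneg (by exact_mod_cast one_le_two.trans hN))
  filter_upwards [ae_eventually_norm_trigPoly_le hmeas hbdd hmean hind hρvar hρdiv] with ω hω
  obtain ⟨N₁, hN₁⟩ := eventually_atTop.mp hω
  refine ⟨max (12 + 2 * π / c) (N₁ / c), fun N hN m hm t ht => ?_⟩
  change ‖trigPoly (fun n => Z m n ω) N t‖ ≤ _
  have hcN := hc_le N hN
  rcases le_or_gt N₁ N with hN₁N | hNN₁
  · calc ‖trigPoly (fun n => Z m n ω) N t‖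
        ≤ 12 * √(log N * ∑ n ∈ Finset.Icc 1 N, ρ n) + 2 * π := hN₁ N hN₁N m hm t ht
      _ ≤ (12 + 2 * π / c) * √(log N * ∑ n ∈ Finset.Icc 1 N, ρ n) := by
        rw [add_mul]
        exact add_le_add_right (by rw [div_mul_eq_mul_div, le_div_iff₀ hc]; gcongr) _
      _ ≤ _ := by gcongr; exact le_max_left _ _
  · calc ‖trigPoly (fun n => Z m n ω) N t‖ ≤ N := norm_trigPoly_le (fun n => hbdd m n ω) t
      _ ≤ N₁ / c * c := by rw [div_mul_cancel₀ _ hc.ne']; exact_mod_cast hNN₁.le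
      _ ≤ _ := mul_le_mul (le_max_right _ _) hcN hc.le (by positivity)
end

section
/- Let (X,𝒳,μ) be a probability space, f ∈ L^∞(μ) a non-negative function, and 𝒳₁, 𝒳₂ sub-σ-algebras of 𝒳. Then ∫ f · E(f|𝒳₁) · E(f|𝒳₂) dμ ≥ (∫ f dμ)³. -/
open MeasureTheory
open scoped ENNReal

/-!
Put `g = E(f|𝒳₁)` and `h = √g`. Then `∫ f = ∫ h²` and `∫ f h = ∫ h g = ∫ h³`, and the
moment inequality `(∫ h²)³ ≤ (∫ h³)²` (two applications of Cauchy–Schwarz) reduces the claim to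
`(∫ f h)² ≤ ∫ f g E(f|𝒳₂)`. This follows from Jensen and the conditional Cauchy–Schwarz inequality
`E(f h|𝒳₂)² ≤ E(f|𝒳₂) E(f h²|𝒳₂)`, integrated against `μ`, since `f h² = f g`.
-/

theorem sq_le_mul_of_forall_rat_quadratic_nonneg {a b c : ℝ}
    (h : ∀ q : ℚ, 0 ≤ a * q ^ 2 - 2 * b * q + c) : b ^ 2 ≤ a * c := by
  have hreal : ∀ t : ℝ, 0 ≤ a * (t * t) + (-2 * b) * t + c := fun t =>
    Rat.denseRange_cast.induction_on t (isClosed_le continuous_const (by fun_prop))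
      fun q => by linarith [h q, sq (q : ℝ)]
  have := discrim_le_zero hreal
  rw [discrim] at this
  linarith

section

variable {Ω : Type*} {m m₀ : MeasurableSpace Ω} {μ : Measure Ω} {w u : Ω → ℝ}

theorem MeasureTheory.MemLp.sqrt (hu : MemLp u ∞ μ) : MemLp (fun x => √(u x)) ∞ μ := by
  have hbound : MemLp (fun x => 1 + ‖u x‖) ∞ μ := (memLp_top_const (1 : ℝ)).add hu.norm
  refine hbound.of_le (Real.continuous_sqrt.comp_aestronglyMeasurable hu.aestronglyMeasurable)
    (ae_of_all _ fun x => ?_)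
  rw [Real.norm_of_nonneg (Real.sqrt_nonneg _), Real.norm_of_nonneg (by positivity),
    Real.norm_eq_abs, Real.sqrt_le_iff]
  exact ⟨by positivity, by nlinarith [le_abs_self (u x), abs_nonneg (u x)]⟩

theorem sq_integral_mul_le_integral_mul_integral_mul_sq (hw : 0 ≤ᵐ[μ] w)
    (hw_int : Integrable w μ) (hwu : Integrable (fun x => w x * u x) μ)
    (hwu2 : Integrable (fun x => w x * u x ^ 2) μ) :
    (∫ x, w x * u x ∂μ) ^ 2 ≤ (∫ x, w x ∂μ) * ∫ x, w x * u x ^ 2 ∂μ := by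
  refine sq_le_mul_of_forall_rat_quadratic_nonneg fun q => ?_
  have hexpand : ∫ x, w x * (u x - q) ^ 2 ∂μ =
      (∫ x, w x ∂μ) * q ^ 2 - 2 * (∫ x, w x * u x ∂μ) * q + ∫ x, w x * u x ^ 2 ∂μ := by
    have hpt : ∀ x, w x * (u x - q) ^ 2 = w x * q ^ 2 - 2 * q * (w x * u x) + w x * u x ^ 2 :=
      fun x => by ring
    have hw_q : Integrable (fun x => w x * q ^ 2) μ := hw_int.mul_const _
    have hwu_q : Integrable (fun x => 2 * q * (w x * u x)) μ := hwu.const_mul _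
    have hdiff : Integrable (fun x => w x * q ^ 2 - 2 * q * (w x * u x)) μ := hw_q.sub hwu_q
    simp_rw [hpt]
    rw [integral_add hdiff hwu2, integral_sub hw_q hwu_q, integral_mul_const, integral_const_mul]
    ring
  rw [← hexpand]
  exact integral_nonneg_of_ae (hw.mono fun x hx => mul_nonneg hx (sq_nonneg _))

theorem condExp_mul_sq_le (hw : 0 ≤ᵐ[μ] w)
    (hw_int : Integrable w μ) (hwu : Integrable (fun x => w x * u x) μ)
    (hwu2 : Integrable (fun x => w x * u x ^ 2) μ) :
    ∀ᵐ x ∂μ, (μ[fun x => w x * u x|m] x) ^ 2 ≤ μ[w|m] x * μ[fun x => w x * u x ^ 2|m] x := by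
  -- rational `q` only, so that the exceptional null sets form a countable family
  have hquad : ∀ q : ℚ, ∀ᵐ x ∂μ, 0 ≤ μ[w|m] x * q ^ 2 - 2 * μ[fun x => w x * u x|m] x * q +
      μ[fun x => w x * u x ^ 2|m] x := by
    intro q
    have hpt : (fun x => w x * (u x - q) ^ 2) =
        ((q : ℝ) ^ 2 • w - (2 * q : ℝ) • fun x => w x * u x) + fun x => w x * u x ^ 2 := by
      ext x; simp only [Pi.add_apply, Pi.sub_apply, Pi.smul_apply, smul_eq_mul]; ring
    have hnonneg : 0 ≤ᵐ[μ] μ[fun x => w x * (u x - q) ^ 2|m] :=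
      condExp_nonneg (hw.mono fun x hx => mul_nonneg hx (sq_nonneg _))
    rw [hpt] at hnonneg
    have hw_q := hw_int.smul ((q : ℝ) ^ 2)
    have hwu_q := hwu.smul (2 * q : ℝ)
    filter_upwards [hnonneg, condExp_add (hw_q.sub hwu_q) hwu2 m, condExp_sub hw_q hwu_q m,
      condExp_smul ((q : ℝ) ^ 2) w m, condExp_smul (2 * q : ℝ) (fun x => w x * u x) m]
      with x h0 h1 h2 h3 h4
    simp only [Pi.add_apply, Pi.sub_apply, Pi.smul_apply, smul_eq_mul, Pi.zero_apply]
      at h0 h1 h2 h3 h4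
    linarith
  filter_upwards [ae_all_iff.2 hquad] with x hx
  exact sq_le_mul_of_forall_rat_quadratic_nonneg hx

theorem integral_mul_condExp (hm : m ≤ m₀) [SigmaFinite (μ.trim hm)] {g f : Ω → ℝ}
    (hg : AEStronglyMeasurable[m] g μ) (hgf : Integrable (fun x => g x * f x) μ)
    (hf : Integrable f μ) : ∫ x, g x * μ[f|m] x ∂μ = ∫ x, g x * f x ∂μ :=
  calc ∫ x, g x * μ[f|m] x ∂μ = ∫ x, μ[fun x => g x * f x|m] x ∂μ :=
        integral_congr_ae (condExp_mul_of_aestronglyMeasurable_left hg hgf hf).symm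
    _ = ∫ x, g x * f x ∂μ := integral_condExp hm

theorem sq_integral_le_integral_sq [IsProbabilityMeasure μ] (hu : MemLp u 2 μ) :
    (∫ x, u x ∂μ) ^ 2 ≤ ∫ x, u x ^ 2 ∂μ :=
  sub_nonneg.mp (ProbabilityTheory.variance_eq_sub hu ▸ ProbabilityTheory.variance_nonneg u μ)

theorem integral_sq_pow_three_le_sq_integral_pow_three [IsProbabilityMeasure μ]
    (hu0 : 0 ≤ᵐ[μ] u) (hu : MemLp u ∞ μ) :
    (∫ x, u x ^ 2 ∂μ) ^ 3 ≤ (∫ x, u x ^ 3 ∂μ) ^ 2 := by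
  have hu2 : MemLp (fun x => u x ^ 2) ∞ μ := by simpa only [sq] using hu.mul' hu
  have hu3 : MemLp (fun x => u x ^ 3) ∞ μ := by simpa only [pow_succ] using hu.mul' hu2
  have hmix : (∫ x, u x ^ 2 ∂μ) ^ 2 ≤ (∫ x, u x ∂μ) * ∫ x, u x ^ 3 ∂μ := by
    have := sq_integral_mul_le_integral_mul_integral_mul_sq hu0 (hu.integrable le_top)
      (by simpa only [sq] using hu2.integrable le_top)
      (by simpa only [pow_succ'] using hu3.integrable le_top)
    simpa only [← sq, ← pow_succ'] using this
  have hjensen := sq_integral_le_integral_sq (hu.mono_exponent le_top)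
  have hs : 0 ≤ ∫ x, u x ^ 2 ∂μ := integral_nonneg fun x => sq_nonneg _
  rcases hs.eq_or_lt with hs0 | hs_pos
  · rw [← hs0, zero_pow three_ne_zero]; positivity
  refine le_of_mul_le_mul_left ?_ hs_pos
  calc (∫ x, u x ^ 2 ∂μ) * (∫ x, u x ^ 2 ∂μ) ^ 3 = ((∫ x, u x ^ 2 ∂μ) ^ 2) ^ 2 := by ring
    _ ≤ ((∫ x, u x ∂μ) * ∫ x, u x ^ 3 ∂μ) ^ 2 := pow_le_pow_left₀ (sq_nonneg _) hmix 2
    _ = (∫ x, u x ∂μ) ^ 2 * (∫ x, u x ^ 3 ∂μ) ^ 2 := by ring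
    _ ≤ (∫ x, u x ^ 2 ∂μ) * (∫ x, u x ^ 3 ∂μ) ^ 2 :=
      mul_le_mul_of_nonneg_right hjensen (sq_nonneg _)

theorem sq_integral_mul_le_integral_mul_sq_mul_condExp [IsProbabilityMeasure μ] (hm : m ≤ m₀)
    (hw0 : 0 ≤ᵐ[μ] w) (hw : MemLp w ∞ μ) (hu : MemLp u ∞ μ) :
    (∫ x, w x * u x ∂μ) ^ 2 ≤ ∫ x, w x * u x ^ 2 * μ[w|m] x ∂μ := by
  have hwu : MemLp (fun x => w x * u x) ∞ μ := hu.mul' hw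
  have hwu2 : MemLp (fun x => w x * u x ^ 2) ∞ μ := by
    simpa only [sq, mul_assoc] using hu.mul' hwu
  have hB := hwu.condExp (m := m) le_top
  have hB2 : MemLp (fun x => μ[fun x => w x * u x|m] x ^ 2) ∞ μ := by
    simpa only [sq] using hB.mul' hB
  have hprod : MemLp (fun x => μ[w|m] x * μ[fun x => w x * u x ^ 2|m] x) ∞ μ :=
    (hwu2.condExp le_top).mul' (hw.condExp le_top)
  calc (∫ x, w x * u x ∂μ) ^ 2 = (∫ x, μ[fun x => w x * u x|m] x ∂μ) ^ 2 := by
        rw [integral_condExp hm]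
    _ ≤ ∫ x, μ[fun x => w x * u x|m] x ^ 2 ∂μ :=
      sq_integral_le_integral_sq (hB.mono_exponent le_top)
    _ ≤ ∫ x, μ[w|m] x * μ[fun x => w x * u x ^ 2|m] x ∂μ :=
      integral_mono_ae (hB2.integrable le_top) (hprod.integrable le_top)
        (condExp_mul_sq_le hw0 (hw.integrable le_top) (hwu.integrable le_top)
          (hwu2.integrable le_top))
    _ = ∫ x, μ[w|m] x * (w x * u x ^ 2) ∂μ :=
      integral_mul_condExp hm stronglyMeasurable_condExp.aestronglyMeasurable
        ((hwu2.mul' (hw.condExp le_top)).integrable le_top) (hwu2.integrable le_top)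
    _ = ∫ x, w x * u x ^ 2 * μ[w|m] x ∂μ := by simp_rw [mul_comm (μ[w|m] _)]

end

/-- Chu's triple-product conditional expectation inequality:
for bounded non-negative `f` and sub-σ-algebras `m₁, m₂`,
`∫ f · E(f|m₁) · E(f|m₂) dμ ≥ (∫ f dμ)³`. -/
theorem triple_product_condexp_inequality
    {X : Type*} {m m₁ m₂ : MeasurableSpace X} (hm₁ : m₁ ≤ m) (hm₂ : m₂ ≤ m)
    (μ : @Measure X m) [IsProbabilityMeasure μ]
    (f : X → ℝ) (hfmeas : Measurable[m] f) (hfpos : ∀ x, 0 ≤ f x)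
    (C : ℝ) (hfbdd : ∀ x, f x ≤ C) :
    (∫ x, f x ∂μ) ^ 3 ≤ ∫ x, f x * (μ[f|m₁]) x * (μ[f|m₂]) x ∂μ := by
  have hf : MemLp f ∞ μ := memLp_top_of_bound hfmeas.aestronglyMeasurable C
    (ae_of_all _ fun x => (Real.norm_of_nonneg (hfpos x)).trans_le (hfbdd x))
  set h : X → ℝ := fun x => √(μ[f|m₁] x)
  have hh : MemLp h ∞ μ := (hf.condExp (m := m₁) le_top).sqrt
  have hh_sq : ∀ᵐ x ∂μ, h x ^ 2 = μ[f|m₁] x :=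
    (condExp_nonneg (ae_of_all _ hfpos)).mono fun x hx => Real.sq_sqrt hx
  have hh_meas : StronglyMeasurable[m₁] h :=
    Real.continuous_sqrt.comp_stronglyMeasurable stronglyMeasurable_condExp
  calc (∫ x, f x ∂μ) ^ 3 = (∫ x, h x ^ 2 ∂μ) ^ 3 := by
        rw [integral_congr_ae hh_sq, integral_condExp hm₁]
    _ ≤ (∫ x, h x ^ 3 ∂μ) ^ 2 :=
      integral_sq_pow_three_le_sq_integral_pow_three (ae_of_all _ fun _ => Real.sqrt_nonneg _) hh
    _ = (∫ x, h x * μ[f|m₁] x ∂μ) ^ 2 := by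
      refine congrArg (· ^ 2) (integral_congr_ae (hh_sq.mono fun x hx => ?_))
      dsimp only
      rw [← hx]; ring
    _ = (∫ x, f x * h x ∂μ) ^ 2 := by
      rw [integral_mul_condExp hm₁ hh_meas.aestronglyMeasurable
        ((hf.mul' hh).integrable le_top) (hf.integrable le_top)]
      simp_rw [mul_comm (h _)]
    _ ≤ ∫ x, f x * h x ^ 2 * μ[f|m₂] x ∂μ :=
      sq_integral_mul_le_integral_mul_sq_mul_condExp hm₂ (ae_of_all _ hfpos) hf hh
    _ = ∫ x, f x * μ[f|m₁] x * μ[f|m₂] x ∂μ :=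
      integral_congr_ae (hh_sq.mono fun x hx => by simp only [hx])
end

section
/- Let X = {0,1}^ℤ with the (1/2,1/2) Bernoulli measure μ and shift T, i.e. (Tx)_n = x_{n+1}. Let π be a permutation of ℤ with π(0) = 0, define ψ_π : X → X by (ψ_π x)_0 = x_0 and (ψ_π x)_n = 1 − x_{π(n)} for n ≠ 0, and set S = ψ_π^{−1} ∘ T ∘ ψ_π. Then ψ_π is measure preserving, S is measure preserving, and for every n ∈ ℤ with n ≠ 0 and every x ∈ X, (S^n x)_0 = 1 − x_{π(n)}. -/
open MeasureTheory

namespace BerendAux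

/-- Cylinder sets in `{0,1}^ℤ`. -/
def Cyl : Set (Set (ℤ → Bool)) :=
  {A | ∃ (s : Finset ℤ) (f : ℤ → Bool), A = {x | ∀ i ∈ s, x i = f i}}

lemma isPiSystem_Cyl : IsPiSystem Cyl := by
  rintro A ⟨s, f, rfl⟩ B ⟨t, g, rfl⟩ ⟨y, hyA, hyB⟩
  refine ⟨s ∪ t, y, ?_⟩
  ext x
  simp only [Set.mem_inter_iff, Set.mem_setOf_eq, Finset.mem_union]
  constructor
  · rintro ⟨h1, h2⟩ i (hi | hi)
    · exact (h1 i hi).trans (hyA i hi).symm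
    · exact (h2 i hi).trans (hyB i hi).symm
  · intro h
    exact ⟨fun i hi => (h i (Or.inl hi)).trans (hyA i hi),
           fun i hi => (h i (Or.inr hi)).trans (hyB i hi)⟩

lemma measurableSet_cyl (s : Finset ℤ) (f : ℤ → Bool) :
    MeasurableSet {x : ℤ → Bool | ∀ i ∈ s, x i = f i} := by
  have : {x : ℤ → Bool | ∀ i ∈ s, x i = f i}
      = ⋂ i ∈ (s : Set ℤ), {x : ℤ → Bool | x i = f i} := by
    ext x; simp
  rw [this]
  refine MeasurableSet.biInter s.countable_toSet fun i _ => ?_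
  have : {x : ℤ → Bool | x i = f i} = (fun x : ℤ → Bool => x i) ⁻¹' {f i} := by
    ext x; simp
  rw [this]
  exact (measurable_pi_apply i) (measurableSet_singleton (f i))

lemma gen_Cyl :
    (MeasurableSpace.pi : MeasurableSpace (ℤ → Bool))
      = MeasurableSpace.generateFrom Cyl := by
  apply le_antisymm
  · refine iSup_le fun i => Measurable.comap_le ?_
    refine @measurable_to_countable' Bool (ℤ → Bool) _ _
      (MeasurableSpace.generateFrom Cyl) _ fun b => ?_
    refine MeasurableSpace.measurableSet_generateFrom ⟨{i}, fun _ => b, ?_⟩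
    ext x; simp
  · refine MeasurableSpace.generateFrom_le ?_
    rintro A ⟨s, f, rfl⟩
    exact measurableSet_cyl s f

/-- A measurable map whose cylinder preimages all have the right measure is
measure preserving. -/
lemma mp_of_cyl (μ : Measure (ℤ → Bool)) [IsProbabilityMeasure μ]
    (hμ : ∀ (s : Finset ℤ) (f : ℤ → Bool),
      μ {x | ∀ i ∈ s, x i = f i} = (1 / 2) ^ s.card)
    (g : (ℤ → Bool) → (ℤ → Bool)) (hg : Measurable g)
    (h : ∀ (s : Finset ℤ) (f : ℤ → Bool),
      μ (g ⁻¹' {x | ∀ i ∈ s, x i = f i}) = (1 / 2) ^ s.card) :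
    MeasurePreserving g μ μ := by
  refine ⟨hg, ?_⟩
  have : IsProbabilityMeasure (μ.map g) :=
    Measure.isProbabilityMeasure_map hg.aemeasurable
  refine ext_of_generate_finite Cyl gen_Cyl isPiSystem_Cyl ?_ (by simp)
  rintro A ⟨s, f, rfl⟩
  rw [Measure.map_apply hg (measurableSet_cyl s f), h s f, hμ s f]

end BerendAux

open BerendAux in
/-- Berend's conjugation construction: on `X = {0,1}^ℤ` with the `(1/2,1/2)` Bernoulli
measure and shift `T`, for a permutation `π` of `ℤ` fixing `0`, the map `ψ_π` (with
`(ψ_π x)_0 = x_0`, `(ψ_π x)_n = 1 - x_{π(n)}` for `n ≠ 0`) is measure preserving, the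
conjugate `S = ψ_π⁻¹ ∘ T ∘ ψ_π` is measure preserving, and `(Sⁿ x)_0 = 1 - x_{π(n)}`
for every `n ≠ 0`. -/
theorem berend_conjugation
    (μ : Measure (ℤ → Bool)) [IsProbabilityMeasure μ]
    (hμ : ∀ (s : Finset ℤ) (f : ℤ → Bool),
      μ {x | ∀ i ∈ s, x i = f i} = (1 / 2) ^ s.card)
    (T : (ℤ → Bool) → (ℤ → Bool)) (hT : ∀ x n, T x n = x (n + 1))
    (π : Equiv.Perm ℤ) (hπ0 : π 0 = 0)
    (ψ : (ℤ → Bool) → (ℤ → Bool))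
    (hψ0 : ∀ x, ψ x 0 = x 0) (hψ : ∀ x (n : ℤ), n ≠ 0 → ψ x n = !(x (π n)))
    (S : (ℤ → Bool) → (ℤ → Bool)) (hS : ∀ x, ψ (S x) = T (ψ x)) :
    MeasurePreserving ψ μ μ ∧ MeasurePreserving S μ μ ∧
      ∀ (n : ℕ), n ≠ 0 → ∀ x, (S^[n] x) 0 = !(x (π (n : ℤ))) := by
  have hπsymm0 : π.symm 0 = 0 := π.symm_apply_eq.mpr hπ0.symm
  -- π n ≠ 0 for n ≠ 0, same for π.symm
  have hπne : ∀ n : ℤ, n ≠ 0 → π n ≠ 0 := fun n hn h =>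
    hn (π.injective (h.trans hπ0.symm))
  have hπsne : ∀ n : ℤ, n ≠ 0 → π.symm n ≠ 0 := fun n hn h =>
    hn (π.symm.injective (h.trans hπsymm0.symm))
  -- explicit forms
  have hψeq : ψ = fun x i => if i = 0 then x 0 else !(x (π i)) := by
    funext x i
    split_ifs with hi
    · subst hi; exact hψ0 x
    · exact hψ x i hi
  set φ : (ℤ → Bool) → (ℤ → Bool) :=
    fun y i => if i = 0 then y 0 else !(y (π.symm i)) with hφdef
  have hφψ : ∀ x, φ (ψ x) = x := by
    intro x; funext i
    by_cases hi : i = 0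
    · subst hi; simp only [hφdef, if_pos, hψ0]
    · simp only [hφdef, hi, if_neg hi]
      rw [hψ x (π.symm i) (hπsne i hi), Equiv.apply_symm_apply, Bool.not_not]
  have hψφ : ∀ y, ψ (φ y) = y := by
    intro y; funext i
    by_cases hi : i = 0
    · subst hi; rw [hψ0]; simp only [hφdef, if_pos]
    · rw [hψ (φ y) i hi]
      simp only [hφdef, hπne i hi, if_neg (hπne i hi), Bool.not_not,
        Equiv.symm_apply_apply]
  have hTeq : T = fun x n => x (n + 1) := by funext x n; exact hT x n
  -- measurability
  have hψm : Measurable ψ := by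
    rw [hψeq]
    refine measurable_pi_lambda _ fun i => ?_
    by_cases hi : i = 0
    · subst hi; simpa using measurable_pi_apply (0 : ℤ)
    · simp only [if_neg hi]
      exact (measurable_of_countable not).comp (measurable_pi_apply (π i))
  have hφm : Measurable φ := by
    rw [hφdef]
    refine measurable_pi_lambda _ fun i => ?_
    by_cases hi : i = 0
    · subst hi; simpa using measurable_pi_apply (0 : ℤ)
    · simp only [if_neg hi]
      exact (measurable_of_countable not).comp (measurable_pi_apply (π.symm i))
  have hTm : Measurable T := by
    rw [hTeq]
    exact measurable_pi_lambda _ fun n => measurable_pi_apply (n + 1)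
  -- cylinder preimage computation for ψ-type maps
  have key : ∀ (σ : Equiv.Perm ℤ), σ 0 = 0 →
      ∀ (s : Finset ℤ) (f : ℤ → Bool),
      (fun (x : ℤ → Bool) (i : ℤ) => if i = 0 then x 0 else !(x (σ i))) ⁻¹'
          {x : ℤ → Bool | ∀ i ∈ s, x i = f i}
        = {y | ∀ j ∈ s.image σ, y j =
            (if j = 0 then f 0 else !(f (σ.symm j)))} := by
    intro σ hσ0 s f
    have hσne : ∀ n : ℤ, n ≠ 0 → σ n ≠ 0 := fun n hn h =>
      hn (σ.injective (h.trans hσ0.symm))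
    ext y
    simp only [Set.mem_preimage, Set.mem_setOf_eq, Finset.mem_image]
    constructor
    · rintro h j ⟨i, hi, rfl⟩
      by_cases hi0 : i = 0
      · subst hi0
        have := h 0 hi
        simpa [hσ0] using this
      · have := h i hi
        rw [if_neg hi0] at this
        rw [if_neg (hσne i hi0), Equiv.symm_apply_apply, ← this, Bool.not_not]
    · intro h i hi
      by_cases hi0 : i = 0
      · subst hi0
        have := h (σ 0) ⟨0, hi, rfl⟩
        simpa [hσ0] using this
      · have := h (σ i) ⟨i, hi, rfl⟩
        rw [if_neg (hσne i hi0), Equiv.symm_apply_apply] at this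
        rw [if_neg hi0, this, Bool.not_not]
  -- measure preservation of ψ and φ
  have hψmp : MeasurePreserving ψ μ μ := by
    refine mp_of_cyl μ hμ ψ hψm ?_
    intro s f
    rw [hψeq, key π hπ0 s f, hμ, Finset.card_image_of_injective _ π.injective]
  have hφmp : MeasurePreserving φ μ μ := by
    refine mp_of_cyl μ hμ φ hφm ?_
    intro s f
    rw [hφdef, key π.symm hπsymm0 s f, hμ,
      Finset.card_image_of_injective _ π.symm.injective]
  -- measure preservation of T
  have hTmp : MeasurePreserving T μ μ := by
    refine mp_of_cyl μ hμ T hTm ?_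
    intro s f
    have : T ⁻¹' {x | ∀ i ∈ s, x i = f i}
        = {y | ∀ j ∈ s.image (· + 1), y j = f (j - 1)} := by
      ext y
      simp only [Set.mem_preimage, Set.mem_setOf_eq, Finset.mem_image, hTeq]
      constructor
      · rintro h j ⟨i, hi, rfl⟩
        simpa using h i hi
      · intro h i hi
        simpa using h (i + 1) ⟨i, hi, rfl⟩
    rw [this, hμ, Finset.card_image_of_injective _ (add_left_injective 1)]
  -- S = φ ∘ T ∘ ψ
  have hSeq : S = φ ∘ T ∘ ψ := by
    funext x
    have := congrArg φ (hS x)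
    rwa [hφψ] at this
  have hSmp : MeasurePreserving S μ μ := by
    rw [hSeq]
    exact (hφmp.comp hTmp).comp hψmp
  refine ⟨hψmp, hSmp, ?_⟩
  -- iterate formula
  have hTiter : ∀ (n : ℕ) (y : ℤ → Bool) (m : ℤ), (T^[n] y) m = y (m + n) := by
    intro n
    induction n with
    | zero => intro y m; simp
    | succ k ih =>
      intro y m
      rw [Function.iterate_succ_apply, ih (T y) m, hT]
      push_cast; ring_nf
  have hSiter : ∀ (n : ℕ) (x : ℤ → Bool), ψ (S^[n] x) = T^[n] (ψ x) := by
    intro n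
    induction n with
    | zero => intro x; simp
    | succ k ih =>
      intro x
      rw [Function.iterate_succ_apply, Function.iterate_succ_apply, ih (S x), hS]
  intro n hn x
  have h0 : ((n : ℤ)) ≠ 0 := Int.natCast_ne_zero.mpr hn
  have := congrFun (hSiter n x) 0
  rw [hψ0] at this
  rw [this, hTiter n (ψ x) 0, zero_add, hψ x n h0]
end

section
/- Let a, b : ℕ → ℤ∖{0} be injective sequences and F ⊆ ℕ any subset. Then there exist a probability space (X,𝒳,μ), measure preserving transformations T, S : X → X, each measurably isomorphic to a Bernoulli shift, and a set A ∈ 𝒳 with μ(A) = 1/2, such that μ(T^{−a(n)}A ∩ S^{−b(n)}A) = 0 for every n ∈ F and μ(T^{−a(n)}A ∩ S^{−b(n)}A) = 1/4 for every n ∉ F. -/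
/-!
Let `X = {0,1}^(ℤ × {0,1})` carry the fair coin measure, let `T` be the shift in the
`ℤ`-coordinate (a Bernoulli shift on the four symbols `{0,1}²`), `A = {x | x (0,0) = 1}`, and
`S = ψ⁻¹ T ψ`, where `ψ` keeps the coordinate `0` and `(ψ x) q = 1 - x (π q)` for `q ≠ 0`,
for a permutation `π` of `ℤ × {0,1}` fixing `0`. Being conjugate to `T`, `S` is Bernoulli, and
`T^{-a} A = {x | x (a,0) = 1}`, `S^{-b} A = {x | x (π (b,0)) = 0}` for `b ≠ 0`. So
`T^{-a} A ∩ S^{-b} A` is empty if `π (b,0) = (a,0)`, and has measure `1/4` otherwise by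
independence of the coordinates. Since `a` and `b` only use the column `ℤ × {0}`, there is room
to choose `π` with `π (b n, 0) = (a n, 0)` exactly for `n ∈ F`.
-/

open MeasureTheory

/-- A measure preserving transformation is *Bernoulli* if the system it generates is
measurably isomorphic (mod 0) to a Bernoulli shift on finitely many symbols. -/
def IsBernoulli {X : Type*} [MeasurableSpace X] (μ : Measure X) (T : X → X) : Prop :=
  ∃ (k : ℕ), 0 < k ∧ ∃ (p : Fin k → ℝ), (∀ i, 0 ≤ p i) ∧ (∑ i, p i = 1) ∧
    ∃ (ν : Measure (ℤ → Fin k)), IsProbabilityMeasure ν ∧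
      (∀ (s : Finset ℤ) (f : ℤ → Fin k),
        ν {x | ∀ i ∈ s, x i = f i} = ENNReal.ofReal (∏ i ∈ s, p (f i))) ∧
      ∃ (Φ : X → (ℤ → Fin k)) (Ψ : (ℤ → Fin k) → X),
        MeasurePreserving Φ μ ν ∧ MeasurePreserving Ψ ν μ ∧
        (∀ᵐ x ∂μ, Ψ (Φ x) = x) ∧ (∀ᵐ y ∂ν, Φ (Ψ y) = y) ∧
        (∀ᵐ x ∂μ, Φ (T x) = fun i => Φ x (i + 1))

open Function ProbabilityTheory

theorem IsBernoulli.of_semiconj {X Y : Type*} [MeasurableSpace X] [MeasurableSpace Y]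
    {μ : Measure X} {ν : Measure Y} {T : X → X} {T' : Y → Y} (e : X ≃ Y)
    (he : MeasurePreserving e μ ν) (he' : MeasurePreserving e.symm ν μ) (hT : Semiconj e T T')
    (h : IsBernoulli ν T') : IsBernoulli μ T := by
  obtain ⟨k, hk, p, hp, hp1, ρ, hρ, hcyl, Φ, Ψ, hΦ, hΨ, hΨΦ, hΦΨ, hshift⟩ := h
  refine ⟨k, hk, p, hp, hp1, ρ, hρ, hcyl, Φ ∘ e, e.symm ∘ Ψ, hΦ.comp he, he'.comp hΨ,
    ?_, ?_, ?_⟩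
  · filter_upwards [he.quasiMeasurePreserving.ae hΨΦ] with x hx
    simp [hx]
  · simpa using hΦΨ
  · filter_upwards [he.quasiMeasurePreserving.ae hshift] with x hx
    simpa [hT x] using hx

theorem isBernoulli_shift_infinitePi {k : ℕ} (Q : Measure (Fin k)) [IsProbabilityMeasure Q] :
    IsBernoulli (Measure.infinitePi fun _ : ℤ ↦ Q) (fun y i ↦ y (i + 1)) := by
  have hk : 0 < k := Fin.pos_iff_nonempty.2 (nonempty_of_isProbabilityMeasure Q)
  refine ⟨k, hk, fun i ↦ (Q {i}).toReal, fun i ↦ ENNReal.toReal_nonneg, ?_, _, inferInstance,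
    fun s f ↦ ?_, id, id, .id _, .id _, .of_forall fun _ ↦ rfl, .of_forall fun _ ↦ rfl,
    .of_forall fun _ ↦ rfl⟩
  · rw [← ENNReal.toReal_sum fun i _ ↦ measure_ne_top Q _, sum_measure_singleton]
    simp
  · have : {x : ℤ → Fin k | ∀ i ∈ s, x i = f i} = (s : Set ℤ).pi fun i ↦ {f i} := by
      ext; simp
    rw [this, Measure.infinitePi_pi _ fun _ _ ↦ measurableSet_singleton _,
      ENNReal.ofReal_prod_of_nonneg fun _ _ ↦ ENNReal.toReal_nonneg]
    simp [ENNReal.ofReal_toReal]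

theorem measurePreserving_uniformOn_univ {β : Type*} [Fintype β] [MeasurableSpace β]
    [MeasurableSingletonClass β] (e : β ≃ β) :
    MeasurePreserving e (uniformOn Set.univ) (uniformOn Set.univ) := by
  have he : Measurable e := .of_discrete
  refine ⟨he, Measure.ext fun s hs ↦ ?_⟩
  rw [Measure.map_apply he hs, uniformOn_univ, uniformOn_univ, Measure.count_apply (he hs),
    Measure.count_apply hs, Set.encard_preimage_of_bijective e.bijective]

theorem measurePreserving_infinitePi {ι : Type*} {α β : ι → Type*}
    [∀ i, MeasurableSpace (α i)] [∀ i, MeasurableSpace (β i)]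
    (μ : (i : ι) → Measure (α i)) (ν : (i : ι) → Measure (β i))
    [∀ i, IsProbabilityMeasure (μ i)] [∀ i, IsProbabilityMeasure (ν i)]
    {f : (i : ι) → α i → β i} (hf : ∀ i, MeasurePreserving (f i) (μ i) (ν i)) :
    MeasurePreserving (fun a i ↦ f i (a i)) (Measure.infinitePi μ) (Measure.infinitePi ν) where
  measurable := measurable_pi_iff.mpr fun i ↦ (hf i).measurable.comp (measurable_pi_apply i)
  map_eq := by
    rw [Measure.infinitePi_map_pi μ fun i ↦ (hf i).measurable]
    exact congrArg _ <| funext fun i ↦ (hf i).map_eq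

section Coordinates

variable {ι β : Type*}

def precompPerm (π : Equiv.Perm ι) : Equiv.Perm (ι → β) := π.symm.arrowCongr (Equiv.refl β)

@[simp]
theorem precompPerm_apply (π : Equiv.Perm ι) (x : ι → β) (i : ι) :
    precompPerm π x i = x (π i) := rfl

theorem precompPerm_inv (π : Equiv.Perm ι) :
    (precompPerm π)⁻¹ = precompPerm (β := β) π⁻¹ := rfl

theorem measurePreserving_precompPerm [MeasurableSpace β] (P : Measure β)
    [IsProbabilityMeasure P] (π : Equiv.Perm ι) :
    MeasurePreserving (precompPerm π) (Measure.infinitePi fun _ ↦ P)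
      (Measure.infinitePi fun _ ↦ P) := by
  have : ⇑(precompPerm π : Equiv.Perm (ι → β)) =
      MeasurableEquiv.piCongrLeft (fun _ ↦ β) π.symm := by
    ext x i
    simp [MeasurableEquiv.piCongrLeft, Equiv.piCongrLeft_apply_eq_cast]
  rw [this]
  exact ⟨MeasurableEquiv.measurable _,
    Measure.infinitePi_map_piCongrLeft (fun _ : ι ↦ P) π.symm⟩

theorem precompPerm_addRight_zpow_apply [AddGroup ι] (g : ι) (m : ℤ) (x : ι → β) (i : ι) :
    (precompPerm (Equiv.addRight g) ^ m) x i = x (i + m • g) := by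
  induction m using Int.induction_on generalizing x with
  | zero => simp
  | succ k ih =>
    rw [zpow_add_one, Equiv.Perm.mul_apply, ih, add_zsmul, one_zsmul, ← add_assoc]
    rfl
  | pred k ih =>
    rw [zpow_sub_one, Equiv.Perm.mul_apply, ih]
    simp [precompPerm, Equiv.Perm.inv_def, add_zsmul, add_assoc, sub_eq_add_neg]

end Coordinates

section Blocks

variable {κ β : Type*} [Finite κ] [Finite β] [MeasurableSpace β] [MeasurableSingletonClass β]

noncomputable def blockEquiv : (ℤ × κ → β) ≃ᵐ (ℤ → Fin (Nat.card (κ → β))) :=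
  (MeasurableEquiv.curry ℤ κ β).trans <| MeasurableEquiv.piCongrRight fun _ ↦
    { toEquiv := Finite.equivFin (κ → β)
      measurable_toFun := .of_discrete
      measurable_invFun := .of_discrete }

theorem isBernoulli_precompPerm_addRight_one_zero [AddGroup κ] (P : Measure β)
    [IsProbabilityMeasure P] :
    IsBernoulli (Measure.infinitePi fun _ : ℤ × κ ↦ P)
      (precompPerm (Equiv.addRight ((1 : ℤ), (0 : κ)))) := by
  let Q := (Measure.infinitePi fun _ : κ ↦ P).map (Finite.equivFin (κ → β))
  have : IsProbabilityMeasure Q :=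
    Measure.isProbabilityMeasure_map Measurable.of_discrete.aemeasurable
  have hblock : MeasurePreserving (blockEquiv (κ := κ) (β := β))
      (Measure.infinitePi fun _ ↦ P) (Measure.infinitePi fun _ : ℤ ↦ Q) :=
    (measurePreserving_infinitePi _ _ fun _ ↦ ⟨.of_discrete, rfl⟩).comp
      ⟨MeasurableEquiv.measurable _, Measure.infinitePi_map_curry fun _ _ ↦ P⟩
  refine IsBernoulli.of_semiconj blockEquiv.toEquiv hblock hblock.symm (fun x ↦ ?_)
    (isBernoulli_shift_infinitePi Q)
  funext i
  exact congrArg (Finite.equivFin (κ → β)) (funext fun j ↦ by simp)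

end Blocks

noncomputable abbrev fairCoins (ι : Type*) : Measure (ι → Fin 2) :=
  Measure.infinitePi fun _ : ι ↦ uniformOn Set.univ

section FairCoins

variable {ι : Type*}

theorem fairCoins_eval_eq (p : ι) (c : Fin 2) : fairCoins ι {x | x p = c} = 1 / 2 := by
  change fairCoins ι (Function.eval p ⁻¹' {c}) = 1 / 2
  rw [(measurePreserving_eval_infinitePi _ p).measure_preimage
    (measurableSet_singleton c).nullMeasurableSet]
  simp [uniformOn_univ]

theorem fairCoins_eval_eq_inter_eval_eq {p q : ι} (hpq : p ≠ q) (c d : Fin 2) :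
    fairCoins ι ({x | x p = c} ∩ {x | x q = d}) = 1 / 4 := by
  have hind := (iIndepFun_infinitePi (P := fun _ : ι ↦ uniformOn (Set.univ : Set (Fin 2)))
    (X := fun _ ↦ id) fun _ ↦ measurable_id).indepFun hpq
  change fairCoins ι ((fun x ↦ id (x p)) ⁻¹' {c} ∩ (fun x ↦ id (x q)) ⁻¹' {d}) = 1 / 4
  rw [hind.measure_inter_preimage_eq_mul _ _ (measurableSet_singleton c)
    (measurableSet_singleton d)]
  simp only [Set.preimage, id, Set.mem_singleton_iff, fairCoins_eval_eq]
  rw [one_div, ← ENNReal.mul_inv (by simp) (by simp)]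
  norm_num

theorem measurePreserving_addRight_fairCoins (v : ι → Fin 2) :
    MeasurePreserving (Equiv.addRight v) (fairCoins ι) (fairCoins ι) :=
  measurePreserving_infinitePi _ _ fun i ↦ measurePreserving_uniformOn_univ (Equiv.addRight (v i))

variable [Zero ι] [DecidableEq ι]

/-- The paper's `ψ_π` when `π 0 = 0`; in `Fin 2`, `1 - y = y + 1`. -/
def flipPerm (π : Equiv.Perm ι) : Equiv.Perm (ι → Fin 2) :=
  Equiv.addRight (fun q ↦ if q = 0 then 0 else 1) * precompPerm π

theorem flipPerm_apply (π : Equiv.Perm ι) (x : ι → Fin 2) (q : ι) :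
    flipPerm π x q = x (π q) + if q = 0 then 0 else 1 := rfl

theorem measurePreserving_flipPerm (π : Equiv.Perm ι) :
    MeasurePreserving (flipPerm π) (fairCoins ι) (fairCoins ι) :=
  (measurePreserving_addRight_fairCoins _).comp (measurePreserving_precompPerm _ π)

theorem measurePreserving_flipPerm_inv (π : Equiv.Perm ι) :
    MeasurePreserving ⇑(flipPerm π)⁻¹ (fairCoins ι) (fairCoins ι) := by
  rw [flipPerm, mul_inv_rev, Equiv.neg_addRight, precompPerm_inv]
  exact (measurePreserving_precompPerm _ _).comp (measurePreserving_addRight_fairCoins _)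

end FairCoins

theorem exists_perm_apply_eq {ι α : Type*} [Countable α] {u v : ι → α}
    (hu : Injective u) (hv : Injective v)
    (hu' : (Set.range u)ᶜ.Infinite) (hv' : (Set.range v)ᶜ.Infinite) :
    ∃ π : Equiv.Perm α, ∀ i, π (u i) = v i := by
  classical
  have := hu'.to_subtype
  have := hv'.to_subtype
  obtain ⟨e⟩ :=
    nonempty_equiv_of_countable (α := ↥(Set.range u)ᶜ) (β := ↥(Set.range v)ᶜ)
  refine ⟨Equiv.subtypeCongr ((Equiv.ofInjective u hu).symm.trans (Equiv.ofInjective v hv)) e,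
    fun i ↦ ?_⟩
  simp [Equiv.subtypeCongr, Equiv.sumCompl]

theorem exists_perm_apply_eq_iff_mem (a b : ℕ → ℤ) (ha0 : ∀ n, a n ≠ 0) (hb0 : ∀ n, b n ≠ 0)
    (ha : Injective a) (hb : Injective b) (F : Set ℕ) :
    ∃ π : Equiv.Perm (ℤ × Fin 2), π 0 = 0 ∧ ∀ n, π (b n, 0) = (a n, 0) ↔ n ∈ F := by
  classical
  let u : Option ℕ → ℤ × Fin 2 := fun o ↦ o.elim (0, 0) fun n ↦ (b n, 0)
  -- indices `n ∉ F` are sent into the column `ℤ × {1}`, which `a` never reaches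
  let v : Option ℕ → ℤ × Fin 2 :=
    fun o ↦ o.elim (0, 0) fun n ↦ if n ∈ F then (a n, 0) else (n, 1)
  have hu : Injective u := by
    rintro (_ | m) (_ | n) h <;> simp only [u, Option.elim] at h <;> grind [Prod.ext_iff]
  have hv : Injective v := by
    rintro (_ | m) (_ | n) h <;> simp only [v, Option.elim] at h <;> grind [Prod.ext_iff]
  have hu' : (Set.range u)ᶜ.Infinite := by
    refine (Set.infinite_range_of_injective (f := fun k : ℕ ↦ ((k : ℤ), (1 : Fin 2)))
      fun k l h ↦ by simpa using h).mono ?_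
    rintro _ ⟨k, rfl⟩ ⟨o, ho⟩
    cases o <;> simp [u, Prod.ext_iff] at ho
  have hv' : (Set.range v)ᶜ.Infinite := by
    refine (Set.infinite_range_of_injective (f := fun k : ℕ ↦ (-(k : ℤ) - 1, (1 : Fin 2)))
      fun k l h ↦ by simpa using h).mono ?_
    rintro _ ⟨k, rfl⟩ ⟨o, ho⟩
    cases o <;> simp only [v, Option.elim] at ho <;> grind [Prod.ext_iff]
  obtain ⟨π, hπ⟩ := exists_perm_apply_eq hu hv hu' hv'
  refine ⟨π, hπ none, fun n ↦ ?_⟩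
  rw [show ((b n, 0) : ℤ × Fin 2) = u (some n) from rfl, hπ]
  by_cases hn : n ∈ F <;> simp [v, hn]

theorem preimage_conj_zpow {X : Type*} {ψ : Equiv.Perm X} {s : Set X} (hs : ψ ⁻¹' s = s)
    (T : Equiv.Perm X) (m : ℤ) :
    ⇑((ψ⁻¹ * T * ψ) ^ m) ⁻¹' s = ψ ⁻¹' (⇑(T ^ m) ⁻¹' s) := by
  have hs' : ⇑ψ⁻¹ ⁻¹' s = s := by
    conv_lhs => rw [← hs]
    ext; simp
  have h := conj_zpow (a := ψ⁻¹) (b := T) (i := m)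
  rw [inv_inv] at h
  rw [h, Equiv.Perm.coe_mul, Equiv.Perm.coe_mul, Set.preimage_comp, Set.preimage_comp, hs']

/-- For any injective sequences `a, b : ℕ → ℤ∖{0}` and any `F ⊆ ℕ` there are Bernoulli
transformations `T, S` and a set `A` of measure `1/2` with
`μ(T^{-a(n)}A ∩ S^{-b(n)}A) = 0` for `n ∈ F` and `= 1/4` for `n ∉ F`. -/
theorem exists_bernoulli_prescribed_correlations
    (a b : ℕ → ℤ) (ha0 : ∀ n, a n ≠ 0) (hb0 : ∀ n, b n ≠ 0)
    (hainj : Function.Injective a) (hbinj : Function.Injective b) (F : Set ℕ) :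
    ∃ (X : Type) (_ : MeasurableSpace X) (μ : Measure X) (_ : IsProbabilityMeasure μ)
      (T S : Equiv.Perm X),
      MeasurePreserving T μ μ ∧ MeasurePreserving S μ μ ∧
      IsBernoulli μ T ∧ IsBernoulli μ S ∧
      ∃ A : Set X, MeasurableSet A ∧ μ A = 1 / 2 ∧
        ∀ n : ℕ,
          (n ∈ F → μ ((T ^ a n) ⁻¹' A ∩ (S ^ b n) ⁻¹' A) = 0) ∧
          (n ∉ F → μ ((T ^ a n) ⁻¹' A ∩ (S ^ b n) ⁻¹' A) = 1 / 4) := by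
  obtain ⟨π, hπ0, hπ⟩ := exists_perm_apply_eq_iff_mem a b ha0 hb0 hainj hbinj F
  let T : Equiv.Perm (ℤ × Fin 2 → Fin 2) := precompPerm (Equiv.addRight (1, 0))
  let ψ := flipPerm π
  have hT : MeasurePreserving T (fairCoins _) (fairCoins _) := measurePreserving_precompPerm _ _
  have hTA (m : ℤ) : ⇑(T ^ m) ⁻¹' {x | x 0 = 1} = {x | x (m, 0) = 1} := by
    ext x
    simp [T, precompPerm_addRight_zpow_apply]
  have hSA (n : ℕ) :
      ⇑((ψ⁻¹ * T * ψ) ^ b n) ⁻¹' {x | x 0 = 1} = {x | x (π (b n, 0)) = 0} := by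
    rw [preimage_conj_zpow (by ext x; simp [ψ, flipPerm_apply, hπ0]), hTA]
    ext x
    simp [ψ, flipPerm_apply, hb0 n]
  refine ⟨_, _, fairCoins (ℤ × Fin 2), inferInstance, T, ψ⁻¹ * T * ψ, hT,
    (measurePreserving_flipPerm_inv π).comp (hT.comp (measurePreserving_flipPerm π)),
    isBernoulli_precompPerm_addRight_one_zero _,
    .of_semiconj ψ (measurePreserving_flipPerm π) (measurePreserving_flipPerm_inv π)
      (fun x ↦ by simp [T]) (isBernoulli_precompPerm_addRight_one_zero _),
    {x | x 0 = 1}, measurableSet_eq_fun (measurable_pi_apply 0) measurable_const,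
    fairCoins_eval_eq 0 1, fun n ↦ ⟨fun hn ↦ ?_, fun hn ↦ ?_⟩⟩
  · rw [hTA, hSA, (hπ n).2 hn]
    refine measure_mono_null (fun x ⟨h1, h0⟩ ↦ ?_) measure_empty
    exact absurd (h1.symm.trans h0) (by decide)
  · rw [hTA, hSA]
    exact fairCoins_eval_eq_inter_eval_eq (fun h ↦ hn ((hπ n).1 h.symm)) 1 0
end

section
/- Let a, b : ℕ → ℤ∖{0} be injective sequences. Then there exist a probability space (X,𝒳,μ), commuting-free (in general non-commuting) measure preserving transformations T, S : X → X, both Bernoulli, and functions f, g ∈ L^∞(μ), such that the averages (1/N) ∑_{n=1}^N ∫ T^{a(n)} f · S^{b(n)} g dμ diverge as N → ∞; moreover there exists A ∈ 𝒳 with μ(A) > 0 and μ(T^{−a(n)}A ∩ S^{−b(n)}A) = 0 for every n ∈ ℕ. -/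
/-!
Both transformations act on `Ω × Ω`, where `Ω = (ZMod 4)^ℤ` carries the uniform Bernoulli
measure, as a product of two shifts one of which is conjugated by a coordinate change
`x ↦ x ∘ ρ + w`, so that each is still Bernoulli: `T` twists the first factor, `S` the second.
On the second factor `(T^p z)₀ = z_p` while `(S^q z)₀ = z_{ρ q} + w_q` (for `ρ 0 = 0`, `w 0 = 0`).
Choose `ρ (b n) = a n` and `w (b n) = 2` for `n ∈ E`, and `w (b n) = 1` otherwise. For
`h = (1, 0, -1, 0)` read at coordinate `0`, the correlation at time `n` is then `-1/2` on `E` and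
`0` off `E`, where the coordinates `a n` and `ρ (b n)` are independent or read with lag `1`;
and `z_{a n}`, `z_{a n} + 2` cannot both vanish, so `{z₀ = 0}` is not returned to at times of `E`.
The first factor, with `a` and `b` exchanged, does the same off `E`. For `E` the union of the
blocks `(4^k, 2·4^k]`, the averages over the windows `(N, 2N]` are `-1/2` at `N = 4^k` and `0`
at `N = 2·4^k`, so the Cesàro averages diverge. The permutations `ρ` exist since `a`, `b` are
injective and both `E` and `Eᶜ` are infinite.
-/

open Filter MeasureTheory

open ProbabilityTheory Set Topology

section IsBernoulli

variable {X Y : Type*} [MeasurableSpace X] [MeasurableSpace Y] {μ : Measure X} {μ' : Measure Y}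

lemma IsBernoulli.isProbabilityMeasure {T : X → X} (hT : IsBernoulli μ T) :
    IsProbabilityMeasure μ := by
  obtain ⟨_, -, _, -, -, _, _, -, _, _, -, hΨ, -⟩ := hT
  rw [← hΨ.map_eq]
  exact Measure.isProbabilityMeasure_map hΨ.measurable.aemeasurable

lemma IsBernoulli.conj {T : X → X} (hT : IsBernoulli μ T) (e : X ≃ᵐ Y)
    (he : MeasurePreserving e μ μ') : IsBernoulli μ' (e ∘ T ∘ e.symm) := by
  obtain ⟨k, hk, p, hp, hp1, ν, hν, hcyl, Φ, Ψ, hΦ, hΨ, hΨΦ, hΦΨ, hshift⟩ := hT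
  have hpull := he.symm.quasiMeasurePreserving
  refine ⟨k, hk, p, hp, hp1, ν, hν, hcyl, Φ ∘ e.symm, e ∘ Ψ, hΦ.comp he.symm, he.comp hΨ,
    ?_, ?_, ?_⟩
  · filter_upwards [hpull.ae hΨΦ] with y hy
    simp [hy]
  · filter_upwards [hΦΨ] with y hy
    simpa using hy
  · filter_upwards [hpull.ae hshift] with y hy
    simpa using hy

def finPairing (k k' : ℕ) : (ℤ → Fin k) × (ℤ → Fin k') ≃ᵐ (ℤ → Fin (k * k')) :=
  (MeasurableEquiv.arrowProdEquivProdArrow (Fin k) (Fin k') ℤ).symm.trans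
    (MeasurableEquiv.piCongrRight fun _ =>
      { toEquiv := finProdFinEquiv, measurable_toFun := .of_discrete,
        measurable_invFun := .of_discrete })

lemma finPairing_apply {k k' : ℕ} (y : (ℤ → Fin k) × (ℤ → Fin k')) (i : ℤ) :
    finPairing k k' y i = finProdFinEquiv (y.1 i, y.2 i) := rfl

lemma finPairing_preimage_cylinder {k k' : ℕ} (s : Finset ℤ) (f : ℤ → Fin (k * k')) :
    finPairing k k' ⁻¹' {x | ∀ i ∈ s, x i = f i} =
      {y | ∀ i ∈ s, y i = (finProdFinEquiv.symm (f i)).1} ×ˢ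
        {y | ∀ i ∈ s, y i = (finProdFinEquiv.symm (f i)).2} := by
  ext y
  simp only [Set.mem_preimage, Set.mem_ofPred_eq, Set.mem_prod, finPairing_apply,
    ← Equiv.eq_symm_apply, Prod.ext_iff, ← forall_and]

lemma IsBernoulli.prodMap {T : X → X} {T' : Y → Y} (hT : IsBernoulli μ T)
    (hT' : IsBernoulli μ' T') : IsBernoulli (μ.prod μ') (Prod.map T T') := by
  have := hT.isProbabilityMeasure
  have := hT'.isProbabilityMeasure
  obtain ⟨k, hk, p, hp, hp1, ν, hν, hcyl, Φ, Ψ, hΦ, hΨ, hΨΦ, hΦΨ, hshift⟩ := hT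
  obtain ⟨k', hk', p', hp', hp1', ν', hν', hcyl', Φ', Ψ', hΦ', hΨ', hΨΦ', hΦΨ', hshift'⟩ := hT'
  set P := finPairing k k'
  have hP : MeasurePreserving P (ν.prod ν') ((ν.prod ν').map P) :=
    P.measurable.measurePreserving _
  have hfst := (Measure.quasiMeasurePreserving_fst (μ := μ) (ν := μ'))
  have hsnd := (Measure.quasiMeasurePreserving_snd (μ := μ) (ν := μ'))
  refine ⟨k * k', Nat.mul_pos hk hk',
    fun j => p (finProdFinEquiv.symm j).1 * p' (finProdFinEquiv.symm j).2,
    fun j => mul_nonneg (hp _) (hp' _), ?_, (ν.prod ν').map P,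
    Measure.isProbabilityMeasure_map P.measurable.aemeasurable, fun s f => ?_,
    P ∘ Prod.map Φ Φ', Prod.map Ψ Ψ' ∘ P.symm, hP.comp (hΦ.prod hΦ'),
    (hΨ.prod hΨ').comp (hP.symm P), ?_, ?_, ?_⟩
  · rw [← Fintype.sum_equiv finProdFinEquiv (fun q => p q.1 * p' q.2) _ (by simp),
      Fintype.sum_prod_type, ← Finset.sum_mul_sum, hp1, hp1', one_mul]
  · rw [P.map_apply, finPairing_preimage_cylinder, Measure.prod_prod, hcyl, hcyl',
      ← ENNReal.ofReal_mul (Finset.prod_nonneg fun i _ => hp _), Finset.prod_mul_distrib]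
  · filter_upwards [hfst.ae hΨΦ, hsnd.ae hΨΦ'] with z h1 h2
    simpa using Prod.ext h1 h2
  · filter_upwards [(hP.symm P).quasiMeasurePreserving.ae
      ((Measure.quasiMeasurePreserving_fst.ae hΦΨ).and
        (Measure.quasiMeasurePreserving_snd.ae hΦΨ'))] with y hy
    simp only [Function.comp_apply, Prod.map, hy.1, hy.2, P.apply_symm_apply]
  · filter_upwards [hfst.ae hshift, hsnd.ae hshift'] with z h1 h2
    ext1 i
    simp only [Function.comp_apply, Prod.map, h1, h2]
    rfl

end IsBernoulli

def shift (α : Type*) : Equiv.Perm (ℤ → α) where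
  toFun x i := x (i + 1)
  invFun x i := x (i - 1)
  left_inv x := by simp
  right_inv x := by simp

lemma shift_zpow_apply {α : Type*} (m : ℤ) (x : ℤ → α) (i : ℤ) :
    (shift α ^ m) x i = x (i + m) := by
  induction m using Int.induction_on generalizing x i with
  | zero => simp
  | succ k ih =>
    rw [zpow_add_one, Equiv.Perm.mul_apply, ih, ← add_assoc]
    rfl
  | pred k ih =>
    rw [zpow_sub_one, Equiv.Perm.mul_apply, ih, ← add_sub_assoc]
    rfl

section Shift

variable {α : Type*} [MeasurableSpace α] (m : Measure α) [IsProbabilityMeasure m]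

lemma measurePreserving_shift :
    MeasurePreserving (shift α) (Measure.infinitePi fun _ : ℤ => m)
      (Measure.infinitePi fun _ : ℤ => m) :=
  ⟨measurable_pi_lambda _ fun i => measurable_pi_apply (i + 1),
    Measure.map_infinitePi_infinitePi_of_inj (add_left_injective 1)⟩

lemma isBernoulli_shift [Finite α] [MeasurableSingletonClass α] :
    IsBernoulli (Measure.infinitePi fun _ : ℤ => m) (shift α) := by
  have := nonempty_of_isProbabilityMeasure m
  have := Fintype.ofFinite α
  set ν := Measure.infinitePi fun _ : ℤ => m
  let e : α ≃ᵐ Fin (Nat.card α) :=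
    { toEquiv := Finite.equivFin α, measurable_toFun := .of_discrete,
      measurable_invFun := .of_discrete }
  let E := MeasurableEquiv.piCongrRight fun _ : ℤ => e
  have hE : MeasurePreserving E ν (ν.map E) := E.measurable.measurePreserving ν
  refine ⟨Nat.card α, Nat.card_pos, fun j => m.real {e.symm j}, fun _ => measureReal_nonneg,
    ?_, ν.map E, Measure.isProbabilityMeasure_map E.measurable.aemeasurable, fun s f => ?_,
    E, E.symm, hE, hE.symm E, ae_of_all _ fun x => E.symm_apply_apply x,
    ae_of_all _ fun y => E.apply_symm_apply y, ae_of_all _ fun x => rfl⟩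
  · rw [Fintype.sum_equiv e.symm.toEquiv (fun j => m.real {e.symm j}) (fun a => m.real {a})
      fun _ => rfl]
    simp
  · have hpre : E ⁻¹' {x | ∀ i ∈ s, x i = f i} = Set.pi s fun i => {e.symm (f i)} := by
      ext x
      simp [E, MeasurableEquiv.piCongrRight, ← MeasurableEquiv.eq_symm_apply]
    rw [E.map_apply, hpre, Measure.infinitePi_pi _ fun _ _ => measurableSet_singleton _,
      ENNReal.ofReal_prod_of_nonneg fun _ _ => measureReal_nonneg]
    simp

end Shift

section Twist

variable {ι G : Type*} [AddGroup G] [MeasurableSpace G] [MeasurableAdd G] (m : Measure G)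
  [IsProbabilityMeasure m] [m.IsAddRightInvariant]

def twist (ρ : Equiv.Perm ι) (w : ι → G) : (ι → G) ≃ᵐ (ι → G) :=
  (MeasurableEquiv.piCongrLeft (fun _ => G) ρ.symm).trans (MeasurableEquiv.addRight w)

lemma twist_apply (ρ : Equiv.Perm ι) (w : ι → G) (x : ι → G) (i : ι) :
    twist ρ w x i = x (ρ i) + w i := by
  simp [twist, MeasurableEquiv.piCongrLeft, Equiv.piCongrLeft_apply_eq_cast]

lemma twist_symm_apply (ρ : Equiv.Perm ι) (w : ι → G) (y : ι → G) (j : ι) :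
    (twist ρ w).symm y j = y (ρ.symm j) - w (ρ.symm j) := by
  have h := twist_apply ρ w ((twist ρ w).symm y) (ρ.symm j)
  rw [MeasurableEquiv.apply_symm_apply, Equiv.apply_symm_apply] at h
  exact eq_sub_of_add_eq h.symm

lemma measurePreserving_twist (ρ : Equiv.Perm ι) (w : ι → G) :
    MeasurePreserving (twist ρ w) (Measure.infinitePi fun _ : ι => m)
      (Measure.infinitePi fun _ : ι => m) := by
  have hreindex : MeasurePreserving (fun (x : ι → G) i => x (ρ i))
      (Measure.infinitePi fun _ : ι => m) (Measure.infinitePi fun _ : ι => m) :=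
    ⟨by fun_prop, Measure.map_infinitePi_infinitePi_of_inj ρ.injective⟩
  have htranslate : MeasurePreserving (fun (x : ι → G) i => x i + w i)
      (Measure.infinitePi fun _ : ι => m) (Measure.infinitePi fun _ : ι => m) :=
    ⟨by fun_prop, by
      rw [Measure.infinitePi_map_pi _ fun i => measurable_add_const (w i)]
      simp_rw [map_add_right_eq_self]⟩
  convert htranslate.comp hreindex using 1
  ext x i
  exact twist_apply ρ w x i

def twistedShift (ρ : Equiv.Perm ℤ) (w : ℤ → G) : Equiv.Perm (ℤ → G) :=
  MulAut.conj (twist ρ w).symm.toEquiv (shift G)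

lemma twistedShift_zpow_apply_zero {ρ : Equiv.Perm ℤ} {w : ℤ → G} (hρ : ρ 0 = 0) (hw : w 0 = 0)
    (m : ℤ) (y : ℤ → G) : (twistedShift ρ w ^ m) y 0 = y (ρ m) + w m := by
  have hρ' : ρ.symm 0 = 0 := by rw [Equiv.symm_apply_eq, hρ]
  rw [twistedShift, ← map_zpow, MulAut.conj_apply, Equiv.Perm.mul_apply, Equiv.Perm.mul_apply]
  change (twist ρ w).symm ((shift G ^ m) (twist ρ w y)) 0 = _
  rw [twist_symm_apply, hρ', shift_zpow_apply, zero_add, twist_apply, hw, sub_zero]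

lemma measurePreserving_twistedShift (ρ : Equiv.Perm ℤ) (w : ℤ → G) :
    MeasurePreserving (twistedShift ρ w) (Measure.infinitePi fun _ : ℤ => m)
      (Measure.infinitePi fun _ : ℤ => m) :=
  have htwist := measurePreserving_twist m ρ w
  (htwist.symm _).comp ((measurePreserving_shift m).comp htwist)

lemma isBernoulli_twistedShift [Finite G] [MeasurableSingletonClass G] (ρ : Equiv.Perm ℤ)
    (w : ℤ → G) :
    IsBernoulli (Measure.infinitePi fun _ : ℤ => m) (twistedShift ρ w) :=
  (isBernoulli_shift m).conj (twist ρ w).symm (measurePreserving_twist m ρ w).symm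

end Twist

instance isAddRightInvariant_uniformOn_univ {G : Type*} [AddGroup G] [MeasurableSpace G]
    [MeasurableAdd G] : (uniformOn (univ : Set G)).IsAddRightInvariant := by
  rw [uniformOn, ProbabilityTheory.cond, Measure.restrict_univ]
  infer_instance

noncomputable def cosQuarter (v : ZMod 4) : ℝ := if v = 0 then 1 else if v = 2 then -1 else 0

@[fun_prop]
lemma measurable_cosQuarter : Measurable cosQuarter := .of_discrete

lemma abs_cosQuarter_le (v : ZMod 4) : |cosQuarter v| ≤ 1 := by
  unfold cosQuarter; split_ifs <;> norm_num

lemma integral_uniformOn_univ_zmod4 (f : ZMod 4 → ℝ) :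
    ∫ v, f v ∂uniformOn univ = (f 0 + f 1 + f 2 + f 3) / 4 := by
  rw [integral_fintype .of_finite]
  simp only [Measure.real, uniformOn_univ, Measure.count_singleton, ZMod.card, smul_eq_mul]
  rw [← Finset.mul_sum, show ∑ v : ZMod 4, f v = f 0 + f 1 + f 2 + f 3 from Fin.sum_univ_four f]
  norm_num
  ring

lemma integral_cosQuarter : ∫ v, cosQuarter v ∂uniformOn univ = 0 := by
  rw [integral_uniformOn_univ_zmod4]; simp +decide [cosQuarter]

lemma integral_cosQuarter_mul_add_one :
    ∫ v, cosQuarter v * cosQuarter (v + 1) ∂uniformOn univ = 0 := by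
  rw [integral_uniformOn_univ_zmod4]; simp +decide [cosQuarter]

lemma integral_cosQuarter_mul_add_two :
    ∫ v, cosQuarter v * cosQuarter (v + 2) ∂uniformOn univ = -1 / 2 := by
  rw [integral_uniformOn_univ_zmod4]; simp +decide [cosQuarter]; norm_num

section InfinitePi

variable {ι α : Type*} [MeasurableSpace α] {P : ι → Measure α} [∀ i, IsProbabilityMeasure (P i)]
  {F G : α → ℝ}

lemma integral_infinitePi_comp_eval (hF : Measurable F) (i : ι) :
    ∫ y, F (y i) ∂Measure.infinitePi P = ∫ v, F v ∂P i := by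
  rw [← (measurePreserving_eval_infinitePi P i).map_eq,
    integral_map (measurePreserving_eval_infinitePi P i).measurable.aemeasurable
      hF.aestronglyMeasurable]

lemma integral_infinitePi_comp_eval_mul_of_ne (hF : Measurable F) (hG : Measurable G)
    {i j : ι} (hij : i ≠ j) :
    ∫ y, F (y i) * G (y j) ∂Measure.infinitePi P = (∫ v, F v ∂P i) * ∫ v, G v ∂P j := by
  rw [← integral_prod_mul, ← Measure.infinitePi_map_eval_prod hij,
    integral_map (by fun_prop) (by fun_prop)]

end InfinitePi

lemma exists_perm_eqOn_of_injOn {α : Type*} [Countable α] {s : Set α} {f : α → α}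
    (hf : InjOn f s) (hs : sᶜ.Infinite) (hfs : (f '' s)ᶜ.Infinite) :
    ∃ ρ : Equiv.Perm α, EqOn ρ f s := by
  have := hs.to_subtype
  have := hfs.to_subtype
  obtain ⟨ρ, hρ⟩ := Cardinal.extend_function ⟨s.domRestrict f, hf.injective⟩
    (by simpa only [Function.Embedding.coeFn_mk, range_domRestrict] using
      nonempty_equiv_of_countable)
  exact ⟨ρ, fun x hx => hρ ⟨x, hx⟩⟩

lemma exists_perm_fix_and_match {α ι : Type*} [Countable α] (x₀ : α) {c d : ι → α}
    (hc : c.Injective) (hd : d.Injective) (hc₀ : ∀ n, c n ≠ x₀) (hd₀ : ∀ n, d n ≠ x₀)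
    {E : Set ι} (hE : Eᶜ.Infinite) :
    ∃ ρ : Equiv.Perm α, ρ x₀ = x₀ ∧ ∀ n ∈ E, ρ (c n) = d n := by
  set f := Function.extend c d id
  have hf₀ : f x₀ = x₀ := Function.extend_apply' _ _ _ fun ⟨n, hn⟩ => hc₀ n hn
  have hfc : ∀ n, f (c n) = d n := hc.extend_apply d id
  have hinj : InjOn f (insert x₀ (c '' E)) := by
    rintro _ (rfl | ⟨n, -, rfl⟩) _ (rfl | ⟨n', -, rfl⟩) h <;> simp only [hf₀, hfc] at h
    · rfl
    · exact absurd h.symm (hd₀ n')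
    · exact absurd h (hd₀ n)
    · rw [hd h]
  have himage : f '' insert x₀ (c '' E) = insert x₀ (d '' E) := by
    rw [image_insert_eq, hf₀, image_image]
    simp only [hfc]
  have hcompl (e : ι → α) (he : e.Injective) (he₀ : ∀ n, e n ≠ x₀) :
      (insert x₀ (e '' E))ᶜ.Infinite := by
    refine (hE.image he.injOn).mono ?_
    rintro _ ⟨n, hn, rfl⟩ (h | ⟨n', hn', h⟩)
    · exact he₀ n h
    · exact hn (he h ▸ hn')
  obtain ⟨ρ, hρ⟩ := exists_perm_eqOn_of_injOn hinj (hcompl c hc hc₀)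
    (himage ▸ hcompl d hd hd₀)
  exact ⟨ρ, (hρ (mem_insert _ _)).trans hf₀,
    fun n hn => (hρ (mem_insert_of_mem _ ⟨n, hn, rfl⟩)).trans (hfc n)⟩

def blocks : Set ℕ := {n | ∃ k, 4 ^ k < n ∧ n ≤ 2 * 4 ^ k}

lemma Ioc_subset_blocks (k : ℕ) : Ioc (4 ^ k) (2 * 4 ^ k) ⊆ blocks :=
  fun _ hn => ⟨k, hn⟩

lemma disjoint_Ioc_blocks (k : ℕ) : Disjoint (Ioc (2 * 4 ^ k) (4 ^ (k + 1))) blocks := by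
  rw [Set.disjoint_left]
  rintro n ⟨hlo, hhi⟩ ⟨j, hjlo, hjhi⟩
  rcases le_or_gt j k with hjk | hkj
  · have := Nat.pow_le_pow_right (show 0 < 4 by norm_num) hjk
    omega
  · have := Nat.pow_le_pow_right (show 0 < 4 by norm_num) hkj
    omega

lemma blocks_infinite : blocks.Infinite :=
  infinite_of_forall_exists_gt fun N =>
    ⟨4 ^ N + 1, Ioc_subset_blocks N ⟨by omega, by have := Nat.one_le_pow N 4 (by norm_num); omega⟩,
      by have := Nat.lt_pow_self (n := N) (show 1 < 4 by norm_num); omega⟩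

lemma blocks_compl_infinite : blocksᶜ.Infinite :=
  infinite_of_forall_exists_gt fun N =>
    ⟨2 * 4 ^ N + 1, disjoint_Ioc_blocks N |>.notMem_of_mem_left
      ⟨by omega, by have := Nat.one_le_pow N 4 (by norm_num); rw [pow_succ]; omega⟩,
      by have := Nat.lt_pow_self (n := N) (show 1 < 4 by norm_num); omega⟩

lemma tendsto_average_Ioc_of_tendsto_average {c : ℕ → ℝ} {l : ℝ}
    (h : Tendsto (fun N : ℕ => (N : ℝ)⁻¹ * ∑ n ∈ Finset.Icc 1 N, c n) atTop (𝓝 l)) :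
    Tendsto (fun N : ℕ => (N : ℝ)⁻¹ * ∑ n ∈ Finset.Ioc N (2 * N), c n) atTop (𝓝 l) := by
  have h2 := h.comp (tendsto_id.const_mul_atTop' two_pos)
  have hlim := (h2.const_mul 2).sub h
  rw [show 2 * l - l = l by ring] at hlim
  refine hlim.congr' (eventually_ge_atTop 1 |>.mono fun N hN => ?_)
  have hIcc (k : ℕ) : Finset.Icc 1 k = Finset.Ioc 0 k := Finset.Icc_add_one_left_eq_Ioc 0 k
  have hsplit : ∑ n ∈ Finset.Icc 1 (2 * N), c n =
      ∑ n ∈ Finset.Icc 1 N, c n + ∑ n ∈ Finset.Ioc N (2 * N), c n := by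
    rw [hIcc, hIcc, Finset.sum_Ioc_consecutive c N.zero_le (by omega)]
  simp only [Function.comp_apply, id, hsplit, Nat.cast_mul, Nat.cast_ofNat]
  field_simp
  ring

lemma not_tendsto_average_indicator_blocks {κ : ℝ} (hκ : κ ≠ 0) :
    ¬ ∃ l, Tendsto (fun N : ℕ => (N : ℝ)⁻¹ *
      ∑ n ∈ Finset.Icc 1 N, blocks.indicator (fun _ => κ) n) atTop (𝓝 l) := by
  rintro ⟨l, hl⟩
  have hwindow := tendsto_average_Ioc_of_tendsto_average hl
  have h4 : Tendsto (fun k : ℕ => 4 ^ k) atTop atTop :=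
    tendsto_pow_atTop_atTop_of_one_lt (by norm_num)
  have hin : ∀ k : ℕ, ((4 ^ k : ℕ) : ℝ)⁻¹ *
      ∑ n ∈ Finset.Ioc (4 ^ k) (2 * 4 ^ k), blocks.indicator (fun _ => κ) n = κ := by
    intro k
    rw [Finset.sum_congr rfl fun n hn =>
      indicator_of_mem (Ioc_subset_blocks k (by simpa using hn)) _]
    rw [Finset.sum_const, Nat.card_Ioc, show 2 * 4 ^ k - 4 ^ k = 4 ^ k by omega, nsmul_eq_mul]
    field_simp
  have hout : ∀ k : ℕ, ((2 * 4 ^ k : ℕ) : ℝ)⁻¹ *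
      ∑ n ∈ Finset.Ioc (2 * 4 ^ k) (2 * (2 * 4 ^ k)), blocks.indicator (fun _ => κ) n = 0 := by
    intro k
    rw [Finset.sum_eq_zero fun n hn => indicator_of_notMem
      ((disjoint_Ioc_blocks k).notMem_of_mem_left (by
        rw [Finset.mem_Ioc] at hn
        exact ⟨hn.1, by rw [pow_succ]; omega⟩)) _]
    simp
  have hin_lim := hwindow.comp h4
  have hout_lim := hwindow.comp (h4.const_mul_atTop' two_pos)
  simp only [Function.comp_def, hin, hout, tendsto_const_nhds_iff] at hin_lim hout_lim
  exact hκ (hin_lim.trans hout_lim.symm)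

lemma Equiv.prodCongr_zpow_apply {α β : Type*} (e : Equiv.Perm α) (f : Equiv.Perm β) (m : ℤ)
    (z : α × β) : (e.prodCongr f ^ m) z = ((e ^ m) z.1, (f ^ m) z.2) := by
  let φ : Equiv.Perm α × Equiv.Perm β →* Equiv.Perm (α × β) :=
    { toFun := fun p => p.1.prodCongr p.2, map_one' := rfl, map_mul' := fun _ _ => rfl }
  rw [show e.prodCongr f = φ (e, f) from rfl, ← map_zpow]
  rfl

section Construction

noncomputable abbrev bernoulliZMod4 : Measure (ℤ → ZMod 4) :=
  Measure.infinitePi fun _ => uniformOn univ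

def twistedShiftFst (ρ : Equiv.Perm ℤ) (u : ℤ → ZMod 4) :
    Equiv.Perm ((ℤ → ZMod 4) × (ℤ → ZMod 4)) :=
  (twistedShift ρ u).prodCongr (shift _)

def twistedShiftSnd (ρ : Equiv.Perm ℤ) (w : ℤ → ZMod 4) :
    Equiv.Perm ((ℤ → ZMod 4) × (ℤ → ZMod 4)) :=
  (shift _).prodCongr (twistedShift ρ w)

def zeroAtOrigin : Set ((ℤ → ZMod 4) × (ℤ → ZMod 4)) := {x | x 0 = 0} ×ˢ {x | x 0 = 0}

lemma measurableSet_zeroAtOrigin : MeasurableSet zeroAtOrigin :=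
  (measurableSet_singleton 0).preimage (measurable_pi_apply 0) |>.prod
    ((measurableSet_singleton 0).preimage (measurable_pi_apply 0))

lemma zeroAtOrigin_pos : 0 < bernoulliZMod4.prod bernoulliZMod4 zeroAtOrigin := by
  have h : bernoulliZMod4 {x | x 0 = 0} = 4⁻¹ := by
    rw [show {x : ℤ → ZMod 4 | x 0 = 0} = Function.eval 0 ⁻¹' {0} from rfl,
      (measurePreserving_eval_infinitePi _ 0).measure_preimage
        (measurableSet_singleton 0).nullMeasurableSet]
    simp [uniformOn_univ]
  rw [zeroAtOrigin, Measure.prod_prod, h]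
  norm_num

variable {ρ₁ ρ₂ : Equiv.Perm ℤ} {u w : ℤ → ZMod 4}

lemma integral_cosQuarter_mul_twistedShift (hρ₂ : ρ₂ 0 = 0) (hw : w 0 = 0) (p q : ℤ) :
    ∫ z, cosQuarter (((twistedShiftFst ρ₁ u ^ p) z).2 0) *
        cosQuarter (((twistedShiftSnd ρ₂ w ^ q) z).2 0) ∂bernoulliZMod4.prod bernoulliZMod4 =
      if ρ₂ q = p then ∫ v, cosQuarter v * cosQuarter (v + w q) ∂uniformOn univ else 0 := by
  simp only [twistedShiftFst, twistedShiftSnd, Equiv.prodCongr_zpow_apply, shift_zpow_apply,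
    zero_add, twistedShift_zpow_apply_zero hρ₂ hw]
  rw [integral_fun_snd (fun y : ℤ → ZMod 4 => cosQuarter (y p) * cosQuarter (y (ρ₂ q) + w q)),
    probReal_univ, one_smul]
  split_ifs with h
  · rw [h]
    exact integral_infinitePi_comp_eval (F := fun v => cosQuarter v * cosQuarter (v + w q))
      (by fun_prop) p
  · refine (integral_infinitePi_comp_eval_mul_of_ne (F := cosQuarter)
      (G := fun v => cosQuarter (v + w q)) (by fun_prop) (by fun_prop) (Ne.symm h)).trans ?_
    rw [integral_cosQuarter, zero_mul]

lemma preimage_zeroAtOrigin_inter_eq_empty (hρ₁ : ρ₁ 0 = 0) (hu : u 0 = 0) (hρ₂ : ρ₂ 0 = 0)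
    (hw : w 0 = 0) {p q : ℤ} (h : (ρ₁ p = q ∧ u p ≠ 0) ∨ (ρ₂ q = p ∧ w q ≠ 0)) :
    (twistedShiftFst ρ₁ u ^ p) ⁻¹' zeroAtOrigin ∩ (twistedShiftSnd ρ₂ w ^ q) ⁻¹' zeroAtOrigin =
      ∅ := by
  ext z
  simp only [zeroAtOrigin, twistedShiftFst, twistedShiftSnd, mem_inter_iff, mem_preimage,
    mem_prod, mem_ofPred_eq, Equiv.prodCongr_zpow_apply, shift_zpow_apply, zero_add,
    twistedShift_zpow_apply_zero hρ₁ hu, twistedShift_zpow_apply_zero hρ₂ hw,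
    mem_empty_iff_false, iff_false]
  rintro ⟨⟨h1, h2⟩, h3, h4⟩
  rcases h with ⟨rfl, hu'⟩ | ⟨rfl, hw'⟩
  · rw [h3, zero_add] at h1
    exact hu' h1
  · rw [h2, zero_add] at h4
    exact hw' h4

variable {a b : ℕ → ℤ} {E : Set ℕ}

lemma integral_cosQuarter_mul_twistedShift_eq_indicator (hρ₂0 : ρ₂ 0 = 0) (hw0 : w 0 = 0)
    (hρ₂ : ∀ n ∈ E, ρ₂ (b n) = a n) (hwE : ∀ n ∈ E, w (b n) = 2)
    (hwEc : ∀ n ∉ E, w (b n) = 1) (n : ℕ) :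
    ∫ z, cosQuarter (((twistedShiftFst ρ₁ u ^ a n) z).2 0) *
        cosQuarter (((twistedShiftSnd ρ₂ w ^ b n) z).2 0) ∂bernoulliZMod4.prod bernoulliZMod4 =
      E.indicator (fun _ => -1 / 2) n := by
  rw [integral_cosQuarter_mul_twistedShift hρ₂0 hw0]
  by_cases hn : n ∈ E
  · simp [hρ₂ n hn, hwE n hn, hn, integral_cosQuarter_mul_add_two]
  · simp [hwEc n hn, hn, integral_cosQuarter_mul_add_one]

lemma measure_preimage_zeroAtOrigin_inter_eq_zero (hρ₁0 : ρ₁ 0 = 0) (hu0 : u 0 = 0)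
    (hρ₂0 : ρ₂ 0 = 0) (hw0 : w 0 = 0) (hρ₁ : ∀ n ∉ E, ρ₁ (a n) = b n) (hu : ∀ n, u (a n) = 1)
    (hρ₂ : ∀ n ∈ E, ρ₂ (b n) = a n) (hwE : ∀ n ∈ E, w (b n) = 2) (n : ℕ) :
    bernoulliZMod4.prod bernoulliZMod4 ((twistedShiftFst ρ₁ u ^ a n) ⁻¹' zeroAtOrigin ∩
      (twistedShiftSnd ρ₂ w ^ b n) ⁻¹' zeroAtOrigin) = 0 := by
  rw [preimage_zeroAtOrigin_inter_eq_empty hρ₁0 hu0 hρ₂0 hw0, measure_empty]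
  by_cases hn : n ∈ E
  · exact .inr ⟨hρ₂ n hn, by rw [hwE n hn]; decide⟩
  · exact .inl ⟨hρ₁ n hn, by rw [hu n]; decide⟩

end Construction

/-- Non-convergence and non-recurrence: for injective `a, b : ℕ → ℤ∖{0}` there are Bernoulli
transformations `T, S` and bounded functions `f, g` such that the correlation averages
diverge, and a positive measure set `A` with `μ(T^{-a(n)}A ∩ S^{-b(n)}A) = 0` for all `n`. -/
theorem nonconvergence_and_nonrecurrence
    (a b : ℕ → ℤ) (ha0 : ∀ n, a n ≠ 0) (hb0 : ∀ n, b n ≠ 0)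
    (hainj : Function.Injective a) (hbinj : Function.Injective b) :
    ∃ (X : Type) (_ : MeasurableSpace X) (μ : Measure X) (_ : IsProbabilityMeasure μ)
      (T S : Equiv.Perm X),
      MeasurePreserving T μ μ ∧ MeasurePreserving S μ μ ∧
      IsBernoulli μ T ∧ IsBernoulli μ S ∧
      (∃ (f g : X → ℝ) (C : ℝ),
        Measurable f ∧ Measurable g ∧ (∀ x, |f x| ≤ C) ∧ (∀ x, |g x| ≤ C) ∧
        ¬ ∃ l : ℝ, Tendsto (fun N : ℕ => (N : ℝ)⁻¹ *
            ∑ n ∈ Finset.Icc 1 N, ∫ x, f ((T ^ a n) x) * g ((S ^ b n) x) ∂μ)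
          atTop (nhds l)) ∧
      ∃ A : Set X, MeasurableSet A ∧ 0 < μ A ∧
        ∀ n : ℕ, μ ((T ^ a n) ⁻¹' A ∩ (S ^ b n) ⁻¹' A) = 0 := by
  classical
  obtain ⟨ρ₁, hρ₁0, hρ₁⟩ := exists_perm_fix_and_match (0 : ℤ) hainj hbinj ha0 hb0
    (E := blocksᶜ) (by rw [compl_compl]; exact blocks_infinite)
  obtain ⟨ρ₂, hρ₂0, hρ₂⟩ := exists_perm_fix_and_match (0 : ℤ) hbinj hainj hb0 ha0
    blocks_compl_infinite
  set u : ℤ → ZMod 4 := Function.extend a 1 0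
  set w : ℤ → ZMod 4 := Function.extend b (fun n => if n ∈ blocks then 2 else 1) 0
  have hu0 : u 0 = 0 := Function.extend_apply' _ _ _ fun ⟨n, hn⟩ => ha0 n hn
  have hw0 : w 0 = 0 := Function.extend_apply' _ _ _ fun ⟨n, hn⟩ => hb0 n hn
  have hu (n : ℕ) : u (a n) = 1 := hainj.extend_apply _ _ n
  have hw (n : ℕ) : w (b n) = if n ∈ blocks then 2 else 1 := hbinj.extend_apply _ _ n
  refine ⟨_, _, bernoulliZMod4.prod bernoulliZMod4, inferInstance, twistedShiftFst ρ₁ u,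
    twistedShiftSnd ρ₂ w, (measurePreserving_twistedShift _ ρ₁ u).prod (measurePreserving_shift _),
    (measurePreserving_shift _).prod (measurePreserving_twistedShift _ ρ₂ w),
    (isBernoulli_twistedShift _ ρ₁ u).prodMap (isBernoulli_shift _),
    (isBernoulli_shift _).prodMap (isBernoulli_twistedShift _ ρ₂ w),
    ⟨fun z => cosQuarter (z.2 0), fun z => cosQuarter (z.2 0), 1, by fun_prop, by fun_prop,
      fun _ => abs_cosQuarter_le _, fun _ => abs_cosQuarter_le _, ?_⟩,
    zeroAtOrigin, measurableSet_zeroAtOrigin, zeroAtOrigin_pos,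
    measure_preimage_zeroAtOrigin_inter_eq_zero hρ₁0 hu0 hρ₂0 hw0 hρ₁ hu hρ₂
      fun n hn => by simp [hw, hn]⟩
  simp_rw [integral_cosQuarter_mul_twistedShift_eq_indicator hρ₂0 hw0 hρ₂
    (fun n hn => by simp [hw, hn]) (fun n hn => by simp [hw, hn])]
  exact not_tendsto_average_indicator_blocks (by norm_num)
end

section
/- Let σ_n = n^{−a} for some a ∈ (0,1), let (X_n) be independent with ℙ(X_n = 1) = σ_n, ℙ(X_n = 0) = 1 − σ_n, and let a_n(ω) be the n-th element of {k : X_k(ω) = 1} in increasing order. Then almost surely, a_n(ω)/n^{1/(1−a)} converges to a nonzero constant as n → ∞. -/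
/-!
Let `S_N = X_1 + ⋯ + X_N` and `B_N = 𝔼 S_N = ∑_{k ≤ N} k^{-a}`, which is `N^{1-a}/(1-a)` up to a
bounded error. The `X_k` are independent indicators, so `Var S_N ≤ B_N`. Along the first times `N_j`
at which `B` exceeds `(j+1)^2`, Chebyshev's inequality gives summable tail probabilities, so by
Borel–Cantelli `S_{N_j} ∼ B_{N_j}` almost surely; as `S` and `B` are monotone and
`B_{N_{j+1}} ∼ B_{N_j}`, this extends to `S_N ∼ B_N`. Finally `S_{a_n} = n`, hence
`n ∼ a_n^{1-a}/(1-a)`, i.e. `a_n ∼ ((1-a) n)^{1/(1-a)}`.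
-/

open Filter MeasureTheory ProbabilityTheory Finset Topology Asymptotics

lemma isEquivalent_of_abs_sub_le {α : Type*} {l : Filter α} {u v : α → ℝ} {C : ℝ}
    (h : ∀ x, |u x - v x| ≤ C) (hv : Tendsto v l atTop) : u ~[l] v :=
  IsLittleO.isEquivalent <| (isBigO_of_le' (c := C) _ fun x => by simpa using h x).trans_isLittleO
    ((isLittleO_one_left_iff ℝ).mpr (tendsto_norm_atTop_atTop.comp hv))

lemma tendsto_natCast_rpow_div_atTop {p C : ℝ} (hp : 0 < p) (hC : 0 < C) :
    Tendsto (fun N : ℕ => (N : ℝ) ^ p / C) atTop atTop :=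
  ((tendsto_rpow_atTop hp).comp tendsto_natCast_atTop_atTop).atTop_div_const hC

section SumRpowNeg

variable {a : ℝ}

lemma integral_one_add_rpow_neg (ha1 : a < 1) (N : ℕ) :
    ∫ x in (1 : ℝ)..1 + N, x ^ (-a) = ((1 + N : ℝ) ^ (1 - a) - 1) / (1 - a) := by
  rw [integral_rpow (Or.inl (by linarith)), Real.one_rpow, neg_add_eq_sub]

lemma abs_sum_rpow_neg_sub_le (ha0 : 0 ≤ a) (ha1 : a < 1) (N : ℕ) :
    |∑ i ∈ range N, ((i : ℝ) + 1) ^ (-a) - (N : ℝ) ^ (1 - a) / (1 - a)| ≤ 1 / (1 - a) := by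
  have h1a : 0 < 1 - a := by linarith
  have hanti (M : ℕ) : AntitoneOn (fun x : ℝ => x ^ (-a)) (Set.Icc 1 (1 + M)) :=
    fun x hx y _ hxy => Real.rpow_le_rpow_of_nonpos (by linarith [hx.1]) hxy (by linarith)
  rw [abs_sub_le_iff]
  constructor
  · rcases N with _ | M
    · simp [Real.zero_rpow h1a.ne', h1a.le]
    have hsum := (hanti M).sum_le_integral
    rw [integral_one_add_rpow_neg ha1, sub_div] at hsum
    have hM : ((M + 1 : ℕ) : ℝ) = 1 + M := by push_cast; ring
    have h1 : 1 ≤ 1 / (1 - a) := by rw [le_div_iff₀ h1a]; linarith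
    rw [sum_range_succ', hM]
    simp only [Nat.cast_zero, zero_add, Real.one_rpow]
    simp only [Nat.cast_add, Nat.cast_one, add_comm _ (1 : ℝ)] at hsum ⊢
    linarith
  · have hsum := (hanti N).integral_le_sum
    rw [integral_one_add_rpow_neg ha1] at hsum
    have hpow : (N : ℝ) ^ (1 - a) ≤ (1 + N : ℝ) ^ (1 - a) :=
      Real.rpow_le_rpow (Nat.cast_nonneg N) (by linarith) h1a.le
    calc (N : ℝ) ^ (1 - a) / (1 - a) - ∑ i ∈ range N, ((i : ℝ) + 1) ^ (-a)
        ≤ (1 + N : ℝ) ^ (1 - a) / (1 - a) - ((1 + N : ℝ) ^ (1 - a) - 1) / (1 - a) := by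
          gcongr
          simpa only [add_comm] using hsum
      _ = 1 / (1 - a) := by ring

lemma isEquivalent_sum_rpow_neg (ha0 : 0 ≤ a) (ha1 : a < 1) :
    (fun N : ℕ => ∑ i ∈ range N, ((i : ℝ) + 1) ^ (-a)) ~[atTop]
      fun N => (N : ℝ) ^ (1 - a) / (1 - a) :=
  isEquivalent_of_abs_sub_le (abs_sum_rpow_neg_sub_le ha0 ha1)
    (tendsto_natCast_rpow_div_atTop (by linarith) (by linarith))

end SumRpowNeg

lemma StrictMono.exists_index_le_lt_succ {c : ℕ → ℕ} (hc : StrictMono c) :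
    ∃ J : ℕ → ℕ, Tendsto J atTop atTop ∧ ∀ n, c 0 ≤ n → c (J n) ≤ n ∧ n < c (J n + 1) := by
  refine ⟨fun n => Nat.findGreatest (fun j => c j ≤ n) n, ?_, fun n hn => ⟨?_, ?_⟩⟩
  · refine tendsto_atTop_atTop.mpr fun k => ⟨c k, fun n hn => ?_⟩
    exact Nat.le_findGreatest ((hc.id_le k).trans hn) hn
  · exact Nat.findGreatest_spec (P := fun j => c j ≤ n) (Nat.zero_le n) hn
  · set J := Nat.findGreatest (fun j => c j ≤ n) n
    by_cases hJ : J + 1 ≤ n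
    · exact not_le.mp (Nat.findGreatest_is_greatest (P := fun j => c j ≤ n) (Nat.lt_succ_self J) hJ)
    · exact (not_le.mp hJ).trans_le (hc.id_le _)

lemma isEquivalent_of_monotone_of_isEquivalent_comp {u b : ℕ → ℝ} {c : ℕ → ℕ}
    (hu : Monotone u) (hu0 : 0 ≤ u) (hb : Monotone b) (hc : StrictMono c)
    (hbc : ∀ j, 0 < b (c j)) (hb_succ : (fun j => b (c (j + 1))) ~[atTop] fun j => b (c j))
    (huc : (fun j => u (c j)) ~[atTop] fun j => b (c j)) :
    u ~[atTop] b := by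
  obtain ⟨J, hJ, hJc⟩ := hc.exists_index_le_lt_succ
  have hlower : Tendsto (fun j => u (c j) / b (c (j + 1))) atTop (𝓝 1) :=
    (isEquivalent_iff_tendsto_one (.of_forall fun j => (hbc _).ne')).mp (huc.trans hb_succ.symm)
  have hupper : Tendsto (fun j => u (c (j + 1)) / b (c j)) atTop (𝓝 1) :=
    (isEquivalent_iff_tendsto_one (.of_forall fun j => (hbc _).ne')).mp
      ((huc.comp_tendsto (tendsto_add_atTop_nat 1)).trans hb_succ)
  refine isEquivalent_of_tendsto_one <|
    tendsto_of_tendsto_of_tendsto_of_le_of_le' (hlower.comp hJ) (hupper.comp hJ) ?_ ?_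
  all_goals
    filter_upwards [eventually_ge_atTop (c 0)] with n hn
    obtain ⟨hle, hlt⟩ := hJc n hn
    have hbn : 0 < b n := (hbc _).trans_le (hb hle)
  · exact div_le_div₀ (hu0 n) (hu hle) hbn (hb hlt.le)
  · exact div_le_div₀ (hu0 _) (hu hlt.le) (hbc _) (hb hle)

lemma exists_strictMono_sq_le_sum {m : ℕ → ℝ} (hm : ∀ i, m i ∈ Set.Icc 0 1)
    (htop : Tendsto (fun N => ∑ i ∈ range N, m i) atTop atTop) :
    ∃ c : ℕ → ℕ, StrictMono c ∧
      ∀ j : ℕ, ((j : ℝ) + 1) ^ 2 ≤ ∑ i ∈ range (c j), m i ∧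
        ∑ i ∈ range (c j), m i < ((j : ℝ) + 1) ^ 2 + 1 := by
  have hex (j : ℕ) : ∃ N, ((j : ℝ) + 1) ^ 2 ≤ ∑ i ∈ range N, m i :=
    (htop.eventually_ge_atTop _).exists
  set c : ℕ → ℕ := fun j => Nat.find (hex j)
  have hbounds (j : ℕ) : ((j : ℝ) + 1) ^ 2 ≤ ∑ i ∈ range (c j), m i ∧
      ∑ i ∈ range (c j), m i < ((j : ℝ) + 1) ^ 2 + 1 := by
    refine ⟨Nat.find_spec (hex j), ?_⟩
    rcases h : c j with _ | k
    · simp only [range_zero, sum_empty]; positivity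
    · have hk : ∑ i ∈ range k, m i < ((j : ℝ) + 1) ^ 2 :=
        not_le.mp (Nat.find_min (hex j) (show k < c j by omega))
      rw [sum_range_succ]
      linarith [(hm k).2]
  refine ⟨c, strictMono_nat_of_lt_succ fun j => ?_, hbounds⟩
  by_contra! hle
  have hmono : ∑ i ∈ range (c (j + 1)), m i ≤ ∑ i ∈ range (c j), m i :=
    sum_le_sum_of_subset_of_nonneg (range_subset_range.mpr hle) fun i _ _ => (hm i).1
  have h1 := (hbounds (j + 1)).1
  have h2 := (hbounds j).2
  rw [Nat.cast_succ] at h1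
  nlinarith [(Nat.cast_nonneg j : (0 : ℝ) ≤ j)]

section Probability

variable {Ω : Type*} [MeasurableSpace Ω] {μ : Measure Ω}

lemma integral_natCast_eq_measureReal {X : Ω → ℕ} (hX : Measurable X)
    (h01 : ∀ ω, X ω = 0 ∨ X ω = 1) :
    ∫ ω, (X ω : ℝ) ∂μ = μ.real {ω | X ω = 1} := by
  rw [show {ω | X ω = 1} = X ⁻¹' {1} from rfl,
    ← integral_indicator_one (hX (measurableSet_singleton 1))]
  congr with ω
  rcases h01 ω with h | h <;> simp [h]

lemma memLp_of_mem_Icc [IsFiniteMeasure μ] {Y : Ω → ℝ} (hY : AEStronglyMeasurable Y μ)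
    (h01 : ∀ ω, Y ω ∈ Set.Icc 0 1) (p : ENNReal) : MemLp Y p μ :=
  MemLp.of_bound hY 1 (.of_forall fun ω => by
    rw [Real.norm_eq_abs, abs_of_nonneg (h01 ω).1]; exact (h01 ω).2)

lemma variance_le_integral_of_mem_Icc_s18 [IsProbabilityMeasure μ] {Y : Ω → ℝ}
    (hY : AEStronglyMeasurable Y μ) (h01 : ∀ ω, Y ω ∈ Set.Icc 0 1) :
    variance Y μ ≤ μ[Y] := by
  have hsq : μ[Y ^ 2] ≤ μ[Y] :=
    integral_mono (memLp_of_mem_Icc hY h01 2).integrable_sq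
      ((memLp_of_mem_Icc hY h01 1).integrable le_rfl)
      fun ω => by simpa [sq] using mul_le_of_le_one_left (h01 ω).1 (h01 ω).2
  rw [variance_eq_sub (memLp_of_mem_Icc hY h01 2)]
  nlinarith [sq_nonneg μ[Y]]

lemma variance_sum_le_sum_integral [IsProbabilityMeasure μ] {ι : Type*} {Y : ι → Ω → ℝ}
    (hY : ∀ i, AEStronglyMeasurable (Y i) μ) (h01 : ∀ i ω, Y i ω ∈ Set.Icc 0 1)
    (hind : Pairwise fun i j => Y i ⟂ᵢ[μ] Y j) (s : Finset ι) :
    variance (∑ i ∈ s, Y i) μ ≤ ∑ i ∈ s, μ[Y i] := by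
  rw [IndepFun.variance_sum (fun i _ => memLp_of_mem_Icc (hY i) (h01 i) 2)
    fun i _ j _ hij => hind hij]
  exact sum_le_sum fun i _ => variance_le_integral_of_mem_Icc_s18 (hY i) (h01 i)

lemma ae_isEquivalent_integral_of_summable [IsFiniteMeasure μ] {Z : ℕ → Ω → ℝ}
    (hZ : ∀ j, MemLp (Z j) 2 μ) (hmean : ∀ j, μ[Z j] ≠ 0)
    (hsum : Summable fun j => variance (Z j) μ / μ[Z j] ^ 2) :
    ∀ᵐ ω ∂μ, (fun j => Z j ω) ~[atTop] fun j => μ[Z j] := by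
  have hdev (ε : ℝ) (hε : 0 < ε) :
      ∀ᵐ ω ∂μ, ∀ᶠ j in atTop, |Z j ω - μ[Z j]| < ε * |μ[Z j]| := by
    have hcheb (j : ℕ) : μ {ω | ε * |μ[Z j]| ≤ |Z j ω - μ[Z j]|} ≤
        ENNReal.ofReal ((ε ^ 2)⁻¹ * (variance (Z j) μ / μ[Z j] ^ 2)) := by
      refine (meas_ge_le_variance_div_sq (hZ j) (by positivity [hmean j])).trans_eq ?_
      rw [mul_pow, sq_abs, inv_mul_eq_div, div_div, mul_comm]
    filter_upwards [ae_eventually_notMem <| ne_top_of_le_ne_top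
      (hsum.mul_left _).tsum_ofReal_ne_top (ENNReal.tsum_le_tsum hcheb)] with ω hω
    simpa only [Set.mem_ofPred_eq, not_le] using hω
  filter_upwards [ae_all_iff.mpr fun k : ℕ => hdev (1 / (k + 1)) Nat.one_div_pos_of_nat]
    with ω hω
  refine isLittleO_iff.mpr fun c hc => ?_
  obtain ⟨k, hk⟩ := exists_nat_one_div_lt hc
  filter_upwards [hω k] with j hj
  rw [Pi.sub_apply, Real.norm_eq_abs, Real.norm_eq_abs]
  exact hj.le.trans (by gcongr)

lemma ae_isEquivalent_sum_of_mem_Icc [IsProbabilityMeasure μ] {Y : ℕ → Ω → ℝ}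
    (hY : ∀ i, AEStronglyMeasurable (Y i) μ) (h01 : ∀ i ω, Y i ω ∈ Set.Icc 0 1)
    (hind : Pairwise fun i j => Y i ⟂ᵢ[μ] Y j)
    (hdiv : Tendsto (fun N => ∑ i ∈ range N, μ[Y i]) atTop atTop) :
    ∀ᵐ ω ∂μ, (fun N => ∑ i ∈ range N, Y i ω) ~[atTop] fun N => ∑ i ∈ range N, μ[Y i] := by
  set b : ℕ → ℝ := fun N => ∑ i ∈ range N, μ[Y i]
  have hint (i : ℕ) : Integrable (Y i) μ := (memLp_of_mem_Icc (hY i) (h01 i) 1).integrable le_rfl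
  have hm (i : ℕ) : μ[Y i] ∈ Set.Icc 0 1 :=
    ⟨integral_nonneg fun ω => (h01 i ω).1,
      (integral_mono (hint i) (integrable_const 1) fun ω => (h01 i ω).2).trans_eq (by simp)⟩
  obtain ⟨c, hc, hbc⟩ := exists_strictMono_sq_le_sum hm hdiv
  have hmean (N : ℕ) : μ[∑ i ∈ range N, Y i] = b N := by
    simp only [Finset.sum_apply]
    exact integral_finsetSum _ fun i _ => hint i
  have hbpos (j : ℕ) : 0 < b (c j) := lt_of_lt_of_le (by positivity) (hbc j).1
  have hsum : Summable fun j =>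
      variance (∑ i ∈ range (c j), Y i) μ / μ[∑ i ∈ range (c j), Y i] ^ 2 := by
    refine Summable.of_nonneg_of_le (fun j => div_nonneg (variance_nonneg _ _) (sq_nonneg _))
      (fun j => ?_)
      ((summable_nat_add_iff 1).mpr (Real.summable_one_div_nat_pow.mpr one_lt_two))
    rw [hmean]
    calc variance (∑ i ∈ range (c j), Y i) μ / b (c j) ^ 2 ≤ b (c j) / b (c j) ^ 2 := by
          gcongr; exact variance_sum_le_sum_integral hY h01 hind _
      _ = 1 / b (c j) := by field_simp
      _ ≤ 1 / ((j + 1 : ℕ) : ℝ) ^ 2 := by gcongr; exact_mod_cast (hbc j).1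
  have hsub := ae_isEquivalent_integral_of_summable (Z := fun j => ∑ i ∈ range (c j), Y i)
    (fun j => memLp_finsetSum' _ fun i _ => memLp_of_mem_Icc (hY i) (h01 i) 2)
    (fun j => (hmean _).trans_ne (hbpos j).ne') hsum
  -- `b (c j)` lies within 1 of `(j + 1) ^ 2`, so consecutive values are asymptotically equal
  have hbc_sq : (fun j => b (c j)) ~[atTop] fun j => ((j : ℝ) + 1) ^ 2 :=
    isEquivalent_of_abs_sub_le (C := 1)
      (fun j => abs_sub_le_iff.mpr ⟨by linarith [(hbc j).2], by linarith [(hbc j).1]⟩)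
      ((tendsto_pow_atTop two_ne_zero).comp
        (tendsto_atTop_add_const_right _ 1 tendsto_natCast_atTop_atTop))
  have hsq_succ : (fun j : ℕ => (((j + 1 : ℕ) : ℝ) + 1) ^ 2) ~[atTop] fun j => ((j : ℝ) + 1) ^ 2 :=
    (isEquivalent_of_abs_sub_le (C := 1) (fun j => by push_cast; simp)
      (tendsto_atTop_add_const_right _ 1 tendsto_natCast_atTop_atTop)).pow 2
  have hb_succ : (fun j => b (c (j + 1))) ~[atTop] fun j => b (c j) :=
    (hbc_sq.comp_tendsto (tendsto_add_atTop_nat 1)).trans (hsq_succ.trans hbc_sq.symm)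
  filter_upwards [hsub] with ω hω
  refine isEquivalent_of_monotone_of_isEquivalent_comp
    (fun p q hpq => sum_le_sum_of_subset_of_nonneg (range_subset_range.mpr hpq)
      fun i _ _ => (h01 i ω).1)
    (fun N => sum_nonneg fun i _ => (h01 i ω).1)
    (fun p q hpq => sum_le_sum_of_subset_of_nonneg (range_subset_range.mpr hpq)
      fun i _ _ => (hm i).1) hc hbpos hb_succ ?_
  simp only [hmean] at hω
  simpa only [Finset.sum_apply] using hω

end Probability

lemma exists_eq_of_le_of_forall_succ_le {s : ℕ → ℕ} (h0 : s 0 = 0)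
    (hs : ∀ k, s (k + 1) ≤ s k + 1) {n k : ℕ} (hn : n ≤ s k) : ∃ j, s j = n := by
  induction k with
  | zero => exact ⟨0, by omega⟩
  | succ k ih =>
    by_cases h : n ≤ s k
    · exact ih h
    · exact ⟨k + 1, by have := hs k; omega⟩

lemma tendsto_sInf_sum_eq_div_rpow {x : ℕ → ℕ} (hx : ∀ i, x i ≤ 1) {p C : ℝ} (hp : 0 < p)
    (hC : 0 < C)
    (h : (fun N : ℕ => ((∑ i ∈ Icc 1 N, x i : ℕ) : ℝ)) ~[atTop] fun N => (N : ℝ) ^ p / C) :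
    Tendsto (fun n : ℕ => (sInf {k | ∑ i ∈ Icc 1 k, x i = n} : ℕ) / (n : ℝ) ^ (1 / p)) atTop
      (𝓝 (C ^ (1 / p))) := by
  set s : ℕ → ℕ := fun N => ∑ i ∈ Icc 1 N, x i
  set t : ℕ → ℕ := fun n => sInf {k | s k = n}
  have hs_le (k : ℕ) : s k ≤ k :=
    (sum_le_sum fun i _ => hx i).trans_eq (by simp)
  have hs_top : Tendsto s atTop atTop :=
    tendsto_natCast_atTop_iff.mp <| h.symm.tendsto_atTop (tendsto_natCast_rpow_div_atTop hp hC)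
  have hst (n : ℕ) : s (t n) = n := by
    obtain ⟨k, hk⟩ := (hs_top.eventually_ge_atTop n).exists
    exact Nat.sInf_mem (exists_eq_of_le_of_forall_succ_le (by simp [s])
      (fun k => (sum_Icc_succ_top (by omega) x).trans_le (Nat.add_le_add_left (hx _) _)) hk)
  have ht_top : Tendsto t atTop atTop :=
    tendsto_atTop_mono (fun n => (hst n).symm.trans_le (hs_le _)) tendsto_id
  have hequiv : (fun n : ℕ => (t n : ℝ) ^ p / C) ~[atTop] fun n => (n : ℝ) :=
    ((h.comp_tendsto ht_top).congr_left
      (.of_forall fun n => by simp only [Function.comp_apply, s, hst n])).symm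
  have hinv : Tendsto (fun n : ℕ => (t n : ℝ) ^ p / n) atTop (𝓝 C) := by
    have h' := ((isEquivalent_iff_tendsto_one ((eventually_ne_atTop 0).mono fun n hn => by
      simpa using hn)).mp hequiv).const_mul C
    rw [mul_one] at h'
    refine h'.congr fun n => ?_
    simp only [Pi.div_apply]
    field_simp
  refine ((Real.continuousAt_rpow_const C (1 / p) (.inl hC.ne')).tendsto.comp hinv).congr
    fun n => ?_
  rw [Function.comp_apply, Real.div_rpow (by positivity) (by positivity),
    ← Real.rpow_mul (by positivity), mul_one_div_cancel hp.ne', Real.rpow_one]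

/-- For independent Bernoulli variables with `ℙ(X_n = 1) = n^{-a}`, `a ∈ (0,1)`, the
enumeration `a_n(ω)` of `{k : X_k(ω) = 1}` satisfies almost surely
`a_n(ω)/n^{1/(1-a)} →` a nonzero constant. -/
theorem random_sequence_growth
    {Ω : Type*} [MeasurableSpace Ω] (μ : Measure Ω) [IsProbabilityMeasure μ]
    (a : ℝ) (ha : a ∈ Set.Ioo (0 : ℝ) 1)
    (X : ℕ → Ω → ℕ) (hmeas : ∀ n, Measurable (X n))
    (h01 : ∀ n ω, X n ω = 0 ∨ X n ω = 1)
    (hind : iIndepFun X μ)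
    (hP : ∀ n : ℕ, 1 ≤ n → μ {ω | X n ω = 1} = ENNReal.ofReal ((n : ℝ) ^ (-a)))
    (seq : ℕ → Ω → ℕ)
    (hseq : ∀ n ω, seq n ω = sInf {k : ℕ | ∑ i ∈ Finset.Icc 1 k, X i ω = n}) :
    ∀ᵐ ω ∂μ, ∃ c : ℝ, c ≠ 0 ∧
      Tendsto (fun n : ℕ => (seq n ω : ℝ) / (n : ℝ) ^ (1 / (1 - a)))
        atTop (nhds c) := by
  have h1a : 0 < 1 - a := by linarith [ha.2]
  set Y : ℕ → Ω → ℝ := fun i ω => X (i + 1) ω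
  have hY01 (i : ℕ) (ω : Ω) : Y i ω ∈ Set.Icc 0 1 := by
    rcases h01 (i + 1) ω with h | h <;> simp [Y, h]
  have hYind : Pairwise fun i j => Y i ⟂ᵢ[μ] Y j := fun i j hij =>
    (hind.indepFun (by omega : i + 1 ≠ j + 1)).comp measurable_from_top measurable_from_top
  have hmean (i : ℕ) : μ[Y i] = ((i : ℝ) + 1) ^ (-a) := by
    rw [integral_natCast_eq_measureReal (hmeas _) (h01 _), measureReal_def, hP _ le_add_self,
      ENNReal.toReal_ofReal (by positivity), Nat.cast_succ]
  have hsum_mean :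
      (fun N => ∑ i ∈ range N, μ[Y i]) ~[atTop] fun N => (N : ℝ) ^ (1 - a) / (1 - a) := by
    simpa only [hmean] using isEquivalent_sum_rpow_neg ha.1.le ha.2
  filter_upwards [ae_isEquivalent_sum_of_mem_Icc
    (fun i => (measurable_from_top.comp (hmeas (i + 1))).aestronglyMeasurable) hY01 hYind
    (hsum_mean.symm.tendsto_atTop (tendsto_natCast_rpow_div_atTop h1a h1a))] with ω hω
  refine ⟨(1 - a) ^ (1 / (1 - a)), (Real.rpow_pos_of_pos h1a _).ne', ?_⟩
  simp only [hseq]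
  refine tendsto_sInf_sum_eq_div_rpow (fun i => by rcases h01 i ω with h | h <;> omega) h1a h1a ?_
  refine (hω.congr_left (.of_forall fun N => ?_)).trans hsum_mean
  show ∑ i ∈ range N, (X (i + 1) ω : ℝ) = _
  rw [Nat.cast_sum, range_eq_Ico, sum_Ico_add' (fun i => (X i ω : ℝ)) 0 N 1, zero_add,
    Ico_add_one_right_eq_Icc]
end
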